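/- arXiv:2604.06735 — 5 statements merged into one kernel-verified Lean document; each statement's English description precedes it below -/
import Mathlib

section
/- The number of ascent sequences of length n avoiding both patterns 0101 and 0102 equals the Fibonacci number F_{2n-1}, where F_1 = F_2 = 1 and F_n = F_{n-1} + F_{n-2}. -/
/-- Number of ascents of a sequence (list) of natural numbers. -/
def asc (l : List ℕ) : ℕ :=
  ((List.range (l.length - 1)).filter (fun j => l.getD j 0 < l.getD (j + 1) 0)).length

/-- `x` is an ascent sequence: nonempty, starts with 0, and each later entry is
at most one more than the number of ascents of the preceding prefix. -/
def IsAscSeq (x : List ℕ) : Prop :=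
  x ≠ [] ∧ x.getD 0 0 = 0 ∧
    ∀ i, 1 ≤ i → i < x.length → x.getD i 0 ≤ 1 + asc (x.take i)

/-- `x` contains the pattern `p`: some subsequence of `x` is order-isomorphic
(including equalities) to `p`, i.e. its reduction equals `p`. -/
def Contains (p x : List ℕ) : Prop :=
  ∃ y : List ℕ, y.Sublist x ∧ y.length = p.length ∧
    ∀ i j, i < p.length → j < p.length →
      (y.getD i 0 < y.getD j 0 ↔ p.getD i 0 < p.getD j 0)

/-- `x` avoids the pattern `p`. -/
def Avoids (p x : List ℕ) : Prop := ¬ Contains p x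

/-- tail mode: weakly decreasing continuation, all values `≤ v`. -/
inductive Tl : ℕ → List ℕ → Prop
  | nil (v : ℕ) : Tl v []
  | cons {u v : ℕ} {z : List ℕ} : u ≤ v → Tl u z → Tl v (u :: z)

/-- increasing mode at current value `k`. -/
inductive St : ℕ → List ℕ → Prop
  | nil (k : ℕ) : St k []
  | up {k : ℕ} {z : List ℕ} : St (k+1) z → St k ((k+1) :: z)
  | eq {k : ℕ} {z : List ℕ} : St k z → St k (k :: z)
  | down {u k : ℕ} {z : List ℕ} : u < k → Tl u z → St k (u :: z)

lemma asc_append (l : List ℕ) (v : ℕ) (h : l ≠ []) :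
    asc (l ++ [v]) = asc l + (if l.getD (l.length - 1) 0 < v then 1 else 0) := by
  obtain ⟨m, hm⟩ : ∃ m, l.length = m + 1 :=
    ⟨l.length - 1, (Nat.succ_pred_eq_of_pos (List.length_pos_iff.2 h)).symm⟩
  unfold asc
  have hlen : (l ++ [v]).length - 1 = m + 1 := by simp [hm]
  rw [hlen, hm, List.range_succ, List.filter_append, List.length_append]
  congr 1
  · congr 1
    apply List.filter_congr
    intro j hj
    rw [List.mem_range] at hj
    rw [List.getD_append _ _ _ _ (by omega), List.getD_append _ _ _ _ (by omega)]
  · simp only [List.filter_cons, List.filter_nil]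
    have h1 : (l ++ [v]).getD m 0 = l.getD m 0 := List.getD_append _ _ _ _ (by omega)
    have h2 : (l ++ [v]).getD (m+1) 0 = v := by
      rw [← hm, List.getD_append_right _ _ _ _ (le_refl _)]; simp
    rw [h1, h2]
    simp only [Nat.add_sub_cancel]
    split <;> simp_all [List.getD_eq_getElem?_getD] <;> split <;> omega

/-- for lists with all steps up by at most one, the last entry is at most
`asc + first entry`. -/
lemma getD_last (l : List ℕ) (hl : l ≠ []) : l.getD (l.length - 1) 0 = l.getLast hl := by
  rw [List.getLast_eq_getElem, List.getD_eq_getElem l 0 (by simp [Nat.sub_lt (List.length_pos_iff.2 hl)])]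

lemma last_le_asc (l : List ℕ) (h : List.IsChain (fun a b => b ≤ a + 1) l) (hne : l ≠ []) :
    l.getD (l.length - 1) 0 ≤ asc l + l.getD 0 0 := by
  induction l using List.reverseRecOn with
  | nil => simp at hne
  | append_singleton l v ih =>
    rcases eq_or_ne l [] with rfl | hl
    · simp [asc]
    · rw [List.isChain_append] at h
      have hlast : l.getD (l.length - 1) 0 ≤ asc l + l.getD 0 0 := ih h.1 hl
      have hstep : v ≤ l.getD (l.length - 1) 0 + 1 := by
        have := h.2.2 (l.getLast hl) (by simp [List.getLast?_eq_getLast hl]) v (by simp)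
        rwa [getD_last l hl]
      rw [asc_append _ _ hl]
      have h0 : (l ++ [v]).getD 0 0 = l.getD 0 0 := List.getD_append _ _ _ _ (by simp [List.length_pos_iff.2 hl])
      have hL : (l ++ [v]).length - 1 = l.length := by simp
      rw [h0, hL]
      have hv : (l ++ [v]).getD l.length 0 = v := by
        rw [List.getD_append_right _ _ _ _ (le_refl _)]; simp
      rw [hv]
      split <;> omega

/-- for weakly increasing lists, asc is at most last minus first. -/
lemma asc_le_last (l : List ℕ) (h : List.IsChain (· ≤ ·) l) (hne : l ≠ []) :
    asc l + l.getD 0 0 ≤ l.getD (l.length - 1) 0 := by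
  induction l using List.reverseRecOn with
  | nil => simp at hne
  | append_singleton l v ih =>
    rcases eq_or_ne l [] with rfl | hl
    · simp [asc]
    · rw [List.isChain_append] at h
      have hlast := ih h.1 hl
      have hstep : l.getD (l.length - 1) 0 ≤ v := by
        have := h.2.2 (l.getLast hl) (by simp [List.getLast?_eq_getLast hl]) v (by simp)
        rwa [getD_last l hl]
      rw [asc_append _ _ hl]
      have h0 : (l ++ [v]).getD 0 0 = l.getD 0 0 :=
        List.getD_append _ _ _ _ (List.length_pos_iff.2 hl)
      have hL : (l ++ [v]).length - 1 = l.length := by simp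
      rw [h0, hL]
      have hv : (l ++ [v]).getD l.length 0 = v := by
        rw [List.getD_append_right _ _ _ _ (le_refl _)]; simp
      rw [hv]
      split <;> omega

lemma getD_last_cons : ∀ (z : List ℕ) (k : ℕ), (k :: z).getD z.length 0 = z.getLastD k
  | [], k => rfl
  | a :: z', k => by
    rw [List.getLastD_cons]
    have : (k :: a :: z').getD (z'.length + 1) 0 = (a :: z').getD z'.length 0 := rfl
    rw [List.length_cons, this, getD_last_cons z' a]

lemma tl_cons_iff {v u : ℕ} {z : List ℕ} : Tl v (u :: z) ↔ u ≤ v ∧ Tl u z :=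
  ⟨fun h => by cases h with | cons h1 h2 => exact ⟨h1, h2⟩,
   fun ⟨h1, h2⟩ => Tl.cons h1 h2⟩

lemma st_cons_iff {k u : ℕ} {z : List ℕ} :
    St k (u :: z) ↔ (u = k + 1 ∧ St (k+1) z) ∨ (u = k ∧ St k z) ∨ (u < k ∧ Tl u z) := by
  constructor
  · intro h
    cases h with
    | up h => exact Or.inl ⟨rfl, h⟩
    | eq h => exact Or.inr (Or.inl ⟨rfl, h⟩)
    | down h1 h2 => exact Or.inr (Or.inr ⟨h1, h2⟩)
  · rintro (⟨rfl, h⟩ | ⟨rfl, h⟩ | ⟨h1, h2⟩)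
    · exact St.up h
    · exact St.eq h
    · exact St.down h1 h2

lemma Tl.chain_ge {v : ℕ} {z : List ℕ} (h : Tl v z) : List.IsChain (· ≥ ·) (v :: z) := by
  induction h with
  | nil => simp
  | cons h1 h2 ih => exact List.isChain_cons_cons.2 ⟨h1, ih⟩

lemma Tl.unit {v : ℕ} {z : List ℕ} (h : Tl v z) :
    List.IsChain (fun a b => b ≤ a + 1) (v :: z) :=
  (h.chain_ge).imp (fun h => by omega)

lemma St.unit {k : ℕ} {z : List ℕ} (h : St k z) :
    List.IsChain (fun a b => b ≤ a + 1) (k :: z) := by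
  induction h with
  | nil => simp
  | up h ih => exact List.isChain_cons_cons.2 ⟨by omega, ih⟩
  | eq h ih => exact List.isChain_cons_cons.2 ⟨by omega, ih⟩
  | down h1 h2 => exact List.isChain_cons_cons.2 ⟨by omega, h2.unit⟩

lemma tl_append_iff : ∀ (z : List ℕ) (v w : ℕ), Tl v (z ++ [w]) ↔ Tl v z ∧ w ≤ z.getLastD v
  | [], v, w => by
    simp only [List.nil_append, tl_cons_iff, List.getLastD_nil]
    exact ⟨fun ⟨h, _⟩ => ⟨Tl.nil v, h⟩, fun ⟨_, h⟩ => ⟨h, Tl.nil w⟩⟩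
  | u :: z', v, w => by
    rw [List.cons_append, tl_cons_iff, tl_append_iff z' u w, tl_cons_iff,
      List.getLastD_cons]
    tauto

lemma st_append_iff : ∀ (z : List ℕ) (k v : ℕ),
    St k (z ++ [v]) ↔ St k z ∧ v ≤ z.getLastD k + 1 ∧
      (¬ List.IsChain (· ≤ ·) (k :: z) → v ≤ z.getLastD k)
  | [], k, v => by
    simp only [List.nil_append, st_cons_iff, List.getLastD_nil, List.isChain_singleton,
      not_true, false_implies, and_true]
    constructor
    · rintro (⟨rfl, -⟩ | ⟨rfl, -⟩ | ⟨h, -⟩) <;> exact ⟨St.nil _, by omega⟩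
    · rintro ⟨-, h⟩
      rcases Nat.lt_trichotomy v k with h' | rfl | h'
      · exact Or.inr (Or.inr ⟨h', Tl.nil v⟩)
      · exact Or.inr (Or.inl ⟨rfl, St.nil v⟩)
      · exact Or.inl ⟨by omega, St.nil _⟩
  | u :: z', k, v => by
    rw [List.cons_append, st_cons_iff, st_cons_iff, List.getLastD_cons]
    have hch : List.IsChain (· ≤ ·) (k :: u :: z') ↔ k ≤ u ∧ List.IsChain (· ≤ ·) (u :: z') :=
      List.isChain_cons_cons
    constructor
    · rintro (⟨hu, h⟩ | ⟨hu, h⟩ | ⟨h1, h2⟩)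
      · subst hu
        obtain ⟨h1, h2, h3⟩ := (st_append_iff z' (k+1) v).1 h
        refine ⟨Or.inl ⟨rfl, h1⟩, h2, fun hc => h3 fun hc' => hc (hch.2 ⟨by omega, hc'⟩)⟩
      · subst hu
        obtain ⟨h1, h2, h3⟩ := (st_append_iff z' u v).1 h
        refine ⟨Or.inr (Or.inl ⟨rfl, h1⟩), h2, fun hc => h3 fun hc' => hc (hch.2 ⟨le_refl _, hc'⟩)⟩
      · obtain ⟨h1', h2'⟩ := (tl_append_iff z' u v).1 h2
        exact ⟨Or.inr (Or.inr ⟨h1, h1'⟩), by omega, fun _ => h2'⟩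
    · rintro ⟨(⟨hu, h⟩ | ⟨hu, h⟩ | ⟨h1, h2⟩), hb, hc⟩
      · subst hu
        refine Or.inl ⟨rfl, (st_append_iff z' (k+1) v).2 ⟨h, hb, fun hc' => hc ?_⟩⟩
        rw [hch]; push_neg; intro; exact hc'
      · subst hu
        refine Or.inr (Or.inl ⟨rfl, (st_append_iff z' u v).2 ⟨h, hb, fun hc' => hc ?_⟩⟩)
        rw [hch]; push_neg; intro; exact hc'
      · refine Or.inr (Or.inr ⟨h1, (tl_append_iff z' u v).2 ⟨h2, ?_⟩⟩)
        exact hc (fun hc' => by have := (hch.1 hc').1; omega)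

lemma st_split {k : ℕ} {z : List ℕ} (h : St k z) :
    ∃ u w, k :: z = u ++ w ∧ List.IsChain (· ≤ ·) u ∧ List.IsChain (· ≥ ·) w := by
  induction h with
  | nil => exact ⟨[_], [], rfl, by simp, by simp⟩
  | @up k z h ih =>
    obtain ⟨u, w, heq, hu, hw⟩ := ih
    cases u with
    | nil => exact ⟨[k], w, by simpa using heq, by simp, hw⟩
    | cons a u' =>
      have ha : a = k + 1 := by
        have := congrArg (List.head? ·) heq; simp at this; omega
      exact ⟨k :: a :: u', w, by rw [List.cons_append, ← heq],
        List.isChain_cons_cons.2 ⟨by omega, hu⟩, hw⟩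
  | @eq k z h ih =>
    obtain ⟨u, w, heq, hu, hw⟩ := ih
    cases u with
    | nil => exact ⟨[k], w, by simpa using heq, by simp, hw⟩
    | cons a u' =>
      have ha : a = k := by
        have := congrArg (List.head? ·) heq; simp at this; omega
      exact ⟨k :: a :: u', w, by rw [List.cons_append, ← heq],
        List.isChain_cons_cons.2 ⟨by omega, hu⟩, hw⟩
  | @down u k z h1 h2 =>
    exact ⟨[], k :: u :: z, rfl, by simp, List.isChain_cons_cons.2 ⟨by omega, h2.chain_ge⟩⟩

lemma Tl.le {v : ℕ} {z : List ℕ} (h : Tl v z) : ∀ a ∈ z, a ≤ v := by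
  induction h with
  | nil => simp
  | cons h1 h2 ih =>
    intro a ha
    rcases List.mem_cons.1 ha with rfl | ha
    · exact h1
    · exact le_trans (ih a ha) h1

lemma getLastD_mem (z : List ℕ) (d : ℕ) (h : z ≠ []) : z.getLastD d ∈ z := by
  rw [List.getLastD_eq_getLast?, List.getLast?_eq_getLast h]
  exact List.getLast_mem h

lemma st_pattern {k : ℕ} {z : List ℕ} (h : St k z) (hc : ¬ List.IsChain (· ≤ ·) (k :: z)) :
    (k ≤ z.getLastD k ∧
      [z.getLastD k, z.getLastD k + 1, z.getLastD k].Sublist (k :: z)) ∨ z.getLastD k < k := by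
  induction h with
  | nil => simp at hc
  | @up k z h ih =>
    have hc' : ¬ List.IsChain (· ≤ ·) ((k+1) :: z) := fun hx => hc (List.isChain_cons_cons.2 ⟨by omega, hx⟩)
    rw [List.getLastD_cons]
    rcases ih hc' with ⟨hkb, hsub⟩ | hlt
    · exact Or.inl ⟨by omega, hsub.cons _⟩
    · rcases Nat.lt_or_ge (z.getLastD (k+1)) k with h' | h'
      · exact Or.inr h'
      · -- z.getLastD (k+1) = k
        have hz : z ≠ [] := by rintro rfl; simp at hlt
        have heq : z.getLastD (k+1) = k := by omega
        refine Or.inl ⟨by omega, ?_⟩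
        rw [heq]
        refine List.Sublist.cons₂ _ (List.Sublist.cons₂ _ ?_)
        exact List.singleton_sublist.2 (by have := getLastD_mem z (k+1) hz; rwa [heq] at this)
  | @eq k z h ih =>
    have hc' : ¬ List.IsChain (· ≤ ·) (k :: z) := fun hx => hc (List.isChain_cons_cons.2 ⟨le_refl _, hx⟩)
    rw [List.getLastD_cons]
    have hgl : z.getLastD k = (k :: z).getLastD k := by
      rw [List.getLastD_cons]
    rcases ih hc' with ⟨hkb, hsub⟩ | hlt
    · exact Or.inl ⟨hkb, hsub.cons _⟩
    · exact Or.inr hlt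
  | @down u k z h1 h2 =>
    rw [List.getLastD_cons]
    right
    rcases eq_or_ne z [] with rfl | hz
    · simpa using by omega
    · have := h2.le _ (getLastD_mem z u hz)
      omega

lemma no_pat (u w y : List ℕ) (hu : List.IsChain (· ≤ ·) u) (hw : List.IsChain (· ≥ ·) w)
    (hs : y.Sublist (u ++ w)) (hlen : y.length = 4)
    (h1 : y.getD 0 0 < y.getD 1 0) (h2 : y.getD 2 0 = y.getD 0 0)
    (h3 : y.getD 1 0 ≤ y.getD 3 0) : False := by
  obtain ⟨y1, y2, rfl, s1, s2⟩ := List.sublist_append_iff.mp hs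
  have p1 := (List.isChain_iff_pairwise.mp hu).sublist s1
  have p2 := (List.isChain_iff_pairwise.mp hw).sublist s2
  rw [List.pairwise_iff_getElem] at p1 p2
  have hl : y1.length + y2.length = 4 := by simpa using hlen
  by_cases hc : y1.length ≤ 2
  · have e2 : (y1 ++ y2).getD 2 0 = y2.getD (2 - y1.length) 0 :=
      List.getD_append_right _ _ _ _ (by omega)
    have e3 : (y1 ++ y2).getD 3 0 = y2.getD (3 - y1.length) 0 :=
      List.getD_append_right _ _ _ _ (by omega)
    have g2 : y2.getD (2 - y1.length) 0 = y2[2 - y1.length]'(by omega) :=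
      List.getD_eq_getElem _ _ (by omega)
    have g3 : y2.getD (3 - y1.length) 0 = y2[3 - y1.length]'(by omega) :=
      List.getD_eq_getElem _ _ (by omega)
    have h23 := p2 (2 - y1.length) (3 - y1.length) (by omega) (by omega) (by omega)
    simp only [GE.ge] at h23
    omega
  · have e1 : (y1 ++ y2).getD 1 0 = y1.getD 1 0 := List.getD_append _ _ _ _ (by omega)
    have e2 : (y1 ++ y2).getD 2 0 = y1.getD 2 0 := List.getD_append _ _ _ _ (by omega)
    have g1 : y1.getD 1 0 = y1[1]'(by omega) := List.getD_eq_getElem _ _ (by omega)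
    have g2 : y1.getD 2 0 = y1[2]'(by omega) := List.getD_eq_getElem _ _ (by omega)
    have h12 := p1 1 2 (by omega) (by omega) (by omega)
    omega

lemma avoids_of_st {k : ℕ} {z : List ℕ} (h : St k z) :
    Avoids [0, 1, 0, 1] (k :: z) ∧ Avoids [0, 1, 0, 2] (k :: z) := by
  obtain ⟨u, w, heq, hu, hw⟩ := st_split h
  constructor
  · rintro ⟨y, hs, hlen, hiff⟩
    refine no_pat u w y hu hw (heq ▸ hs) (by simpa using hlen) ?_ ?_ ?_
    · exact (hiff 0 1 (by norm_num) (by norm_num)).2 (by simp)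
    · have hne1 := (hiff 0 2 (by norm_num) (by norm_num)).1
      have hne2 := (hiff 2 0 (by norm_num) (by norm_num)).1
      simp only [List.getD_eq_getElem?_getD] at hne1 hne2 ⊢
      simp at hne1 hne2; omega
    · have hne1 := (hiff 1 3 (by norm_num) (by norm_num)).1
      have hne2 := (hiff 3 1 (by norm_num) (by norm_num)).1
      simp only [List.getD_eq_getElem?_getD] at hne1 hne2 ⊢
      simp at hne1 hne2; omega
  · rintro ⟨y, hs, hlen, hiff⟩
    refine no_pat u w y hu hw (heq ▸ hs) (by simpa using hlen) ?_ ?_ ?_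
    · exact (hiff 0 1 (by norm_num) (by norm_num)).2 (by simp)
    · have hne1 := (hiff 0 2 (by norm_num) (by norm_num)).1
      have hne2 := (hiff 2 0 (by norm_num) (by norm_num)).1
      simp only [List.getD_eq_getElem?_getD] at hne1 hne2 ⊢
      simp at hne1 hne2; omega
    · have := (hiff 1 3 (by norm_num) (by norm_num)).2 (by simp)
      simp only [List.getD_eq_getElem?_getD] at this ⊢
      omega

lemma contains_of_quad {x : List ℕ} {b v : ℕ} (hs : List.Sublist [b, b+1, b, v] x)
    (hv : b < v) : Contains [0, 1, 0, 1] x ∨ Contains [0, 1, 0, 2] x := by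
  rcases eq_or_lt_of_le (Nat.succ_le_of_lt hv) with hv' | hv'
  · left
    refine ⟨[b, b+1, b, v], hs, by simp, ?_⟩
    intro i j hi hj
    simp only [List.length_cons, List.length_nil] at hi hj
    interval_cases i <;> interval_cases j <;> simp [List.getD] <;> omega
  · right
    refine ⟨[b, b+1, b, v], hs, by simp, ?_⟩
    intro i j hi hj
    simp only [List.length_cons, List.length_nil] at hi hj
    interval_cases i <;> interval_cases j <;> simp [List.getD] <;> omega

lemma avoids_of_append {p y : List ℕ} {v : ℕ} (h : Avoids p (y ++ [v])) : Avoids p y := by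
  rintro ⟨t, ht, h1, h2⟩
  exact h ⟨t, ht.trans (List.sublist_append_left _ _), h1, h2⟩

lemma isAsc_append (y : List ℕ) (v : ℕ) (hy : y ≠ []) :
    IsAscSeq (y ++ [v]) ↔ IsAscSeq y ∧ v ≤ 1 + asc y := by
  have hpos : 0 < y.length := List.length_pos_iff.2 hy
  constructor
  · rintro ⟨-, h0, h⟩
    refine ⟨⟨hy, by rwa [List.getD_append _ _ _ _ hpos] at h0, ?_⟩, ?_⟩
    · intro i h1 h2
      have := h i h1 (by simp; omega)
      rwa [List.getD_append _ _ _ _ h2, List.take_append_of_le_length (by omega)] at this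
    · have := h y.length (by omega) (by simp)
      rwa [List.getD_append_right _ _ _ _ (le_refl _), Nat.sub_self, List.getD_cons_zero,
        List.take_left] at this
  · rintro ⟨⟨-, h0, h⟩, hv⟩
    refine ⟨by simp, by rwa [List.getD_append _ _ _ _ hpos], ?_⟩
    intro i h1 h2
    rw [List.length_append, List.length_cons, List.length_nil] at h2
    rcases Nat.lt_or_ge i y.length with hi | hi
    · rw [List.getD_append _ _ _ _ hi, List.take_append_of_le_length (by omega)]
      exact h i h1 hi
    · have hieq : i = y.length := by omega
      subst hieq
      rwa [List.getD_append_right _ _ _ _ (le_refl _), Nat.sub_self, List.getD_cons_zero,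
        List.take_left]

theorem char (x : List ℕ) :
    (IsAscSeq x ∧ Avoids [0, 1, 0, 1] x ∧ Avoids [0, 1, 0, 2] x) ↔
      ∃ z, x = 0 :: z ∧ St 0 z := by
  induction x using List.reverseRecOn with
  | nil =>
    constructor
    · rintro ⟨⟨h, -, -⟩, -⟩; exact absurd rfl h
    · rintro ⟨z, h, -⟩; exact absurd h (by simp)
  | append_singleton y v ih =>
    rcases eq_or_ne y [] with rfl | hy
    · simp only [List.nil_append]
      constructor
      · rintro ⟨⟨-, h0, -⟩, -⟩
        refine ⟨[], ?_, St.nil 0⟩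
        simp only [List.getD_cons_zero] at h0
        rw [h0]
      · rintro ⟨z, hz, -⟩
        have : v = 0 ∧ z = [] := by
          constructor <;> [exact (List.cons.injEq .. ▸ hz).1; exact ((List.cons.injEq .. ▸ hz).2).symm]
        obtain ⟨rfl, rfl⟩ := this
        refine ⟨⟨by simp, rfl, ?_⟩, ?_, ?_⟩
        · intro i h1 h2; simp at h2; omega
        · rintro ⟨t, ht, hlen, -⟩
          have := ht.length_le; simp [hlen] at this
        · rintro ⟨t, ht, hlen, -⟩
          have := ht.length_le; simp [hlen] at this
    · constructor
      · rintro ⟨ha, a1, a2⟩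
        obtain ⟨hy', hv⟩ := (isAsc_append y v hy).mp ha
        obtain ⟨z, rfl, hst⟩ := ih.mp ⟨hy', avoids_of_append a1, avoids_of_append a2⟩
        refine ⟨z ++ [v], by simp, ?_⟩
        rw [st_append_iff]
        by_cases hc : List.IsChain (· ≤ ·) (0 :: z)
        · refine ⟨hst, ?_, fun h => absurd hc h⟩
          have h1 := asc_le_last (0 :: z) hc (by simp)
          rw [List.getD_cons_zero, Nat.add_zero, List.length_cons, Nat.add_sub_cancel,
            getD_last_cons] at h1
          omega
        · rcases st_pattern hst hc with ⟨-, hsub⟩ | hlt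
          · rcases Nat.lt_or_ge (z.getLastD 0) v with hgt | hle
            · exfalso
              have hq : List.Sublist [z.getLastD 0, z.getLastD 0 + 1, z.getLastD 0, v]
                  ((0 :: z) ++ [v]) := by
                have := hsub.append (List.Sublist.refl [v])
                simpa using this
              rcases contains_of_quad hq hgt with hcon | hcon
              · exact a1 hcon
              · exact a2 hcon
            · exact ⟨hst, by omega, fun _ => hle⟩
          · omega
      · rintro ⟨z1, heq, hst⟩
        obtain ⟨z, rfl, rfl⟩ : ∃ z, y = 0 :: z ∧ z1 = z ++ [v] := by
          cases y with
          | nil => exact absurd rfl hy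
          | cons a y' =>
            rw [List.cons_append] at heq
            injection heq with h1 h2
            exact ⟨y', by rw [h1], h2.symm⟩
        have hst0 := hst
        rw [st_append_iff] at hst
        obtain ⟨hz, hb, hc⟩ := hst
        have hasc : IsAscSeq (0 :: z) ∧ _ ∧ _ := ih.mpr ⟨z, rfl, hz⟩
        refine ⟨(isAsc_append _ v hy).mpr ⟨hasc.1, ?_⟩, (avoids_of_st hst0).1,
          (avoids_of_st hst0).2⟩
        have hl := last_le_asc (0 :: z) hz.unit (by simp)
        rw [List.getD_cons_zero, Nat.add_zero, List.length_cons, Nat.add_sub_cancel,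
          getD_last_cons] at hl
        by_cases hch : List.IsChain (· ≤ ·) (0 :: z)
        · omega
        · have := hc hch; omega

def TF : ℕ → ℕ → Finset (List ℕ)
  | _, 0 => {[]}
  | v, t+1 => (Finset.range (v+1)).biUnion fun u => (TF u t).image (u :: ·)

def IF : ℕ → ℕ → Finset (List ℕ)
  | _, 0 => {[]}
  | k, t+1 => ((IF (k+1) t).image ((k+1) :: ·)) ∪ ((IF k t).image (k :: ·)) ∪
      ((Finset.range k).biUnion fun u => (TF u t).image (u :: ·))

def dd : ℕ → ℕ → ℕ
  | _, 0 => 1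
  | k, t+1 => dd (k+1) t + dd k t + (k+t).choose (t+1)

lemma mem_TF : ∀ (t v : ℕ) (z : List ℕ), z ∈ TF v t ↔ z.length = t ∧ Tl v z
  | 0, v, z => by
    simp only [TF, Finset.mem_singleton]
    constructor
    · rintro rfl; exact ⟨rfl, Tl.nil v⟩
    · rintro ⟨h, -⟩; exact List.length_eq_zero_iff.1 h
  | t+1, v, z => by
    simp only [TF, Finset.mem_biUnion, Finset.mem_range, Finset.mem_image]
    constructor
    · rintro ⟨u, hu, z', hz', rfl⟩
      obtain ⟨hl, ht⟩ := (mem_TF t u z').1 hz'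
      exact ⟨by simp [hl], Tl.cons (by omega) ht⟩
    · rintro ⟨hl, ht⟩
      cases ht with
      | nil => simp at hl
      | @cons u _ z' h1 h2 =>
        exact ⟨u, by omega, z', (mem_TF t u z').2 ⟨by simpa using hl, h2⟩, rfl⟩

lemma mem_IF : ∀ (t k : ℕ) (z : List ℕ), z ∈ IF k t ↔ z.length = t ∧ St k z
  | 0, k, z => by
    simp only [IF, Finset.mem_singleton]
    constructor
    · rintro rfl; exact ⟨rfl, St.nil k⟩
    · rintro ⟨h, -⟩; exact List.length_eq_zero_iff.1 h
  | t+1, k, z => by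
    simp only [IF, Finset.mem_union, Finset.mem_biUnion, Finset.mem_range, Finset.mem_image]
    constructor
    · rintro ((⟨z', hz', rfl⟩ | ⟨z', hz', rfl⟩) | ⟨u, hu, z', hz', rfl⟩)
      · obtain ⟨hl, ht⟩ := (mem_IF t (k+1) z').1 hz'
        exact ⟨by simp [hl], St.up ht⟩
      · obtain ⟨hl, ht⟩ := (mem_IF t k z').1 hz'
        exact ⟨by simp [hl], St.eq ht⟩
      · obtain ⟨hl, ht⟩ := (mem_TF t u z').1 hz'
        exact ⟨by simp [hl], St.down hu ht⟩
    · rintro ⟨hl, ht⟩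
      cases ht with
      | nil => simp at hl
      | @up _ z' h =>
        exact Or.inl (Or.inl ⟨z', (mem_IF t (k+1) z').2 ⟨by simpa using hl, h⟩, rfl⟩)
      | @eq _ z' h =>
        exact Or.inl (Or.inr ⟨z', (mem_IF t k z').2 ⟨by simpa using hl, h⟩, rfl⟩)
      | @down u _ z' h1 h2 =>
        exact Or.inr ⟨u, h1, z', (mem_TF t u z').2 ⟨by simpa using hl, h2⟩, rfl⟩

lemma hockey (t : ℕ) : ∀ n, ∑ u ∈ Finset.range n, (u + t).choose t = (n + t).choose (t + 1)
  | 0 => by simp [Nat.choose_eq_zero_of_lt]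
  | n+1 => by
    rw [Finset.sum_range_succ, hockey t n]
    have : n + 1 + t = (n + t) + 1 := by omega
    rw [this]
    have hp := Nat.choose_succ_succ (n+t) t
    simp only [Nat.succ_eq_add_one] at hp
    omega

lemma cons_inj (a : ℕ) : Function.Injective (a :: · : List ℕ → List ℕ) := by
  intro x y h; simpa using h

lemma card_TF : ∀ (t v : ℕ), (TF v t).card = (v + t).choose t
  | 0, v => by simp [TF]
  | t+1, v => by
    rw [TF, Finset.card_biUnion]
    · have : ∀ u ∈ Finset.range (v+1), ((TF u t).image (u :: ·)).card = (u + t).choose t := by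
        intro u _
        rw [Finset.card_image_of_injective _ (cons_inj u), card_TF t u]
      rw [Finset.sum_congr rfl this, hockey]
      congr 1
      omega
    · intro a _ b _ hab
      simp only [Finset.disjoint_left, Finset.mem_image]
      rintro z ⟨z1, -, rfl⟩ ⟨z2, -, h⟩
      injection h with h1 h2
      exact hab h1.symm

lemma card_IF : ∀ (t k : ℕ), (IF k t).card = dd k t
  | 0, k => by simp [IF, dd]
  | t+1, k => by
    rw [IF, dd]
    have hC : ((Finset.range k).biUnion fun u => (TF u t).image (u :: ·)).card
        = (k + t).choose (t+1) := by
      rw [Finset.card_biUnion]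
      · have : ∀ u ∈ Finset.range k, ((TF u t).image (u :: ·)).card = (u + t).choose t := by
          intro u _
          rw [Finset.card_image_of_injective _ (cons_inj u), card_TF t u]
        rw [Finset.sum_congr rfl this, hockey]
      · intro a _ b _ hab
        simp only [Finset.disjoint_left, Finset.mem_image]
        rintro z ⟨z1, -, rfl⟩ ⟨z2, -, h⟩
        injection h with h1 h2
        exact hab h1.symm
    have d1 : Disjoint ((IF (k+1) t).image ((k+1) :: ·)) ((IF k t).image (k :: ·)) := by
      simp only [Finset.disjoint_left, Finset.mem_image]
      rintro z ⟨z1, -, rfl⟩ ⟨z2, -, h⟩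
      injection h with h1 h2
      omega
    have d2 : Disjoint (((IF (k+1) t).image ((k+1) :: ·)) ∪ ((IF k t).image (k :: ·)))
        ((Finset.range k).biUnion fun u => (TF u t).image (u :: ·)) := by
      simp only [Finset.disjoint_left, Finset.mem_union, Finset.mem_image, Finset.mem_biUnion,
        Finset.mem_range]
      rintro z (⟨z1, -, rfl⟩ | ⟨z1, -, rfl⟩) ⟨u, hu, z2, -, h⟩ <;> injection h with h1 h2 <;> omega
    rw [Finset.card_union_of_disjoint d2, Finset.card_union_of_disjoint d1,
      Finset.card_image_of_injective _ (cons_inj _), Finset.card_image_of_injective _ (cons_inj _),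
      card_IF t (k+1), card_IF t k, hC]

lemma pascal_dd : ∀ (t k : ℕ), dd (k+1) (t+1) = dd k (t+1) + dd (k+1) t
  | 0, k => by
    simp [dd, Nat.choose_one_right]; omega
  | t+1, k => by
    have h1 := pascal_dd t k
    have h2 := pascal_dd t (k+1)
    have c1 := Nat.choose_succ_succ (k+t+1) (t+1)
    have c2 := Nat.choose_succ_succ (k+t) t
    simp only [Nat.succ_eq_add_one] at c1 c2
    simp only [dd] at h1 h2 ⊢
    ring_nf at h1 h2 c1 c2 ⊢
    omega

lemma dd_fib : ∀ t : ℕ, dd 0 t = Nat.fib (2*t+1) ∧ dd 1 t = Nat.fib (2*t+2)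
  | 0 => by constructor <;> simp [dd]
  | t+1 => by
    obtain ⟨h0, h1⟩ := dd_fib t
    have hz : (0+t).choose (t+1) = 0 := Nat.choose_eq_zero_of_lt (by omega)
    have f1 : Nat.fib (2*t+3) = Nat.fib (2*t+1) + Nat.fib (2*t+2) := by
      have := Nat.fib_add_two (n := 2*t+1)
      rw [show 2*t+1+2 = 2*t+3 by omega, show 2*t+1+1 = 2*t+2 by omega] at this
      exact this
    have f2 : Nat.fib (2*t+4) = Nat.fib (2*t+2) + Nat.fib (2*t+3) := by
      have := Nat.fib_add_two (n := 2*t+2)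
      rw [show 2*t+2+2 = 2*t+4 by omega, show 2*t+2+1 = 2*t+3 by omega] at this
      exact this
    have e0 : dd 0 (t+1) = Nat.fib (2*(t+1)+1) := by
      simp only [dd]
      rw [h0, h1, hz, show 2*(t+1)+1 = 2*t+3 by omega, f1]
      omega
    refine ⟨e0, ?_⟩
    rw [pascal_dd t 0, e0, h1, show 2*(t+1)+2 = 2*t+4 by omega,
      show 2*(t+1)+1 = 2*t+3 by omega, f2]
    omega

theorem stmt_0 (n : ℕ) (hn : 1 ≤ n) :
    Nat.card {x : List ℕ // x.length = n ∧ IsAscSeq x ∧ Avoids [0, 1, 0, 1] x ∧ Avoids [0, 1, 0, 2] x} = Nat.fib (2 * n - 1) := by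
  obtain ⟨m, rfl⟩ : ∃ m, n = m + 1 := ⟨n - 1, by omega⟩
  have key : ∀ x : List ℕ,
      (x.length = m + 1 ∧ IsAscSeq x ∧ Avoids [0, 1, 0, 1] x ∧ Avoids [0, 1, 0, 2] x)
        ↔ x ∈ (IF 0 m).image (0 :: ·) := by
    intro x
    rw [Finset.mem_image]
    constructor
    · rintro ⟨hlen, h1, h2, h3⟩
      obtain ⟨z, rfl, hst⟩ := (char x).1 ⟨h1, h2, h3⟩
      exact ⟨z, (mem_IF m 0 z).2 ⟨by simpa using hlen, hst⟩, rfl⟩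
    · rintro ⟨z, hz, rfl⟩
      obtain ⟨hl, hst⟩ := (mem_IF m 0 z).1 hz
      have := (char (0 :: z)).2 ⟨z, rfl, hst⟩
      exact ⟨by simp [hl], this.1, this.2.1, this.2.2⟩
  rw [Nat.card_congr (Equiv.subtypeEquivRight key)]
  rw [Nat.card_eq_finsetCard]
  rw [Finset.card_image_of_injective _ (cons_inj 0), card_IF m 0, (dd_fib m).1,
    show 2*(m+1)-1 = 2*m+1 by omega]
end

section
/- For n >= 1, the number of ascent sequences of length n avoiding both patterns 0102 and 0112 equals (n-1)*2^{n-2} + 1. -/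
/-- step relation for the "tail" part -/
def stp (a b : ℕ) : Prop := b ≤ max a 1

/-- valid continuations from climb-state with top `v` -/
def QA : ℕ → List ℕ → Prop
  | _, [] => True
  | 0, w :: l => (w = 0 ∧ QA 0 l) ∨ (w = 1 ∧ QA 1 l)
  | v+1, w :: l => (w = v+2 ∧ QA (v+2) l) ∨ (w ≤ v+1 ∧ List.Chain stp w l)

def FB : ℕ → ℕ → Finset (List ℕ)
  | _, 0 => {[]}
  | v, m+1 => (Finset.range (max v 1 + 1)).biUnion (fun w => (FB w m).image (w :: ·))

def FA : ℕ → ℕ → Finset (List ℕ)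
  | _, 0 => {[]}
  | 0, m+1 => ((FA 0 m).image (0 :: ·)) ∪ ((FA 1 m).image (1 :: ·))
  | v+1, m+1 => ((FA (v+2) m).image ((v+2) :: ·)) ∪
      (Finset.range (v+2)).biUnion (fun w => (FB w m).image (w :: ·))

lemma mem_FB : ∀ (m : ℕ) (v : ℕ) (l : List ℕ), l ∈ FB v m ↔ l.length = m ∧ List.Chain stp v l := by
  intro m
  induction m with
  | zero => intro v l; simp [FB]; rintro rfl; simp [List.Chain]
  | succ m ih =>
    intro v l
    simp only [FB, Finset.mem_biUnion, Finset.mem_range, Finset.mem_image]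
    constructor
    · rintro ⟨w, hw, l', hl', rfl⟩
      rw [ih] at hl'
      refine ⟨by simp [hl'.1], ?_⟩
      rw [List.Chain, List.chain_cons]
      exact ⟨by simpa [stp] using Nat.lt_succ_iff.mp hw, hl'.2⟩
    · rintro ⟨hlen, hch⟩
      cases l with
      | nil => simp at hlen
      | cons w l' =>
        rw [List.Chain, List.chain_cons] at hch
        exact ⟨w, by simpa [Nat.lt_succ_iff, stp] using hch.1, l', (ih w l').mpr ⟨by simpa using hlen, hch.2⟩, rfl⟩

lemma mem_FA : ∀ (m : ℕ) (v : ℕ) (l : List ℕ), l ∈ FA v m ↔ l.length = m ∧ QA v l := by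
  intro m
  induction m with
  | zero => intro v l; cases v <;> (simp [FA]; rintro rfl; simp [QA])
  | succ m ih =>
    intro v l
    cases v with
    | zero =>
      simp only [FA, Finset.mem_union, Finset.mem_image]
      constructor
      · rintro (⟨l', hl', rfl⟩ | ⟨l', hl', rfl⟩) <;> rw [ih] at hl'
        · exact ⟨by simp [hl'.1], Or.inl ⟨rfl, hl'.2⟩⟩
        · exact ⟨by simp [hl'.1], Or.inr ⟨rfl, hl'.2⟩⟩
      · rintro ⟨hlen, hq⟩
        cases l with
        | nil => simp at hlen
        | cons w l' =>
          rcases hq with ⟨rfl, hq⟩ | ⟨rfl, hq⟩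
          · exact Or.inl ⟨l', (ih 0 l').mpr ⟨by simpa using hlen, hq⟩, rfl⟩
          · exact Or.inr ⟨l', (ih 1 l').mpr ⟨by simpa using hlen, hq⟩, rfl⟩
    | succ v =>
      simp only [FA, Finset.mem_union, Finset.mem_image, Finset.mem_biUnion, Finset.mem_range]
      constructor
      · rintro (⟨l', hl', rfl⟩ | ⟨w, hw, l', hl', rfl⟩)
        · rw [ih] at hl'
          exact ⟨by simp [hl'.1], Or.inl ⟨rfl, hl'.2⟩⟩
        · rw [mem_FB] at hl'
          exact ⟨by simp [hl'.1], Or.inr ⟨Nat.lt_succ_iff.mp hw, hl'.2⟩⟩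
      · rintro ⟨hlen, hq⟩
        cases l with
        | nil => simp at hlen
        | cons w l' =>
          rcases hq with ⟨rfl, hq⟩ | ⟨hw, hq⟩
          · exact Or.inl ⟨l', (ih _ l').mpr ⟨by simpa using hlen, hq⟩, rfl⟩
          · exact Or.inr ⟨w, Nat.lt_succ_of_le hw, l', (mem_FB m w l').mpr ⟨by simpa using hlen, hq⟩, rfl⟩

lemma card_FB_succ (v m : ℕ) :
    (FB v (m+1)).card = ∑ w ∈ Finset.range (max v 1 + 1), (FB w m).card := by
  rw [show FB v (m+1) = (Finset.range (max v 1 + 1)).biUnion (fun w => (FB w m).image (w :: ·)) from rfl]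
  rw [Finset.card_biUnion]
  · refine Finset.sum_congr rfl fun w _ => ?_
    exact Finset.card_image_of_injective _ (fun a b h => by simpa using h)
  · intro w₁ _ w₂ _ hne
    simp only [Finset.disjoint_left, Finset.mem_image]
    rintro a ⟨l₁, _, rfl⟩ ⟨l₂, _, h⟩
    exact hne (by simpa using (List.cons.injEq .. ▸ h).1.symm)

lemma card_FA0_succ (m : ℕ) : (FA 0 (m+1)).card = (FA 0 m).card + (FA 1 m).card := by
  rw [show FA 0 (m+1) = ((FA 0 m).image (0 :: ·)) ∪ ((FA 1 m).image (1 :: ·)) from rfl]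
  rw [Finset.card_union_of_disjoint, Finset.card_image_of_injective _ (fun a b h => by simpa using h),
    Finset.card_image_of_injective _ (fun a b h => by simpa using h)]
  simp only [Finset.disjoint_left, Finset.mem_image]
  rintro a ⟨l₁, _, rfl⟩ ⟨l₂, _, h⟩
  simp at h

lemma card_FA_succ (v m : ℕ) :
    (FA (v+1) (m+1)).card = (FA (v+2) m).card + ∑ w ∈ Finset.range (v+2), (FB w m).card := by
  rw [show FA (v+1) (m+1) = ((FA (v+2) m).image ((v+2) :: ·)) ∪
      (Finset.range (v+2)).biUnion (fun w => (FB w m).image (w :: ·)) from rfl]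
  rw [Finset.card_union_of_disjoint, Finset.card_image_of_injective _ (fun a b h => by simpa using h),
    Finset.card_biUnion]
  · refine congrArg _ (Finset.sum_congr rfl fun w _ => ?_)
    exact Finset.card_image_of_injective _ (fun a b h => by simpa using h)
  · intro w₁ _ w₂ _ hne
    simp only [Finset.disjoint_left, Finset.mem_image]
    rintro a ⟨l₁, _, rfl⟩ ⟨l₂, _, h⟩
    exact hne (by simpa using (List.cons.injEq .. ▸ h).1.symm)
  · simp only [Finset.disjoint_left, Finset.mem_image, Finset.mem_biUnion, Finset.mem_range]
    rintro a ⟨l₁, _, rfl⟩ ⟨w, hw, l₂, _, h⟩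
    have : w = v + 2 := by simpa using (List.cons.injEq .. ▸ h).1
    omega

lemma card_FB0 (m : ℕ) : (FB 0 m).card = 2 ^ m ∧ (FB 1 m).card = 2 ^ m := by
  induction m with
  | zero => simp [FB]
  | succ m ih =>
    have h0 : (FB 0 (m+1)).card = (FB 0 m).card + (FB 1 m).card := by
      rw [card_FB_succ]; simp [Finset.sum_range_succ]
    have h1 : (FB 1 (m+1)).card = (FB 0 m).card + (FB 1 m).card := by
      rw [card_FB_succ]; simp [Finset.sum_range_succ]
    rw [h0, h1, ih.1, ih.2]
    omega

lemma key_AB : ∀ (m : ℕ) (v : ℕ), 1 ≤ v →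
    (FA (v+1) m).card + (FB v m).card = 2 * (FA v m).card := by
  intro m
  induction m with
  | zero => intro v _; cases v <;> simp [FA, FB]
  | succ m ih =>
    rintro (_ | v) hv
    · omega
    -- claim at (v+1, m+1)
    have hmax : max (v+1) 1 = v + 1 := by omega
    rw [card_FA_succ (v+1) m, card_FB_succ (v+1) m, card_FA_succ v m, hmax]
    have hsum : ∑ w ∈ Finset.range (v+3), (FB w m).card
        = ∑ w ∈ Finset.range (v+2), (FB w m).card + (FB (v+2) m).card :=
      Finset.sum_range_succ _ _
    have ih' := ih (v+2) (by omega)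
    simp only [show (v+1)+2 = v+3 from rfl, show (v+2)+1 = v+3 from rfl,
      show (v+1)+1 = v+2 from rfl] at *
    omega

lemma card_FA2 (m : ℕ) : (FA 2 m).card = (m+1) * 2 ^ m := by
  induction m with
  | zero => simp [FA]
  | succ m ih =>
    have h := card_FA_succ 1 m
    have hkey := key_AB m 2 (by omega)
    have hb0 := (card_FB0 m).1
    have hb1 := (card_FB0 m).2
    have hsum : ∑ w ∈ Finset.range 3, (FB w m).card
        = (FB 0 m).card + (FB 1 m).card + (FB 2 m).card := by
      simp [Finset.sum_range_succ]
    simp only [show (1:ℕ)+1 = 2 from rfl, show (1:ℕ)+2 = 3 from rfl, show (2:ℕ)+1 = 3 from rfl] at *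
    rw [h, hsum, hb0, hb1]
    have : (FA 3 m).card + (FB 2 m).card = 2 * ((m+1) * 2^m) := by rw [← ih]; exact hkey
    have hpow : (2:ℕ)^(m+1) = 2 * 2^m := by ring
    have h2 : (m+1+1) * (2*2^m) = 2*((m+1)*2^m) + 2*2^m := by ring
    rw [hpow, h2]; omega

lemma card_FA1 (m : ℕ) : 2 * (FA 1 m).card = (m + 2) * 2 ^ m := by
  cases m with
  | zero => simp [FA]
  | succ m =>
    have h := card_FA_succ 0 m
    have hb0 := (card_FB0 m).1
    have hb1 := (card_FB0 m).2
    have hsum : ∑ w ∈ Finset.range 2, (FB w m).card = (FB 0 m).card + (FB 1 m).card := by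
      simp [Finset.sum_range_succ]
    simp only [show (0:ℕ)+1 = 1 from rfl, show (0:ℕ)+2 = 2 from rfl] at *
    rw [h, hsum, hb0, hb1, card_FA2]
    ring

lemma card_FA0 (m : ℕ) : 2 * (FA 0 m).card = m * 2 ^ m + 2 := by
  induction m with
  | zero => simp [FA]
  | succ m ih =>
    rw [card_FA0_succ, Nat.mul_add, ih, card_FA1]
    have : (2:ℕ)^(m+1) = 2 * 2^m := by ring
    rw [this]; ring_nf

def ClimbAt (x : List ℕ) (j : ℕ) : Prop :=
  x.getD (j+1) 0 = x.getD j 0 + 1 ∨ (x.getD j 0 = 0 ∧ x.getD (j+1) 0 = 0)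

def Qc (x : List ℕ) (i : ℕ) : Prop :=
  x.getD (i+1) 0 ≤ max (x.getD i 0) 1 ∨
    (x.getD (i+1) 0 = x.getD i 0 + 1 ∧ ∀ j < i, ClimbAt x j)

def Q (x : List ℕ) : Prop :=
  x ≠ [] ∧ x.getD 0 0 = 0 ∧ ∀ i, i + 1 < x.length → Qc x i

def Broken (P : List ℕ) : Prop := ∃ j, j + 1 < P.length ∧ ¬ ClimbAt P j

lemma climbAt_append {P : List ℕ} (l : List ℕ) {j : ℕ} (hj : j + 1 < P.length) :
    ClimbAt (P ++ l) j ↔ ClimbAt P j := by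
  unfold ClimbAt
  rw [List.getD_append P l 0 j (by omega), List.getD_append P l 0 (j+1) hj]

lemma qc_append {P : List ℕ} (l : List ℕ) {i : ℕ} (hi : i + 1 < P.length) :
    Qc (P ++ l) i ↔ Qc P i := by
  unfold Qc
  rw [List.getD_append P l 0 i (by omega), List.getD_append P l 0 (i+1) hi]
  constructor
  · rintro (h | ⟨h1, h2⟩)
    · exact Or.inl h
    · exact Or.inr ⟨h1, fun j hj => (climbAt_append l (by omega)).mp (h2 j hj)⟩
  · rintro (h | ⟨h1, h2⟩)
    · exact Or.inl h
    · exact Or.inr ⟨h1, fun j hj => (climbAt_append l (by omega)).mpr (h2 j hj)⟩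

lemma Q_append_prefix {P l : List ℕ} (h : Q (P ++ l)) (hP : P ≠ []) : Q P := by
  have hlen : 1 ≤ P.length := List.length_pos_iff.mpr hP
  refine ⟨hP, ?_, ?_⟩
  · rw [← List.getD_append P l 0 0 (by omega)]; exact h.2.1
  · intro i hi
    exact (qc_append l hi).mp (h.2.2 i (by simp; omega))

lemma Q_snoc {P : List ℕ} {u : ℕ} (h : Q P) (hP : P ≠ [])
    (hu : u ≤ max (P.getD (P.length - 1) 0) 1) : Q (P ++ [u]) := by
  have hlen : 1 ≤ P.length := List.length_pos_iff.mpr hP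
  refine ⟨by simp, ?_, ?_⟩
  · rw [List.getD_append P [u] 0 0 (by omega)]; exact h.2.1
  · intro i hi
    simp only [List.length_append, List.length_cons, List.length_nil] at hi
    rcases Nat.lt_or_ge (i+1) P.length with hlt | hge
    · exact (qc_append [u] hlt).mpr (h.2.2 i hlt)
    · have hieq : i + 1 = P.length := by omega
      left
      rw [List.getD_append_right P [u] 0 (i+1) (by omega),
        List.getD_append P [u] 0 i (by omega)]
      have : i + 1 - P.length = 0 := by omega
      rw [this]
      simpa [show i = P.length - 1 by omega] using hu

lemma broken_notclimb {P : List ℕ} (l : List ℕ) {i : ℕ} (hB : Broken P)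
    (hi : P.length - 1 ≤ i) : ¬ (∀ j < i, ClimbAt (P ++ l) j) := by
  obtain ⟨j, hj, hnc⟩ := hB
  intro h
  exact hnc ((climbAt_append l hj).mp (h j (by omega)))

lemma broken_append {P : List ℕ} (l : List ℕ) (hB : Broken P) : Broken (P ++ l) := by
  obtain ⟨j, hj, hnc⟩ := hB
  exact ⟨j, by simp; omega, fun h => hnc ((climbAt_append l hj).mp h)⟩

lemma G : ∀ (l P : List ℕ), P ≠ [] → Broken P →
    (Q (P ++ l) ↔ Q P ∧ List.Chain stp (P.getD (P.length - 1) 0) l) := by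
  intro l
  induction l with
  | nil => intro P hP _; simp [List.Chain.nil]
  | cons u l' ih =>
    intro P hP hB
    have hlen : 1 ≤ P.length := List.length_pos_iff.mpr hP
    have hPu : P ++ u :: l' = (P ++ [u]) ++ l' := by simp
    have hlastPu : (P ++ [u]).getD ((P ++ [u]).length - 1) 0 = u := by
      rw [List.length_append]
      simp only [List.length_cons, List.length_nil]
      rw [List.getD_append_right P [u] 0 (P.length + 1 - 1) (by omega)]
      simp
    constructor
    · intro hQ
      have hQP : Q P := Q_append_prefix hQ hP
      have hbd : Qc (P ++ u :: l') (P.length - 1) := hQ.2.2 _ (by simp; omega)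
      have hgd1 : (P ++ u :: l').getD (P.length - 1 + 1) 0 = u := by
        rw [show P.length - 1 + 1 = P.length by omega,
          List.getD_append_right P (u :: l') 0 P.length (le_refl _)]
        simp
      have hgd0 : (P ++ u :: l').getD (P.length - 1) 0 = P.getD (P.length - 1) 0 :=
        List.getD_append P _ 0 _ (by omega)
      have hu : u ≤ max (P.getD (P.length - 1) 0) 1 := by
        rcases hbd with h | ⟨_, h2⟩
        · rw [hgd1, hgd0] at h; exact h
        · exact absurd h2 (broken_notclimb (u :: l') hB (le_refl _))
      have hrest := (ih (P ++ [u]) (by simp) (broken_append [u] hB)).mp (hPu ▸ hQ)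
      rw [hlastPu] at hrest
      exact ⟨hQP, List.chain_cons.mpr ⟨hu, hrest.2⟩⟩
    · rintro ⟨hQP, hch⟩
      rw [List.Chain, List.chain_cons] at hch
      have hQPu : Q (P ++ [u]) := Q_snoc hQP hP hch.1
      rw [hPu]
      exact (ih (P ++ [u]) (by simp) (broken_append [u] hB)).mpr
        ⟨hQPu, by rw [hlastPu]; exact hch.2⟩

def h0 (a v : ℕ) : List ℕ := List.replicate a 0 ++ List.range' 1 v

lemma h0_length (a v : ℕ) : (h0 a v).length = a + v := by simp [h0]

lemma getD_h0 (a v p : ℕ) (l : List ℕ) :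
    (h0 a v ++ l).getD p 0 =
      if p < a then 0 else if p < a + v then p - a + 1
      else l.getD (p - (a + v)) 0 := by
  split_ifs with h1 h2
  · rw [List.getD_append _ l 0 p (by rw [h0_length]; omega)]
    unfold h0
    rw [List.getD_append _ _ 0 p (by simpa using h1)]
    simp [List.getD_eq_getElem?_getD, List.getElem?_replicate, h1]
  · rw [List.getD_append _ l 0 p (by rw [h0_length]; omega)]
    unfold h0
    rw [List.getD_append_right _ _ 0 p (by simpa using h1)]
    simp only [List.getD_eq_getElem?_getD, List.length_replicate]
    rw [List.getElem?_range' (by omega)]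
    simp; omega
  · rw [List.getD_append_right _ l 0 p (by rw [h0_length]; omega), h0_length]

lemma h0_ne_nil (a v : ℕ) (ha : 1 ≤ a) : h0 a v ≠ [] := by
  intro h
  have := h0_length a v
  rw [h] at this
  simp at this
  omega

lemma climbAt_h0 (a v : ℕ) (l : List ℕ) {j : ℕ} (hj : j + 1 < a + v) :
    ClimbAt (h0 a v ++ l) j := by
  unfold ClimbAt
  rw [getD_h0, getD_h0]
  split_ifs <;> first | (left; omega) | (right; omega) | omega

lemma Q_h0 (a v : ℕ) (ha : 1 ≤ a) : Q (h0 a v) := by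
  refine ⟨h0_ne_nil a v ha, ?_, ?_⟩
  · have := getD_h0 a v 0 []
    simp only [List.append_nil] at this
    rw [this]; split_ifs <;> first | rfl | omega | simp
  · intro i hi
    rw [h0_length] at hi
    have hc : ClimbAt (h0 a v) i := by
      have := climbAt_h0 a v [] (j := i) (by omega)
      simpa using this
    rcases hc with h | h
    · exact Or.inr ⟨h, fun j hj => by
        have := climbAt_h0 a v [] (j := j) (by omega)
        simpa using this⟩
    · left; rw [h.2]; omega

lemma getD_last_h0 (a v : ℕ) (ha : 1 ≤ a) :
    (h0 a v).getD ((h0 a v).length - 1) 0 = v := by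
  have := getD_h0 a v (a + v - 1) []
  simp only [List.append_nil] at this
  rw [h0_length, this]
  split_ifs <;> omega

lemma bridge : ∀ (l : List ℕ) (v a : ℕ), 1 ≤ a → (Q (h0 a v ++ l) ↔ QA v l) := by
  intro l
  induction l with
  | nil => intro v a ha; simpa [QA] using Q_h0 a v ha
  | cons w l' ih =>
    intro v a ha
    match v with
    | 0 =>
      match w with
      | 0 =>
        have he : h0 a 0 ++ 0 :: l' = h0 (a+1) 0 ++ l' := by
          simp [h0, List.replicate_succ' (n := a)]
        rw [he, ih 0 (a+1) (by omega)]
        simp [QA]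
      | 1 =>
        have he : h0 a 0 ++ 1 :: l' = h0 a 1 ++ l' := by
          simp [h0, List.range'_succ]
        rw [he, ih 1 a ha]
        simp [QA]
      | (w+2) =>
        have e0 : (h0 a 0 ++ (w+2) :: l').getD (a-1) 0 = 0 := by
          rw [getD_h0]; split_ifs <;> omega
        have e1 : (h0 a 0 ++ (w+2) :: l').getD a 0 = w + 2 := by
          rw [getD_h0]
          split_ifs <;> try omega
          rw [show a - (a + 0) = 0 from by omega]
          rfl
        constructor
        · intro hQ
          have hbd := hQ.2.2 (a - 1) (by simp [h0_length]; omega)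
          unfold Qc at hbd
          rw [show a - 1 + 1 = a from by omega, e0, e1] at hbd
          rcases hbd with h | ⟨h, _⟩ <;> omega
        · intro hq; simp [QA] at hq
    | (u+1) =>
      rcases Nat.lt_trichotomy w (u + 2) with hw | hw | hw
      · -- w ≤ u+1 : broken case
        have hQP : Q (h0 a (u+1) ++ [w]) := by
          apply Q_snoc (Q_h0 a (u+1) ha) (h0_ne_nil a (u+1) ha)
          rw [getD_last_h0 a (u+1) ha]; omega
        have e0 : (h0 a (u+1) ++ [w]).getD (a+u) 0 = u + 1 := by
          rw [getD_h0]; split_ifs <;> omega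
        have e1 : (h0 a (u+1) ++ [w]).getD (a+u+1) 0 = w := by
          rw [getD_h0]
          split_ifs <;> try omega
          rw [show a + u + 1 - (a + (u+1)) = 0 from by omega]
          rfl
        have hBP : Broken (h0 a (u+1) ++ [w]) := by
          refine ⟨a + u, by simp [h0_length], ?_⟩
          unfold ClimbAt
          rw [e0, e1]
          omega
        have hassoc : h0 a (u+1) ++ w :: l' = (h0 a (u+1) ++ [w]) ++ l' := by simp
        have hlast : (h0 a (u+1) ++ [w]).getD ((h0 a (u+1) ++ [w]).length - 1) 0 = w := by
          rw [List.length_append, h0_length]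
          simp only [List.length_cons, List.length_nil]
          rw [show a + (u+1) + 1 - 1 = a + u + 1 from by omega]
          exact e1
        rw [hassoc, G l' _ (by simp [h0]) hBP, hlast]
        simp only [QA]
        constructor
        · rintro ⟨_, hch⟩; exact Or.inr ⟨by omega, hch⟩
        · rintro (⟨h, _⟩ | ⟨_, hch⟩)
          · omega
          · exact ⟨hQP, hch⟩
      · -- w = u+2 : climb continues
        subst hw
        have hr : List.range' 1 (u+1) ++ [u+2] = List.range' 1 (u+2) := by
          have h := List.range'_append (s := 1) (m := u+1) (n := 1) (step := 1)
          simp only [List.range'_one] at h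
          rw [show 1 + 1 * (u+1) = u + 2 from by ring, show u + 1 + 1 = u + 2 from by omega] at h
          exact h
        have he : h0 a (u+1) ++ (u+2) :: l' = h0 a (u+2) ++ l' := by
          simp only [h0, ← hr]
          simp
        rw [he, ih (u+2) a ha]
        simp [QA]
      · -- w > u+2 : impossible on both sides
        have e0 : (h0 a (u+1) ++ w :: l').getD (a+u) 0 = u + 1 := by
          rw [getD_h0]; split_ifs <;> omega
        have e1 : (h0 a (u+1) ++ w :: l').getD (a+u+1) 0 = w := by
          rw [getD_h0]
          split_ifs <;> try omega
          rw [show a + u + 1 - (a + (u+1)) = 0 from by omega]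
          rfl
        constructor
        · intro hQ
          have hbd := hQ.2.2 (a + u) (by simp [h0_length]; omega)
          unfold Qc at hbd
          rw [e0, e1] at hbd
          rcases hbd with h | ⟨h, _⟩ <;> omega
        · intro hq
          simp [QA] at hq
          omega

lemma Q_iff_QA (x : List ℕ) : Q x ↔ ∃ l, x = 0 :: l ∧ QA 0 l := by
  constructor
  · intro hQ
    cases x with
    | nil => exact absurd rfl hQ.1
    | cons h t =>
      have h0d : h = 0 := by simpa using hQ.2.1
      subst h0d
      have he : (0 : ℕ) :: t = h0 1 0 ++ t := by simp [h0]
      rw [he] at hQ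
      exact ⟨t, rfl, (bridge t 0 1 (le_refl 1)).mp hQ⟩
  · rintro ⟨l, rfl, hq⟩
    have he : (0 : ℕ) :: l = h0 1 0 ++ l := by simp [h0]
    rw [he]
    exact (bridge l 0 1 (le_refl 1)).mpr hq



def ascUpTo (x : List ℕ) (i : ℕ) : ℕ :=
  ((List.range i).filter (fun j => x.getD j 0 < x.getD (j + 1) 0)).length

lemma getD_take {x : List ℕ} {i j : ℕ} (h : j < i) : (x.take i).getD j 0 = x.getD j 0 := by
  simp [List.getD_eq_getElem?_getD, List.getElem?_take, h]

lemma asc_take {x : List ℕ} {i : ℕ} (h1 : 1 ≤ i) (h2 : i ≤ x.length) :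
    asc (x.take i) = ascUpTo x (i - 1) := by
  unfold asc ascUpTo
  have hlen : (x.take i).length = i := by simp; omega
  rw [hlen]
  congr 1
  apply List.filter_congr
  intro j hj
  rw [List.mem_range] at hj
  rw [getD_take (by omega), getD_take (by omega)]

lemma ascUpTo_succ (x : List ℕ) (i : ℕ) :
    ascUpTo x (i+1) = ascUpTo x i + if x.getD i 0 < x.getD (i+1) 0 then 1 else 0 := by
  unfold ascUpTo
  rw [List.range_succ, List.filter_append, List.length_append]
  congr 1
  simp only [List.getD_eq_getElem?_getD]
  by_cases h : x[i]?.getD 0 < x[i+1]?.getD 0 <;> simp [h]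

lemma climb_mono {x : List ℕ} {r : ℕ} (hc : ∀ j < r, ClimbAt x j) :
    ∀ p q, p ≤ q → q ≤ r → x.getD p 0 ≤ x.getD q 0 := by
  intro p q hpq hqr
  induction q, hpq using Nat.le_induction with
  | base => exact le_refl _
  | succ q hq ih =>
    have h1 := ih (by omega)
    rcases hc q (by omega) with h | h <;> omega

lemma climb_strict {x : List ℕ} {r p q : ℕ} (hc : ∀ j < r, ClimbAt x j)
    (hp : 1 ≤ x.getD p 0) (hpq : p < q) (hqr : q ≤ r) : x.getD p 0 < x.getD q 0 := by
  rcases hc p (by omega) with h | h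
  · have := climb_mono hc (p+1) q (by omega) hqr
    omega
  · omega

lemma climb_asc {x : List ℕ} {r : ℕ} (hc : ∀ j < r, ClimbAt x j)
    (h0 : x.getD 0 0 = 0) : ascUpTo x r = x.getD r 0 := by
  induction r with
  | zero => simpa [ascUpTo] using h0.symm
  | succ r ih =>
    have ih' := ih (fun j hj => hc j (by omega))
    rw [ascUpTo_succ]
    rcases hc r (by omega) with h | h
    · rw [if_pos (by omega)]; omega
    · rw [if_neg (by omega)]; omega

lemma climb_vals {x : List ℕ} {r : ℕ} (hc : ∀ j < r, ClimbAt x j)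
    (h0 : x.getD 0 0 = 0) {w : ℕ} (hw1 : 1 ≤ w) (hwr : w ≤ x.getD r 0) :
    ∃ q, 1 ≤ q ∧ q ≤ r ∧ x.getD q 0 = w := by
  induction r with
  | zero => omega
  | succ r ih =>
    rcases hc r (by omega) with h | h
    · by_cases hw : w = x.getD (r+1) 0
      · exact ⟨r+1, by omega, le_refl _, hw.symm⟩
      · obtain ⟨q, h1, h2, h3⟩ := ih (fun j hj => hc j (by omega)) (by omega)
        exact ⟨q, h1, by omega, h3⟩
    · omega

lemma sublist_of_four {x : List ℕ} {i j k l : ℕ} (hij : i < j) (hjk : j < k) (hkl : k < l)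
    (hl : l < x.length) :
    [x.getD i 0, x.getD j 0, x.getD k 0, x.getD l 0].Sublist x := by
  have hi : i < x.length := by omega
  have hjx : j < x.length := by omega
  have hkx : k < x.length := by omega
  have h := List.map_getElem_sublist (l := x)
    (is := [⟨i, hi⟩, ⟨j, hjx⟩, ⟨k, hkx⟩, ⟨l, hl⟩])
    (by simp [List.pairwise_cons]; omega)
  simpa [List.get_eq_getElem, List.getD_eq_getElem?_getD, List.getElem?_eq_getElem,
    hi, hjx, hkx, hl] using h

lemma contains0102 {x : List ℕ} {i j k l : ℕ} (hij : i < j) (hjk : j < k) (hkl : k < l)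
    (hl : l < x.length) (h1 : x.getD i 0 < x.getD j 0) (h2 : x.getD k 0 = x.getD i 0)
    (h3 : x.getD j 0 < x.getD l 0) : Contains [0, 1, 0, 2] x := by
  refine ⟨[x.getD i 0, x.getD j 0, x.getD k 0, x.getD l 0],
    sublist_of_four hij hjk hkl hl, by simp, ?_⟩
  intro a b ha hb
  simp only [List.length_cons, List.length_nil] at ha hb
  interval_cases a <;> interval_cases b <;> simp only [List.getD_cons_zero, List.getD_cons_succ] <;> omega

lemma contains0112 {x : List ℕ} {i j k l : ℕ} (hij : i < j) (hjk : j < k) (hkl : k < l)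
    (hl : l < x.length) (h1 : x.getD i 0 < x.getD j 0) (h2 : x.getD k 0 = x.getD j 0)
    (h3 : x.getD j 0 < x.getD l 0) : Contains [0, 1, 1, 2] x := by
  refine ⟨[x.getD i 0, x.getD j 0, x.getD k 0, x.getD l 0],
    sublist_of_four hij hjk hkl hl, by simp, ?_⟩
  intro a b ha hb
  simp only [List.length_cons, List.length_nil] at ha hb
  interval_cases a <;> interval_cases b <;> simp only [List.getD_cons_zero, List.getD_cons_succ] <;> omega

lemma list_four {l : List ℕ} (h : l.length = 4) : ∃ a b c d, l = [a, b, c, d] := by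
  rcases l with _|⟨a,_|⟨b,_|⟨c,_|⟨d,_|⟨e,tl⟩⟩⟩⟩⟩ <;> simp at h
  exact ⟨a, b, c, d, rfl⟩

lemma fin_four {x : List ℕ} {is : List (Fin x.length)} (h : is.length = 4) :
    ∃ a b c d : Fin x.length, is = [a, b, c, d] := by
  rcases is with _|⟨a,_|⟨b,_|⟨c,_|⟨d,_|⟨e,tl⟩⟩⟩⟩⟩ <;> simp at h
  exact ⟨a, b, c, d, rfl⟩

lemma elim_pattern {p x : List ℕ} (hp : p.length = 4) (h : Contains p x) :
    ∃ i j k l : ℕ, i < j ∧ j < k ∧ k < l ∧ l < x.length ∧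
      ∀ a b : ℕ, a < 4 → b < 4 →
        ([x.getD i 0, x.getD j 0, x.getD k 0, x.getD l 0].getD a 0 <
          [x.getD i 0, x.getD j 0, x.getD k 0, x.getD l 0].getD b 0
          ↔ p.getD a 0 < p.getD b 0) := by
  obtain ⟨y, hsub, hlen, hcmp⟩ := h
  rw [hp] at hlen hcmp
  obtain ⟨is, hy, hpw⟩ := List.sublist_eq_map_getElem hsub
  have hislen : is.length = 4 := by
    have := congrArg List.length hy
    simp at this; omega
  obtain ⟨a, b, c, d, rfl⟩ := fin_four hislen
  simp only [List.pairwise_cons, List.mem_cons] at hpw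
  have hab : (a:ℕ) < b := hpw.1 b (by simp)
  have hbc : (b:ℕ) < c := hpw.2.1 c (by simp)
  have hcd : (c:ℕ) < d := hpw.2.2.1 d (by simp)
  refine ⟨a, b, c, d, hab, hbc, hcd, d.isLt, ?_⟩
  have hyv : y = [x.getD a 0, x.getD b 0, x.getD c 0, x.getD d 0] := by
    rw [hy]
    simp [List.get_eq_getElem, List.getD_eq_getElem x 0 a.isLt,
      List.getD_eq_getElem x 0 b.isLt, List.getD_eq_getElem x 0 c.isLt,
      List.getD_eq_getElem x 0 d.isLt]
  rw [hyv] at hcmp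
  exact hcmp

lemma elim0102 {x : List ℕ} (h : Contains [0, 1, 0, 2] x) :
    ∃ i j k l : ℕ, i < j ∧ j < k ∧ k < l ∧ l < x.length ∧
      x.getD i 0 < x.getD j 0 ∧ x.getD k 0 = x.getD i 0 ∧ x.getD j 0 < x.getD l 0 := by
  obtain ⟨i, j, k, l, h1, h2, h3, h4, hcmp⟩ := elim_pattern (by simp) h
  have c01 := hcmp 0 1 (by omega) (by omega)
  have c02 := hcmp 0 2 (by omega) (by omega)
  have c20 := hcmp 2 0 (by omega) (by omega)
  have c13 := hcmp 1 3 (by omega) (by omega)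
  simp only [List.getD_cons_zero, List.getD_cons_succ] at c01 c02 c20 c13
  refine ⟨i, j, k, l, h1, h2, h3, h4, ?_, ?_, ?_⟩ <;> omega

lemma elim0112 {x : List ℕ} (h : Contains [0, 1, 1, 2] x) :
    ∃ i j k l : ℕ, i < j ∧ j < k ∧ k < l ∧ l < x.length ∧
      x.getD i 0 < x.getD j 0 ∧ x.getD k 0 = x.getD j 0 ∧ x.getD j 0 < x.getD l 0 := by
  obtain ⟨i, j, k, l, h1, h2, h3, h4, hcmp⟩ := elim_pattern (by simp) h
  have c01 := hcmp 0 1 (by omega) (by omega)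
  have c12 := hcmp 1 2 (by omega) (by omega)
  have c21 := hcmp 2 1 (by omega) (by omega)
  have c13 := hcmp 1 3 (by omega) (by omega)
  simp only [List.getD_cons_zero, List.getD_cons_succ] at c01 c12 c21 c13
  refine ⟨i, j, k, l, h1, h2, h3, h4, ?_, ?_, ?_⟩ <;> omega

lemma lemma_M {x : List ℕ} (hQ : Q x) {r l : ℕ} (hrl : r < l) (hlx : l < x.length)
    (hval : x.getD r 0 < x.getD l 0) (h2 : 2 ≤ x.getD l 0) : ∀ j < r, ClimbAt x j := by
  by_contra hnc
  push_neg at hnc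
  obtain ⟨j, hj, hjnc⟩ := hnc
  have hstep : ∀ i, r ≤ i → i < l → x.getD (i+1) 0 ≤ max (x.getD i 0) 1 := by
    intro i hri hil
    rcases hQ.2.2 i (by omega) with h | ⟨_, hcl⟩
    · exact h
    · exact absurd (hcl j (by omega)) hjnc
  have hd : ∀ d, r + d ≤ l → max (x.getD (r+d) 0) 1 ≤ max (x.getD r 0) 1 := by
    intro d
    induction d with
    | zero => simp
    | succ d ih =>
      intro hdl
      have h1 := ih (by omega)
      have h2 := hstep (r+d) (by omega) (by omega)
      rw [show r + (d+1) = r + d + 1 from by omega]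
      omega
  have := hd (l - r) (by omega)
  rw [show r + (l - r) = l from by omega] at this
  omega

lemma Q_avoids0102 {x : List ℕ} (hQ : Q x) : Avoids [0, 1, 0, 2] x := by
  intro hcon
  obtain ⟨i, j, k, l, hij, hjk, hkl, hlx, v1, v2, v3⟩ := elim0102 hcon
  have hclimb : ∀ j' < k, ClimbAt x j' := lemma_M hQ hkl hlx (by omega) (by omega)
  by_cases hi1 : 1 ≤ x.getD i 0
  · have := climb_strict hclimb hi1 (by omega : i < k) (le_refl k)
    omega
  · have := climb_mono hclimb j k (by omega) (le_refl k)
    omega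

lemma Q_avoids0112 {x : List ℕ} (hQ : Q x) : Avoids [0, 1, 1, 2] x := by
  intro hcon
  obtain ⟨i, j, k, l, hij, hjk, hkl, hlx, v1, v2, v3⟩ := elim0112 hcon
  have hclimb : ∀ j' < k, ClimbAt x j' := lemma_M hQ hkl hlx (by omega) (by omega)
  have := climb_strict hclimb (p := j) (by omega) hjk (le_refl k)
  omega

lemma Q_le_ascUpTo {x : List ℕ} (hQ : Q x) : ∀ i < x.length, x.getD i 0 ≤ ascUpTo x i := by
  intro i
  induction i with
  | zero => intro _; rw [hQ.2.1]; omega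
  | succ i ih =>
    intro hi
    have ih' := ih (by omega)
    have hqc := hQ.2.2 i hi
    have hle : x.getD (i+1) 0 ≤ x.getD i 0 + 1 := by
      rcases hqc with h | ⟨h, _⟩ <;> omega
    rw [ascUpTo_succ]
    by_cases h : x.getD i 0 < x.getD (i+1) 0
    · rw [if_pos h]; omega
    · rw [if_neg h]; omega

lemma Q_isAscSeq {x : List ℕ} (hQ : Q x) : IsAscSeq x := by
  refine ⟨hQ.1, hQ.2.1, ?_⟩
  intro i h1 h2
  obtain ⟨j, rfl⟩ : ∃ j, i = j + 1 := ⟨i - 1, by omega⟩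
  rw [asc_take (by omega) (by omega)]
  simp only [Nat.add_sub_cancel]
  have hle : x.getD (j+1) 0 ≤ x.getD j 0 + 1 := by
    rcases hQ.2.2 j h2 with h | ⟨h, _⟩ <;> omega
  have := Q_le_ascUpTo hQ j (by omega)
  omega

lemma AA_Q {x : List ℕ} (h1 : IsAscSeq x) (h2 : Avoids [0, 1, 0, 2] x)
    (h3 : Avoids [0, 1, 1, 2] x) : Q x := by
  classical
  refine ⟨h1.1, h1.2.1, ?_⟩
  intro i hi
  by_cases hqc : x.getD (i+1) 0 ≤ max (x.getD i 0) 1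
  · exact Or.inl hqc
  push_neg at hqc
  have hv2 : 2 ≤ x.getD (i+1) 0 := by omega
  have hvi : x.getD i 0 < x.getD (i+1) 0 := by omega
  have hclimb : ∀ j < i, ClimbAt x j := by
    by_contra hnc
    push_neg at hnc
    have hP : ∃ j, j < i ∧ ¬ ClimbAt x j := hnc
    set j := Nat.find hP with hjdef
    have hspec := Nat.find_spec hP
    have hji : j < i := hspec.1
    have hjnc : ¬ ClimbAt x j := hspec.2
    have hcb : ∀ j' < j, ClimbAt x j' := by
      intro j' hj'
      by_contra hc
      exact Nat.find_min hP hj' ⟨by omega, hc⟩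
    -- x_{j+1} ≤ 1 + x_j from the ascent-sequence property
    have hasc := h1.2.2 (j+1) (by omega) (by omega)
    rw [asc_take (by omega) (by omega)] at hasc
    simp only [Nat.add_sub_cancel] at hasc
    rw [climb_asc hcb h1.2.1] at hasc
    have hnceq : ¬ (x.getD (j+1) 0 = x.getD j 0 + 1) ∧
        ¬ (x.getD j 0 = 0 ∧ x.getD (j+1) 0 = 0) := by
      constructor
      · intro hc; exact hjnc (Or.inl hc)
      · intro hc; exact hjnc (Or.inr hc)
    have hxj1 : 1 ≤ x.getD j 0 := by
      by_contra hc
      push_neg at hc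
      have : x.getD j 0 = 0 := by omega
      have : x.getD (j+1) 0 = 0 := by omega
      exact hnceq.2 ⟨by omega, this⟩
    have hxjle : x.getD (j+1) 0 ≤ x.getD j 0 := by omega
    -- j ≥ 1 since x_0 = 0 and x_j ≥ 1
    have hj1 : 1 ≤ j := by
      by_contra hc
      push_neg at hc
      have : j = 0 := by omega
      rw [this, h1.2.1] at hxj1
      omega
    by_cases hvi0 : x.getD i 0 = 0
    · -- pattern (0, 1@q, 0@i, v@(i+1)) : 0102
      obtain ⟨q, hq1, hqj, hqv⟩ := climb_vals hcb h1.2.1 (le_refl 1) hxj1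
      exact h2 (contains0102 (i := 0) (j := q) (k := i) (l := i+1)
        (by omega) (by omega) (by omega) (by omega)
        (by rw [h1.2.1, hqv]; omega) (by rw [h1.2.1, hvi0])
        (by rw [hqv]; omega))
    · by_cases hvij : x.getD i 0 ≤ x.getD j 0
      · -- pattern (0, xi@q, xi@i, v@(i+1)) : 0112
        obtain ⟨q, hq1, hqj, hqv⟩ := climb_vals hcb h1.2.1
          (w := x.getD i 0) (by omega) hvij
        exact h3 (contains0112 (i := 0) (j := q) (k := i) (l := i+1)
          (by omega) (by omega) (by omega) (by omega)
          (by rw [h1.2.1, hqv]; omega) (by rw [hqv])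
          (by rw [hqv]; omega))
      · -- x_i > x_j ≥ 1
        push_neg at hvij
        have hj1i : j + 1 < i := by
          rcases Nat.lt_or_ge (j+1) i with h | h
          · exact h
          · have : j + 1 = i := by omega
            rw [← this] at hvij
            omega
        by_cases hj10 : x.getD (j+1) 0 = 0
        · -- pattern (0, 1@q, 0@(j+1), xi@i) : 0102
          obtain ⟨q, hq1, hqj, hqv⟩ := climb_vals hcb h1.2.1 (le_refl 1) hxj1
          exact h2 (contains0102 (i := 0) (j := q) (k := j+1) (l := i)
            (by omega) (by omega) (by omega) (by omega)
            (by rw [h1.2.1, hqv]; omega) (by rw [h1.2.1, hj10])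
            (by rw [hqv]; omega))
        · by_cases hj1j : x.getD (j+1) 0 = x.getD j 0
          · -- pattern (0, xj@j, xj@(j+1), xi@i) : 0112
            exact h3 (contains0112 (i := 0) (j := j) (k := j+1) (l := i)
              (by omega) (by omega) (by omega) (by omega)
              (by rw [h1.2.1]; omega) (by rw [hj1j])
              (by omega))
          · -- 1 ≤ x_{j+1} < x_j : pattern (0, w@q, w@(j+1), xi@i) : 0112
            obtain ⟨q, hq1, hqj, hqv⟩ := climb_vals hcb h1.2.1
              (w := x.getD (j+1) 0) (by omega) (by omega)
            exact h3 (contains0112 (i := 0) (j := q) (k := j+1) (l := i)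
              (by omega) (by omega) (by omega) (by omega)
              (by rw [h1.2.1, hqv]; omega) (by rw [hqv])
              (by rw [hqv]; omega))
  -- now conclude x_{i+1} = x_i + 1
  right
  refine ⟨?_, hclimb⟩
  have hasc := h1.2.2 (i+1) (by omega) (by omega)
  rw [asc_take (by omega) (by omega)] at hasc
  simp only [Nat.add_sub_cancel] at hasc
  rw [climb_asc hclimb h1.2.1] at hasc
  omega


theorem stmt_3 (n : ℕ) (hn : 1 ≤ n) :
    Nat.card {x : List ℕ // x.length = n ∧ IsAscSeq x ∧ Avoids [0, 1, 0, 2] x ∧ Avoids [0, 1, 1, 2] x} = (n - 1) * 2 ^ (n - 2) + 1 := by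
  have hset : {x : List ℕ | x.length = n ∧ IsAscSeq x ∧ Avoids [0, 1, 0, 2] x ∧ Avoids [0, 1, 1, 2] x}
      = ↑((FA 0 (n-1)).image ((0 : ℕ) :: ·)) := by
    ext x
    simp only [Set.mem_setOf_eq, Finset.coe_image, Set.mem_image, Finset.mem_coe]
    constructor
    · rintro ⟨hlen, ha, h2, h3⟩
      obtain ⟨l, rfl, hqa⟩ := (Q_iff_QA _).mp (AA_Q ha h2 h3)
      refine ⟨l, (mem_FA _ _ _).mpr ⟨?_, hqa⟩, rfl⟩
      simp at hlen; omega
    · rintro ⟨l, hl, rfl⟩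
      rw [mem_FA] at hl
      have hQ : Q (0 :: l) := (Q_iff_QA _).mpr ⟨l, rfl, hl.2⟩
      exact ⟨by simp [hl.1]; omega, Q_isAscSeq hQ, Q_avoids0102 hQ, Q_avoids0112 hQ⟩
  have hrfl : Nat.card {x : List ℕ // x.length = n ∧ IsAscSeq x ∧ Avoids [0, 1, 0, 2] x ∧ Avoids [0, 1, 1, 2] x}
      = Set.ncard {x : List ℕ | x.length = n ∧ IsAscSeq x ∧ Avoids [0, 1, 0, 2] x ∧ Avoids [0, 1, 1, 2] x} := rfl
  rw [hrfl, hset, Set.ncard_coe_finset,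
    Finset.card_image_of_injective _ (fun a b h => by simpa using h)]
  match n, hn with
  | 1, _ => simp [FA]
  | (m+2), _ =>
    have h := card_FA0 (m+1)
    have he1 : m + 2 - 1 = m + 1 := by omega
    have he2 : m + 2 - 2 = m := by omega
    rw [he1, he2]
    have hp : (m+1) * 2 ^ (m+1) = 2 * ((m+1) * 2^m) := by ring
    rw [hp] at h
    omega
end

section
/- For n >= 1, the number of ascent sequences of length n avoiding both patterns 0112 and 0121 equals (n-1)*2^{n-2} + 1. -/
lemma asc_nil : asc [] = 0 := rfl
lemma asc_single (a : ℕ) : asc [a] = 0 := rfl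

lemma asc_cons_cons (a b : ℕ) (t : List ℕ) :
    asc (a :: b :: t) = (if a < b then 1 else 0) + asc (b :: t) := by
  unfold asc
  simp only [List.length_cons, Nat.add_sub_cancel, List.range_succ_eq_map]
  rw [List.filter_cons]
  have hcomp : ((fun j => decide ((a :: b :: t).getD j 0 < (a :: b :: t).getD (j + 1) 0)) ∘ Nat.succ)
      = (fun j => decide ((b :: t).getD j 0 < (b :: t).getD (j + 1) 0)) := by
    funext j; simp [Function.comp, List.getD_cons_succ]
  rw [List.filter_map, hcomp]
  simp only [List.getD_cons_zero, List.getD_cons_succ, List.length_map]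
  by_cases h : a < b <;> simp [h] <;> omega

lemma asc_snoc (a : ℕ) (t : List ℕ) (v : ℕ) :
    asc ((a :: t) ++ [v]) = asc (a :: t) + (if (a :: t).getLast?.getD 0 < v then 1 else 0) := by
  induction t generalizing a with
  | nil => simp [asc_cons_cons, asc_single]; congr
  | cons b t ih =>
    have h1 : (a :: b :: t) ++ [v] = a :: ((b :: t) ++ [v]) := by simp
    rw [h1]
    have h2 : (b :: t) ++ [v] = b :: (t ++ [v]) := by simp
    rw [h2, asc_cons_cons, ← h2, ih b, asc_cons_cons]
    rw [List.getLast?_cons_cons]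
    ring

lemma asc_all_zero (l : List ℕ) (h : ∀ a ∈ l, a = 0) : asc l = 0 := by
  induction l with
  | nil => rfl
  | cons a t ih =>
    cases t with
    | nil => rfl
    | cons b t' =>
      rw [asc_cons_cons]
      have ha := h a (by simp)
      have hb := h b (by simp)
      have := ih (fun x hx => h x (by simp [hx]))
      subst ha; subst hb
      simp [this]

/-! ### maxv -/

def maxv (l : List ℕ) : ℕ := l.foldr max 0

lemma foldr_max_eq (l : List ℕ) (a : ℕ) : l.foldr max a = max (maxv l) a := by
  induction l generalizing a with
  | nil => show a = max 0 a; omega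
  | cons b t ih =>
    show max b (t.foldr max a) = max (max b (t.foldr max 0)) a
    rw [ih]
    have := ih (a := 0)
    show max b (max (maxv t) a) = max (max b (t.foldr max 0)) a
    have h0 : t.foldr max 0 = maxv t := rfl
    rw [h0]; omega

lemma maxv_cons (b : ℕ) (t : List ℕ) : maxv (b :: t) = max b (maxv t) := rfl

lemma maxv_snoc (l : List ℕ) (v : ℕ) : maxv (l ++ [v]) = max (maxv l) v := by
  show (l ++ [v]).foldr max 0 = _
  rw [List.foldr_append, foldr_max_eq]
  show max (maxv l) (max v 0) = _
  omega

lemma le_maxv_of_mem {a : ℕ} {l : List ℕ} (h : a ∈ l) : a ≤ maxv l := by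
  induction l with
  | nil => simp at h
  | cons b t ih =>
    rcases List.mem_cons.1 h with rfl | h'
    · rw [maxv_cons]; omega
    · have := ih h'; rw [maxv_cons]; omega

lemma getLastD_le_maxv (a : ℕ) (t : List ℕ) : (a :: t).getLast?.getD 0 ≤ maxv (a :: t) := by
  rw [List.getLast?_eq_getLast (l := a :: t) (by simp)]
  exact le_maxv_of_mem (List.getLast_mem _)

/-! ### IsAscSeq snoc -/

lemma isAscSeq_snoc (y : List ℕ) (hy : y ≠ []) (v : ℕ) :
    IsAscSeq (y ++ [v]) ↔ IsAscSeq y ∧ v ≤ 1 + asc y := by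
  have hlen : 0 < y.length := List.length_pos_iff.2 hy
  constructor
  · rintro ⟨-, h0, hc⟩
    refine ⟨⟨hy, ?_, ?_⟩, ?_⟩
    · rwa [List.getD_append _ _ _ _ hlen] at h0
    · intro i h1 h2
      have := hc i h1 (by simp; omega)
      rwa [List.getD_append _ _ _ _ h2, List.take_append_of_le_length (le_of_lt h2)] at this
    · have := hc y.length (by omega) (by simp)
      rw [List.getD_append_right _ _ _ _ le_rfl, Nat.sub_self, List.take_left] at this
      simpa using this
  · rintro ⟨⟨-, h0, hc⟩, hv⟩
    refine ⟨by simp, ?_, ?_⟩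
    · rwa [List.getD_append _ _ _ _ hlen]
    · intro i h1 h2
      simp at h2
      rcases Nat.lt_or_ge i y.length with h | h
      · rw [List.getD_append _ _ _ _ h, List.take_append_of_le_length (le_of_lt h)]
        exact hc i h1 h
      · have hi : i = y.length := by omega
        subst hi
        rw [List.getD_append_right _ _ _ _ le_rfl, Nat.sub_self, List.take_left]
        simpa using hv
/-! ### Pattern lemmas -/

lemma contains0112_of {x : List ℕ} {a b c d : ℕ} (hs : [a, b, c, d].Sublist x)
    (h1 : a < b) (h2 : b = c) (h3 : c < d) : Contains [0, 1, 1, 2] x := by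
  refine ⟨[a, b, c, d], hs, rfl, ?_⟩
  intro i j hi hj
  simp only [List.length_cons, List.length_nil] at hi hj
  interval_cases i <;> interval_cases j <;> simp [List.getD] <;> omega

lemma contains0121_of {x : List ℕ} {a b c d : ℕ} (hs : [a, b, c, d].Sublist x)
    (h1 : a < b) (h2 : b < c) (h3 : d = b) : Contains [0, 1, 2, 1] x := by
  refine ⟨[a, b, c, d], hs, rfl, ?_⟩
  intro i j hi hj
  simp only [List.length_cons, List.length_nil] at hi hj
  interval_cases i <;> interval_cases j <;> simp [List.getD] <;> omega

lemma contains0112_snoc {y : List ℕ} {v : ℕ} (h : Contains [0, 1, 1, 2] (y ++ [v])) :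
    Contains [0, 1, 1, 2] y ∨ ∃ a b, [a, b, b].Sublist y ∧ a < b ∧ b < v := by
  obtain ⟨w, hs, hl, hcond⟩ := h
  rcases List.sublist_append_iff.1 hs with ⟨w1, w2, rfl, h1, h2⟩
  rcases List.sublist_singleton.1 h2 with rfl | rfl
  · exact Or.inl ⟨w1, by simpa using h1, by simpa using hl, by simpa using hcond⟩
  · right
    simp only [List.length_append, List.length_cons, List.length_nil] at hl
    obtain ⟨a, b, c, rfl⟩ : ∃ a b c, w1 = [a, b, c] := by
      rcases w1 with _ | ⟨a, _ | ⟨b, _ | ⟨c, _ | ⟨e, r⟩⟩⟩⟩ <;> simp_all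
    have e01 := hcond 0 1 (by norm_num) (by norm_num)
    have e12 := hcond 1 2 (by norm_num) (by norm_num)
    have e21 := hcond 2 1 (by norm_num) (by norm_num)
    have e23 := hcond 2 3 (by norm_num) (by norm_num)
    simp [List.getD] at e01 e12 e21 e23
    have hbc : b = c := by omega
    subst hbc
    exact ⟨a, b, h1, e01, by omega⟩

lemma contains0121_snoc {y : List ℕ} {v : ℕ} (h : Contains [0, 1, 2, 1] (y ++ [v])) :
    Contains [0, 1, 2, 1] y ∨ ∃ a c, [a, v, c].Sublist y ∧ a < v ∧ v < c := by
  obtain ⟨w, hs, hl, hcond⟩ := h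
  rcases List.sublist_append_iff.1 hs with ⟨w1, w2, rfl, h1, h2⟩
  rcases List.sublist_singleton.1 h2 with rfl | rfl
  · exact Or.inl ⟨w1, by simpa using h1, by simpa using hl, by simpa using hcond⟩
  · right
    simp only [List.length_append, List.length_cons, List.length_nil] at hl
    obtain ⟨a, b, c, rfl⟩ : ∃ a b c, w1 = [a, b, c] := by
      rcases w1 with _ | ⟨a, _ | ⟨b, _ | ⟨c, _ | ⟨e, r⟩⟩⟩⟩ <;> simp_all
    have e01 := hcond 0 1 (by norm_num) (by norm_num)
    have e12 := hcond 1 2 (by norm_num) (by norm_num)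
    have e13 := hcond 1 3 (by norm_num) (by norm_num)
    have e31 := hcond 3 1 (by norm_num) (by norm_num)
    simp [List.getD] at e01 e12 e13 e31
    have hbv : b = v := by omega
    subst hbv
    exact ⟨a, c, h1, e01, e12⟩
/-! ### The generator -/

def exts (y : List ℕ) : List ℕ :=
  if maxv y = 0 then [0, 1]
  else if 2 ≤ y.count (maxv y) then [0, maxv y]
  else [0, maxv y, maxv y + 1]

def good : ℕ → List (List ℕ)
  | 0 => [[0]]
  | n + 1 => (good n).flatMap (fun y => (exts y).map (fun v => y ++ [v]))

structure AInv (x : List ℕ) : Prop where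
  ne : x ≠ []
  head0 : x.getD 0 0 = 0
  isasc : IsAscSeq x
  av1 : Avoids [0, 1, 1, 2] x
  av2 : Avoids [0, 1, 2, 1] x
  full : ∀ u, 1 ≤ u → u ≤ maxv x → u ∈ x
  pairs : ∀ v w, 0 < v → v < w → w ≤ maxv x → [v, w].Sublist x
  rare : ∀ b, 0 < b → b < maxv x → x.count b ≤ 1
  asc_ge : maxv x ≤ asc x
  asc_le : 1 ≤ maxv x → x.count (maxv x) ≤ 1 → asc x ≤ maxv x

lemma ainv_zero : AInv [0] := by
  have hm : maxv [0] = 0 := rfl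
  refine ⟨by simp, rfl, ⟨by simp, rfl, ?_⟩, ?_, ?_, ?_, ?_, ?_, ?_, ?_⟩
  · intro i h1 h2; simp at h2; omega
  · rintro ⟨w, hs, hl, -⟩
    have := hs.length_le; simp at hl this; omega
  · rintro ⟨w, hs, hl, -⟩
    have := hs.length_le; simp at hl this; omega
  · intro u h1 h2; rw [hm] at h2; omega
  · intro v w h1 h2 h3; rw [hm] at h3; omega
  · intro b h1 h2; rw [hm] at h2; omega
  · rw [hm]; omega
  · intro h; rw [hm] at h; omega

/-- The key step lemma: extensions preserve the invariant. -/
lemma ainv_step {y : List ℕ} (I : AInv y) {v : ℕ} (hv : v ∈ exts y) : AInv (y ++ [v]) := by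
  have hy := I.ne
  have hlen : 0 < y.length := List.length_pos_iff.2 hy
  set m := maxv y with hm
  obtain ⟨h, t, rfl⟩ : ∃ h t, y = h :: t := by
    rcases y with _ | ⟨h, t⟩; · exact absurd rfl hy
    · exact ⟨_, _, rfl⟩
  have hhead : h = 0 := by simpa using I.head0
  have hasc_snoc : ∀ w : ℕ, asc ((h :: t) ++ [w]) = asc (h :: t) + (if (h :: t).getLast?.getD 0 < w then 1 else 0) :=
    fun w => asc_snoc h t w
  have hlast := getLastD_le_maxv h t
  have hmem_le : ∀ a ∈ (h :: t), a ≤ m := fun a ha => le_maxv_of_mem ha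
  -- the three cases for v
  have hcases : v = 0 ∨ (1 ≤ m ∧ v = m) ∨ ((m = 0 ∨ (1 ≤ m ∧ (h :: t).count m ≤ 1)) ∧ v = m + 1) := by
    unfold exts at hv
    rw [← hm] at hv
    by_cases h0 : m = 0
    · rw [if_pos h0] at hv
      simp at hv
      rcases hv with rfl | rfl
      · exact Or.inl rfl
      · exact Or.inr (Or.inr ⟨Or.inl h0, by omega⟩)
    · rw [if_neg h0] at hv
      by_cases h2 : 2 ≤ (h :: t).count m
      · rw [if_pos h2] at hv
        simp at hv
        rcases hv with rfl | rfl
        · exact Or.inl rfl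
        · exact Or.inr (Or.inl ⟨by omega, rfl⟩)
      · rw [if_neg h2] at hv
        simp at hv
        rcases hv with rfl | rfl | rfl
        · exact Or.inl rfl
        · exact Or.inr (Or.inl ⟨by omega, rfl⟩)
        · exact Or.inr (Or.inr ⟨Or.inr ⟨by omega, by omega⟩, rfl⟩)
  have hvle : v ≤ m + 1 := by rcases hcases with rfl | ⟨_, rfl⟩ | ⟨_, rfl⟩ <;> omega
  have hmax' : maxv ((h :: t) ++ [v]) = max m v := maxv_snoc (h :: t) v
  -- asc value
  have hasc_ge := I.asc_ge
  refine ⟨by simp, ?_, ?_, ?_, ?_, ?_, ?_, ?_, ?_, ?_⟩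
  · rw [List.getD_append _ _ _ _ hlen]; exact I.head0
  · rw [isAscSeq_snoc (h :: t) hy v]
    exact ⟨I.isasc, by omega⟩
  · -- avoids 0112
    intro hc
    rcases contains0112_snoc hc with hc' | ⟨a, b, hsub, hab, hbv⟩
    · exact I.av1 hc'
    · -- b is a repeated positive value, b < v
      have hb1 : 1 ≤ b := by omega
      have hcnt : 2 ≤ (h :: t).count b := by
        have h5 := hsub.count_le b
        have h6 : List.count b [a, b, b] = 2 := by
          have hne : (a == b) = false := by simp; omega
          simp [List.count_cons, hne]
        omega
      have hbm : b ≤ m := le_maxv_of_mem (hsub.subset (by simp))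
      rcases hcases with rfl | ⟨hm1, rfl⟩ | ⟨hfresh, rfl⟩
      · omega
      · -- v = m, so b < m, contradicting rare
        have := I.rare b (by omega) (by omega)
        omega
      · -- v = m + 1
        rcases Nat.lt_or_ge b m with hblt | hbge
        · have := I.rare b (by omega) hblt; omega
        · have hbm' : b = m := by omega
          subst hbm'
          rcases hfresh with h0 | ⟨-, hcle⟩
          · omega
          · omega
  · -- avoids 0121
    intro hc
    rcases contains0121_snoc hc with hc' | ⟨a, c, hsub, hav, hvc⟩
    · exact I.av2 hc'
    · have hcm : c ≤ m := le_maxv_of_mem (hsub.subset (by simp))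
      have hvm : v ≤ m := le_maxv_of_mem (hsub.subset (by simp))
      omega
  · -- full
    intro u h1 h2
    rw [hmax'] at h2
    rcases Nat.lt_or_ge u (m + 1) with h | h
    · rcases hcases with rfl | ⟨hm1, rfl⟩ | ⟨hfresh, rfl⟩
      all_goals exact List.mem_append_left _ (I.full u h1 (by omega))
    · have : u = v := by omega
      subst this
      exact List.mem_append_right _ (by simp)
  · -- pairs
    intro p q hp1 hp2 hp3
    rw [hmax'] at hp3
    rcases le_or_gt q m with hq | hq
    · exact (I.pairs p q hp1 hp2 hq).trans (List.sublist_append_left _ _)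
    · have hqv : q = v := by omega
      subst hqv
      have hpm : p ≤ m := by omega
      have hmem : p ∈ (h :: t) := I.full p hp1 hpm
      have hps : [p].Sublist (h :: t) := by simpa using hmem
      have := hps.append (List.Sublist.refl [q])
      simpa using this
  · -- rare
    intro b h1 h2
    rw [hmax'] at h2
    rw [List.count_append]
    have hsingle : ∀ w : ℕ, b ≠ w → List.count b [w] = 0 := by
      intro w hw
      have hne : (w == b) = false := by simp; omega
      simp [List.count_cons, hne]
    rcases hcases with rfl | ⟨hm1, rfl⟩ | ⟨hfresh, rfl⟩
    · have hr := I.rare b h1 (by omega)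
      rw [hsingle 0 (by omega)]; omega
    · have hr := I.rare b h1 (by omega)
      rw [hsingle m (by omega)]; omega
    · rcases Nat.lt_or_ge b m with hb | hb
      · have hr := I.rare b h1 hb
        rw [hsingle (m + 1) (by omega)]; omega
      · have hbm : b = m := by omega
        rw [hsingle (m + 1) (by omega), hbm]
        rcases hfresh with h0 | ⟨-, hcle⟩
        · omega
        · omega
  · -- asc_ge
    rw [hmax', hasc_snoc v]
    rcases hcases with rfl | ⟨hm1, rfl⟩ | ⟨hfresh, rfl⟩
    · split <;> omega
    · split <;> omega
    · rw [if_pos (by omega)]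
      omega
  · -- asc_le
    intro h1 h2
    rw [hmax'] at h1 h2 ⊢
    rw [List.count_append] at h2
    rw [hasc_snoc v]
    rcases hcases with rfl | ⟨hm1, rfl⟩ | ⟨hfresh, rfl⟩
    · have hmx : max m 0 = m := by omega
      rw [hmx] at h1 h2 ⊢
      have hz : List.count m [0] = 0 := by
        have hne : ((0 : ℕ) == m) = false := by simp; omega
        simp [List.count_cons, hne]
      have := I.asc_le h1 (by rw [← hm]; omega)
      rw [if_neg (by omega)]
      omega
    · have hmx : max m m = m := by omega
      rw [hmx] at h1 h2
      have hmem : m ∈ (h :: t) := I.full m hm1 le_rfl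
      have hpos : 0 < List.count m (h :: t) := List.count_pos_iff.2 hmem
      have hone : List.count m [m] = 1 := by simp
      omega
    · have hmx : max m (m + 1) = m + 1 := by omega
      rw [hmx] at h1 h2 ⊢
      rw [if_pos (by omega)]
      have hascle : asc (h :: t) ≤ m := by
        rcases hfresh with h0 | ⟨hm1, hcle⟩
        · have : asc (h :: t) = 0 := asc_all_zero (h :: t) (fun a ha => by have := hmem_le a ha; omega)
          omega
        · exact I.asc_le hm1 hcle
      omega

/-! ### Soundness and completeness -/

lemma good_sound : ∀ n, ∀ x ∈ good n, x.length = n + 1 ∧ AInv x := by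
  intro n
  induction n with
  | zero =>
    intro x hx
    simp [good] at hx
    subst hx
    exact ⟨rfl, ainv_zero⟩
  | succ n ih =>
    intro x hx
    simp only [good, List.mem_flatMap, List.mem_map] at hx
    obtain ⟨y, hy, v, hv, rfl⟩ := hx
    obtain ⟨hlen, I⟩ := ih y hy
    refine ⟨by simp [hlen], ainv_step I hv⟩

lemma good_complete : ∀ n, ∀ x : List ℕ, x.length = n + 1 → IsAscSeq x →
    Avoids [0, 1, 1, 2] x → Avoids [0, 1, 2, 1] x → x ∈ good n := by
  intro n
  induction n with
  | zero =>
    intro x hlen hasc _ _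
    obtain ⟨a, h⟩ : ∃ a, x = [a] := by
      rcases x with _ | ⟨a, _ | t⟩ <;> simp_all
    subst h
    have : a = 0 := by simpa using hasc.2.1
    subst this
    simp [good]
  | succ n ih =>
    intro x hlen hasc hav1 hav2
    -- x = y ++ [v]
    have hne : x ≠ [] := by intro h; simp [h] at hlen
    obtain ⟨y, v, rfl⟩ : ∃ y v, x = y ++ [v] := ⟨x.dropLast, x.getLast hne, (List.dropLast_append_getLast hne).symm⟩
    have hylen : y.length = n + 1 := by simp at hlen; omega
    have hyne : y ≠ [] := by intro h; simp [h] at hylen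
    rw [isAscSeq_snoc y hyne v] at hasc
    obtain ⟨hyasc, hvasc⟩ := hasc
    have hyav1 : Avoids [0, 1, 1, 2] y := by
      intro ⟨w, hs, hl, hc⟩
      exact hav1 ⟨w, hs.trans (List.sublist_append_left _ _), hl, hc⟩
    have hyav2 : Avoids [0, 1, 2, 1] y := by
      intro ⟨w, hs, hl, hc⟩
      exact hav2 ⟨w, hs.trans (List.sublist_append_left _ _), hl, hc⟩
    have hygood := ih y hylen hyasc hyav1 hyav2
    obtain ⟨-, I⟩ := good_sound n y hygood
    -- now show v ∈ exts y
    have hvmem : v ∈ exts y := by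
      set m := maxv y with hm
      obtain ⟨h, t, rfl⟩ : ∃ h t, y = h :: t := by
        rcases y with _ | ⟨h, t⟩; · exact absurd rfl hyne
        · exact ⟨_, _, rfl⟩
      have hhead : h = 0 := by simpa using I.head0
      subst hhead
      -- v is not strictly between 0 and m
      have hnotmid : ¬ (0 < v ∧ v < m) := by
        rintro ⟨hv0, hvm⟩
        have hsub : [v, m].Sublist (0 :: t) := I.pairs v m hv0 hvm le_rfl
        have hsub' : [v, m].Sublist t := by
          rcases (List.sublist_cons_iff).1 hsub with h' | ⟨r, hr, hr'⟩
          · exact h'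
          · exfalso; simp at hr; omega
        have hfull : [0, v, m, v].Sublist ((0 :: t) ++ [v]) := by
          have h1 : [0, v, m].Sublist (0 :: t) := (hsub'.cons_cons 0)
          have := h1.append (List.Sublist.refl [v])
          simpa using this
        exact hav2 (contains0121_of hfull hv0 hvm rfl)
      -- if m repeated, v cannot exceed m
      have hnothigh : 1 ≤ m → 2 ≤ (0 :: t).count m → v ≤ m := by
        intro hm1 h2
        by_contra hgt
        push_neg at hgt
        have hrep : (List.replicate 2 m).Sublist (0 :: t) := List.replicate_sublist_iff.2 h2
        have hrep' : [m, m].Sublist t := by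
          have : (List.replicate 2 m) = [m, m] := rfl
          rw [this] at hrep
          rcases (List.sublist_cons_iff).1 hrep with h' | ⟨r, hr, hr'⟩
          · exact h'
          · exfalso
            simp at hr
            omega
        have hfull : [0, m, m, v].Sublist ((0 :: t) ++ [v]) := by
          have h1 : [0, m, m].Sublist (0 :: t) := (hrep'.cons_cons 0)
          have := h1.append (List.Sublist.refl [v])
          simpa using this
        exact hav1 (contains0112_of hfull hm1 rfl (by omega))
      unfold exts
      rw [← hm]
      by_cases h0 : m = 0
      · rw [if_pos h0]
        have : asc (0 :: t) = 0 := asc_all_zero (0 :: t)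
            (fun a ha => by have := le_maxv_of_mem ha; omega)
        have : v ≤ 1 := by omega
        interval_cases v <;> simp
      · rw [if_neg h0]
        by_cases h2 : 2 ≤ (0 :: t).count m
        · rw [if_pos h2]
          have := hnothigh (by omega) h2
          have : v = 0 ∨ v = m := by omega
          rcases this with rfl | rfl <;> simp
        · rw [if_neg h2]
          have hle : asc (0 :: t) ≤ m := I.asc_le (by omega) (by rw [← hm]; omega)
          have : v = 0 ∨ v = m ∨ v = m + 1 := by omega
          rcases this with rfl | rfl | rfl <;> simp
    simp only [good, List.mem_flatMap, List.mem_map]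
    exact ⟨y, hygood, v, hvmem, rfl⟩

lemma good_iff (n : ℕ) (x : List ℕ) :
    x ∈ good n ↔ x.length = n + 1 ∧ IsAscSeq x ∧ Avoids [0, 1, 1, 2] x ∧ Avoids [0, 1, 2, 1] x := by
  constructor
  · intro h
    obtain ⟨hlen, I⟩ := good_sound n x h
    exact ⟨hlen, I.isasc, I.av1, I.av2⟩
  · rintro ⟨hlen, h1, h2, h3⟩
    exact good_complete n x hlen h1 h2 h3

/-! ### Counting -/

def zP (y : List ℕ) : Bool := maxv y == 0
def fP (y : List ℕ) : Bool := decide (1 ≤ maxv y) && decide (y.count (maxv y) ≤ 1)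
def extmap (y : List ℕ) : List (List ℕ) := (exts y).map (fun v => y ++ [v])

lemma count_snoc_self (y : List ℕ) (v : ℕ) : (y ++ [v]).count v = y.count v + 1 := by
  rw [List.count_append]; simp

lemma count_snoc_ne (y : List ℕ) (v w : ℕ) (h : w ≠ v) : (y ++ [v]).count w = y.count w := by
  rw [List.count_append]
  have : (v == w) = false := by simp; omega
  simp [List.count_cons, this]

lemma not_mem_of_gt_maxv {y : List ℕ} {v : ℕ} (h : maxv y < v) : v ∉ y := by
  intro hm; have := le_maxv_of_mem hm; omega

section PerY
variable {y : List ℕ} (I : AInv y)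

lemma exts_cases : (maxv y = 0 ∧ exts y = [0, 1]) ∨
    (1 ≤ maxv y ∧ 2 ≤ y.count (maxv y) ∧ exts y = [0, maxv y]) ∨
    (1 ≤ maxv y ∧ y.count (maxv y) ≤ 1 ∧ exts y = [0, maxv y, maxv y + 1]) := by
  unfold exts
  by_cases h0 : maxv y = 0
  · exact Or.inl ⟨h0, by rw [if_pos h0]⟩
  · by_cases h2 : 2 ≤ y.count (maxv y)
    · exact Or.inr (Or.inl ⟨by omega, h2, by rw [if_neg h0, if_pos h2]⟩)
    · exact Or.inr (Or.inr ⟨by omega, by omega, by rw [if_neg h0, if_neg h2]⟩)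

lemma zP_snoc_zero : zP (y ++ [0]) = zP y := by
  simp [zP, maxv_snoc]

lemma zP_snoc_pos (v : ℕ) (hv : 1 ≤ v) : zP (y ++ [v]) = false := by
  simp [zP, maxv_snoc]; omega

include I

lemma fP_y_of_zero (h0 : maxv y = 0) : fP y = false := by
  simp [fP]; omega

lemma fP_snoc_zero : fP (y ++ [0]) = fP y := by
  have hmx : maxv (y ++ [0]) = maxv y := by rw [maxv_snoc]; omega
  by_cases h0 : maxv y = 0
  · simp [fP, hmx, h0]
  · have : (y ++ [0]).count (maxv y) = y.count (maxv y) :=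
      count_snoc_ne y 0 (maxv y) (by omega)
    simp [fP, hmx, this]

lemma fP_snoc_max (h1 : 1 ≤ maxv y) : fP (y ++ [maxv y]) = false := by
  have hmx : maxv (y ++ [maxv y]) = maxv y := by rw [maxv_snoc]; omega
  have hmem : maxv y ∈ y := I.full _ h1 le_rfl
  have hcnt : (y ++ [maxv y]).count (maxv y) = y.count (maxv y) + 1 := count_snoc_self y _
  have hpos : 0 < y.count (maxv y) := List.count_pos_iff.2 hmem
  simp [fP, hmx, hcnt]
  omega

lemma fP_snoc_succ : fP (y ++ [maxv y + 1]) = true := by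
  have hmx : maxv (y ++ [maxv y + 1]) = maxv y + 1 := by rw [maxv_snoc]; omega
  have hnm : maxv y + 1 ∉ y := not_mem_of_gt_maxv (by omega)
  have hcnt : (y ++ [maxv y + 1]).count (maxv y + 1) = 1 := by
    rw [count_snoc_self]
    have : y.count (maxv y + 1) = 0 := List.count_eq_zero.2 hnm
    omega
  simp [fP, hmx, hcnt]

lemma extmap_length : (extmap y).length = 2 + (if fP y then 1 else 0) := by
  unfold extmap
  rcases exts_cases (y := y) with ⟨h0, he⟩ | ⟨h1, h2, he⟩ | ⟨h1, h2, he⟩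
  · rw [he, fP_y_of_zero I h0]; simp
  · have : fP y = false := by simp [fP]; omega
    rw [he, this]; simp
  · have : fP y = true := by simp [fP]; omega
    rw [he, this]; simp

lemma extmap_countP_z : (extmap y).countP zP = if zP y then 1 else 0 := by
  unfold extmap
  rcases exts_cases (y := y) with ⟨h0, he⟩ | ⟨h1, h2, he⟩ | ⟨h1, h2, he⟩
  · have hz : zP y = true := by simp [zP]; omega
    rw [he, hz]
    simp [List.countP_cons, zP_snoc_zero, zP_snoc_pos (y := y) 1 le_rfl, hz]
  · have hz : zP y = false := by simp [zP]; omega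
    rw [he, hz]
    simp [List.countP_cons, zP_snoc_zero, zP_snoc_pos (y := y) _ h1, hz]
  · have hz : zP y = false := by simp [zP]; omega
    rw [he, hz]
    simp [List.countP_cons, zP_snoc_zero, zP_snoc_pos (y := y) _ h1,
      zP_snoc_pos (y := y) _ (by omega : 1 ≤ maxv y + 1), hz]

lemma extmap_countP_f :
    (extmap y).countP fP = if zP y then 1 else (if fP y then 2 else 0) := by
  unfold extmap
  rcases exts_cases (y := y) with ⟨h0, he⟩ | ⟨h1, h2, he⟩ | ⟨h1, h2, he⟩
  · have hz : zP y = true := by simp [zP]; omega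
    have h01 : maxv y + 1 = 1 := by omega
    have hf1 : fP (y ++ [1]) = true := by rw [← h01]; exact fP_snoc_succ I
    rw [he, hz]
    simp [List.countP_cons, fP_snoc_zero I, fP_y_of_zero I h0, hf1]
  · have hz : zP y = false := by simp [zP]; omega
    have hf : fP y = false := by simp [fP]; omega
    rw [he, hz, hf]
    simp [List.countP_cons, fP_snoc_zero I, fP_snoc_max I h1, hf]
  · have hz : zP y = false := by simp [zP]; omega
    have hf : fP y = true := by simp [fP]; omega
    rw [he, hz, hf]
    simp [List.countP_cons, fP_snoc_zero I, fP_snoc_max I h1, fP_snoc_succ I, hf]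

end PerY

lemma good_succ (n : ℕ) : good (n + 1) = (good n).flatMap extmap := rfl

lemma flat_length : ∀ L : List (List ℕ), (∀ y ∈ L, AInv y) →
    (L.flatMap extmap).length = 2 * L.length + L.countP fP := by
  intro L
  induction L with
  | nil => intro _; simp
  | cons y L ih =>
    intro hI
    have I := hI y (by simp)
    rw [List.flatMap_cons, List.length_append, extmap_length I, ih (fun z hz => hI z (by simp [hz])),
      List.countP_cons, List.length_cons]
    by_cases h : fP y <;> simp [h] <;> ring

lemma flat_countP_z : ∀ L : List (List ℕ), (∀ y ∈ L, AInv y) →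
    (L.flatMap extmap).countP zP = L.countP zP := by
  intro L
  induction L with
  | nil => intro _; simp
  | cons y L ih =>
    intro hI
    have I := hI y (by simp)
    rw [List.flatMap_cons, List.countP_append, extmap_countP_z I,
      ih (fun z hz => hI z (by simp [hz])), List.countP_cons]
    by_cases h : zP y <;> simp [h] <;> omega

lemma flat_countP_f : ∀ L : List (List ℕ), (∀ y ∈ L, AInv y) →
    (L.flatMap extmap).countP fP = 2 * L.countP fP + L.countP zP := by
  intro L
  induction L with
  | nil => intro _; simp
  | cons y L ih =>
    intro hI
    have I := hI y (by simp)
    rw [List.flatMap_cons, List.countP_append, extmap_countP_f I,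
      ih (fun z hz => hI z (by simp [hz])), List.countP_cons, List.countP_cons]
    by_cases hz : zP y
    · have hf : fP y = false := by
        have h0 : maxv y = 0 := by simpa [zP] using hz
        exact fP_y_of_zero I h0
      simp [hz, hf]; ring
    · by_cases hf : fP y <;> simp [hz, hf] <;> ring

lemma good_inv (n : ℕ) : ∀ y ∈ good n, AInv y := fun y hy => (good_sound n y hy).2

lemma countP_z_good : ∀ n, (good n).countP zP = 1
  | 0 => rfl
  | n + 1 => by
    rw [good_succ, flat_countP_z (good n) (good_inv n), countP_z_good n]

lemma countP_f_good : ∀ n, (good n).countP fP = 2 ^ n - 1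
  | 0 => rfl
  | n + 1 => by
    rw [good_succ, flat_countP_f (good n) (good_inv n), countP_f_good n, countP_z_good n]
    have : 1 ≤ 2 ^ n := Nat.one_le_two_pow
    have h2 : (2 : ℕ) ^ (n + 1) = 2 * 2 ^ n := by ring
    omega

lemma length_good : ∀ n, (good n).length = n * 2 ^ (n - 1) + 1
  | 0 => rfl
  | n + 1 => by
    rw [good_succ, flat_length (good n) (good_inv n), length_good n, countP_f_good n]
    have h1 : 1 ≤ 2 ^ n := Nat.one_le_two_pow
    cases n with
    | zero => simp
    | succ m =>
      simp only [Nat.add_sub_cancel]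
      have h3 : (2 : ℕ) ^ (m + 1) = 2 * 2 ^ m := by ring
      have h4 : 1 ≤ 2 ^ m := Nat.one_le_two_pow
      have h5 : 2 * ((m + 1) * 2 ^ m) = (m + 1) * 2 ^ (m + 1) := by ring
      have h6 : (m + 1 + 1) * 2 ^ (m + 1) = (m + 1) * 2 ^ (m + 1) + 2 ^ (m + 1) := by ring
      omega

lemma nodup_good : ∀ n, (good n).Nodup
  | 0 => by simp [good]
  | n + 1 => by
    rw [good_succ]
    rw [List.nodup_flatMap]
    constructor
    · intro y hy
      have I := good_inv n y hy
      unfold extmap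
      refine List.Nodup.map (fun a b hab => by simpa using List.append_cancel_left hab) ?_
      rcases exts_cases (y := y) with ⟨h0, he⟩ | ⟨h1, h2, he⟩ | ⟨h1, h2, he⟩ <;> rw [he] <;>
        simp <;> omega
    · have hnd := nodup_good n
      refine hnd.imp_of_mem ?_
      intro a b ha hb hne
      intro x hxa hxb
      unfold extmap at hxa hxb
      simp only [List.mem_map] at hxa hxb
      obtain ⟨v, -, rfl⟩ := hxa
      obtain ⟨w, -, hw⟩ := hxb
      have hla := (good_sound n a ha).1
      have hlb := (good_sound n b hb).1
      have := (List.append_inj hw.symm (by omega)).1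
      exact hne this

theorem stmt_4 (n : ℕ) (hn : 1 ≤ n) :
    Nat.card {x : List ℕ // x.length = n ∧ IsAscSeq x ∧ Avoids [0, 1, 1, 2] x ∧ Avoids [0, 1, 2, 1] x} = (n - 1) * 2 ^ (n - 2) + 1 := by
  obtain ⟨m, rfl⟩ : ∃ m, n = m + 1 := ⟨n - 1, by omega⟩
  have e : {x : List ℕ // x.length = m + 1 ∧ IsAscSeq x ∧ Avoids [0, 1, 1, 2] x ∧ Avoids [0, 1, 2, 1] x}
      ≃ {x : List ℕ // x ∈ (good m).toFinset} :=
    Equiv.subtypeEquivRight (fun x => by rw [List.mem_toFinset, good_iff])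
  rw [Nat.card_congr e, Nat.card_eq_fintype_card, Fintype.card_coe,
    List.toFinset_card_of_nodup (nodup_good m), length_good m]
  have h1 : m + 1 - 1 = m := by omega
  have h2 : m + 1 - 2 = m - 1 := by omega
  rw [h1, h2]
end

section
/- For n >= 1, the number of ascent sequences of length n avoiding both patterns 0102 and 0120 equals (n-1)*2^{n-2} + 1. -/
namespace AV

lemma getD_snoc_lt {x : List ℕ} {v : ℕ} {i : ℕ} (h : i < x.length) :
    (x ++ [v]).getD i 0 = x.getD i 0 := by
  rw [List.getD_eq_getElem _ _ (by simp; omega), List.getD_eq_getElem _ _ h,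
    List.getElem_append_left h]

lemma getD_snoc_last (x : List ℕ) (v : ℕ) :
    (x ++ [v]).getD x.length 0 = v := by
  rw [List.getD_eq_getElem _ _ (by simp)]
  simp

lemma asc_concat (y : List ℕ) (u v : ℕ) :
    asc (y ++ [u] ++ [v]) = asc (y ++ [u]) + if u < v then 1 else 0 := by
  have hl : (y ++ [u]).length = y.length + 1 := by simp
  show ((List.filter _ (List.range ((y ++ [u] ++ [v]).length - 1)))).length = _
  rw [List.length_append, hl, List.length_singleton]
  have : y.length + 1 + 1 - 1 = y.length + 1 := by omega
  rw [this, List.range_succ, List.filter_append, List.length_append]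
  congr 1
  · have hc : ∀ j ∈ List.range y.length,
        (decide ((y ++ [u] ++ [v]).getD j 0 < (y ++ [u] ++ [v]).getD (j + 1) 0))
          = (decide ((y ++ [u]).getD j 0 < (y ++ [u]).getD (j + 1) 0)) := by
      intro j hj
      rw [List.mem_range] at hj
      simp only [decide_eq_decide]
      rw [getD_snoc_lt (x := y ++ [u]) (by omega), getD_snoc_lt (x := y ++ [u]) (by omega)]
    rw [List.filter_congr hc]
    show _ = ((asc (y ++ [u])))
    unfold asc
    simp
  · have h1 : (y ++ [u] ++ [v]).getD y.length 0 = u := by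
      rw [getD_snoc_lt (by simp)]
      exact getD_snoc_last y u
    have h2 : (y ++ [u] ++ [v]).getD (y.length + 1) 0 = v := by
      rw [← hl]; exact getD_snoc_last _ v
    simp only [List.filter_singleton, h1, h2]
    by_cases h : u < v <;> simp [h]

lemma exists_concat {x : List ℕ} (hx : x ≠ []) : ∃ y u, x = y ++ [u] := by
  rcases x.eq_nil_or_concat with rfl | ⟨y, u, rfl⟩
  · exact absurd rfl hx
  · exact ⟨y, u, by simp⟩

lemma asc_snoc {x : List ℕ} (hx : x ≠ []) (v : ℕ) :
    asc (x ++ [v]) = asc x + if x.getD (x.length - 1) 0 < v then 1 else 0 := by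
  obtain ⟨y, u, rfl⟩ := exists_concat hx
  rw [asc_concat]
  have : (y ++ [u]).getD ((y ++ [u]).length - 1) 0 = u := by
    have : (y ++ [u]).length - 1 = y.length := by simp
    rw [this, getD_snoc_last]
  rw [this]

lemma asc_snoc_ge {x : List ℕ} (hx : x ≠ []) (v : ℕ) : asc x ≤ asc (x ++ [v]) := by
  rw [asc_snoc hx]; omega

lemma isAscSeq_snoc {x : List ℕ} (hx : x ≠ []) (v : ℕ) :
    IsAscSeq (x ++ [v]) ↔ IsAscSeq x ∧ v ≤ 1 + asc x := by
  have hlen : (x ++ [v]).length = x.length + 1 := by simp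
  have hpos : 0 < x.length := List.length_pos_iff.2 hx
  constructor
  · rintro ⟨-, h0, h⟩
    have htake : (x ++ [v]).take x.length = x := by simp
    refine ⟨⟨hx, by rwa [getD_snoc_lt hpos] at h0, ?_⟩, ?_⟩
    · intro i hi hilt
      have := h i hi (by omega)
      rwa [getD_snoc_lt hilt, List.take_append_of_le_length (by omega)] at this
    · have := h x.length hpos (by omega)
      rwa [getD_snoc_last, htake] at this
  · rintro ⟨⟨-, h0, h⟩, hv⟩
    refine ⟨by simp, by rwa [getD_snoc_lt hpos], ?_⟩
    intro i hi hilt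
    rcases Nat.lt_or_ge i x.length with hlt | hge
    · rw [getD_snoc_lt hlt, List.take_append_of_le_length (by omega)]
      exact h i hi hlt
    · have : i = x.length := by omega
      subst this
      rw [getD_snoc_last, List.take_left]
      exact hv


inductive W : List ℕ → ℕ → Prop
  | nil : W [0] 0
  | same {x m} : W x m → W (x ++ [m]) m
  | up {x m} : W x m → W (x ++ [m + 1]) (m + 1)

inductive G : List ℕ → ℕ → Prop
  | start {x m} : W x (m + 1) → G (x ++ [m]) (m + 1)
  | low {x m} : G x (m + 1) → G (x ++ [m]) (m + 1)
  | high {x m} : G x (m + 1) → G (x ++ [m + 1]) (m + 1)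

lemma W.ne_nil {x m} (h : W x m) : x ≠ [] := by
  induction h with
  | nil => simp
  | same _ _ => simp
  | up _ _ => simp

lemma G.ne_nil {x M} (h : G x M) : x ≠ [] := by
  induction h with
  | start _ => simp
  | low _ _ => simp
  | high _ _ => simp

lemma G.one_le {x M} (h : G x M) : 1 ≤ M := by
  induction h with
  | start _ => omega
  | low _ _ => omega
  | high _ _ => omega

lemma W.last {x m} (h : W x m) : x.getD (x.length - 1) 0 = m := by
  have : ∀ (y : List ℕ) (u : ℕ), (y ++ [u]).getD ((y ++ [u]).length - 1) 0 = u := by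
    intro y u
    have h1 : (y ++ [u]).length - 1 = y.length := by simp
    rw [h1, getD_snoc_last]
  induction h with
  | nil => rfl
  | same _ _ => apply this
  | up _ _ => apply this

lemma W.asc_eq {x m} (h : W x m) : asc x = m := by
  induction h with
  | nil => rfl
  | same h ih => rw [asc_snoc h.ne_nil, h.last, ih]; simp
  | up h ih => rw [asc_snoc h.ne_nil, h.last, ih]; simp

lemma G.asc_ge {x M} (h : G x M) : M ≤ asc x := by
  induction h with
  | @start x' m' h =>
    have h1 := asc_snoc_ge h.ne_nil m'
    have h2 := h.asc_eq
    omega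
  | low h ih => exact le_trans ih (asc_snoc_ge h.ne_nil _)
  | high h ih => exact le_trans ih (asc_snoc_ge h.ne_nil _)

lemma W.head {x m} (h : W x m) : x.getD 0 0 = 0 := by
  induction h with
  | nil => rfl
  | same h ih => rw [getD_snoc_lt (List.length_pos_iff.2 h.ne_nil)]; exact ih
  | up h ih => rw [getD_snoc_lt (List.length_pos_iff.2 h.ne_nil)]; exact ih

lemma G.head {x M} (h : G x M) : x.getD 0 0 = 0 := by
  induction h with
  | start h => rw [getD_snoc_lt (List.length_pos_iff.2 h.ne_nil)]; exact h.head
  | low h ih => rw [getD_snoc_lt (List.length_pos_iff.2 h.ne_nil)]; exact ih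
  | high h ih => rw [getD_snoc_lt (List.length_pos_iff.2 h.ne_nil)]; exact ih

lemma W.isAscSeq {x m} (h : W x m) : IsAscSeq x := by
  induction h with
  | nil => exact ⟨by simp, rfl, by intro i h1 h2; simp at h2; omega⟩
  | same h ih => rw [isAscSeq_snoc h.ne_nil]; exact ⟨ih, by rw [h.asc_eq]; omega⟩
  | up h ih => rw [isAscSeq_snoc h.ne_nil]; exact ⟨ih, by rw [h.asc_eq]; omega⟩

lemma G.isAscSeq {x M} (h : G x M) : IsAscSeq x := by
  induction h with
  | start h => rw [isAscSeq_snoc h.ne_nil]; exact ⟨h.isAscSeq, by rw [h.asc_eq]; omega⟩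
  | low h ih => rw [isAscSeq_snoc h.ne_nil]; exact ⟨ih, by have := h.asc_ge; omega⟩
  | high h ih => rw [isAscSeq_snoc h.ne_nil]; exact ⟨ih, by have := h.asc_ge; omega⟩
def Struct (x : List ℕ) (b M : ℕ) : Prop :=
  b ≤ x.length ∧ (∀ p q, p ≤ q → q < b → x.getD p 0 ≤ x.getD q 0) ∧
  (∀ p, b ≤ p → p < x.length → M - 1 ≤ x.getD p 0) ∧ (∀ p, p < x.length → x.getD p 0 ≤ M)

lemma W.struct {x m} (h : W x m) : Struct x x.length m := by
  induction h with
  | nil =>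
    have hz : ∀ r, ([0] : List ℕ).getD r 0 = 0 := by
      intro r; cases r <;> simp
    refine ⟨le_rfl, ?_, by omega, ?_⟩
    · intro p q hpq hq
      rw [hz, hz]
    · intro p hp
      rw [hz]
  | @same x m h ih =>
    obtain ⟨-, hmono, -, hle⟩ := ih
    have hlen : (x ++ [m]).length = x.length + 1 := by simp
    refine ⟨le_rfl, ?_, by omega, ?_⟩
    · intro p q hpq hq
      rw [hlen] at hq
      rcases Nat.lt_or_ge q x.length with h1 | h1
      · rw [getD_snoc_lt h1, getD_snoc_lt (by omega)]
        exact hmono p q hpq h1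
      · have : q = x.length := by omega
        subst this
        rw [getD_snoc_last]
        rcases Nat.lt_or_ge p x.length with h2 | h2
        · rw [getD_snoc_lt h2]; exact hle p h2
        · have : p = x.length := by omega
          subst this; rw [getD_snoc_last]
    · intro p hp
      rw [hlen] at hp
      rcases Nat.lt_or_ge p x.length with h1 | h1
      · rw [getD_snoc_lt h1]; exact hle p h1
      · have : p = x.length := by omega
        subst this; rw [getD_snoc_last]
  | @up x m h ih =>
    obtain ⟨-, hmono, -, hle⟩ := ih
    have hlen : (x ++ [m + 1]).length = x.length + 1 := by simp
    refine ⟨le_rfl, ?_, by omega, ?_⟩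
    · intro p q hpq hq
      rw [hlen] at hq
      rcases Nat.lt_or_ge q x.length with h1 | h1
      · rw [getD_snoc_lt h1, getD_snoc_lt (by omega)]
        exact hmono p q hpq h1
      · have : q = x.length := by omega
        subst this
        rw [getD_snoc_last]
        rcases Nat.lt_or_ge p x.length with h2 | h2
        · rw [getD_snoc_lt h2]; exact le_trans (hle p h2) (by omega)
        · have : p = x.length := by omega
          subst this; rw [getD_snoc_last]
    · intro p hp
      rw [hlen] at hp
      rcases Nat.lt_or_ge p x.length with h1 | h1
      · rw [getD_snoc_lt h1]; exact le_trans (hle p h1) (by omega)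
      · have : p = x.length := by omega
        subst this; rw [getD_snoc_last]

lemma struct_snoc {x b M v} (h : Struct x b M) (hv1 : M - 1 ≤ v) (hv2 : v ≤ M) :
    Struct (x ++ [v]) b M := by
  obtain ⟨hb, hmono, hmid, hle⟩ := h
  have hlen : (x ++ [v]).length = x.length + 1 := by simp
  refine ⟨by omega, ?_, ?_, ?_⟩
  · intro p q hpq hq
    rw [getD_snoc_lt (by omega), getD_snoc_lt (by omega)]
    exact hmono p q hpq hq
  · intro p hp hplen
    rw [hlen] at hplen
    rcases Nat.lt_or_ge p x.length with h1 | h1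
    · rw [getD_snoc_lt h1]; exact hmid p hp h1
    · have : p = x.length := by omega
      subst this; rw [getD_snoc_last]; exact hv1
  · intro p hplen
    rw [hlen] at hplen
    rcases Nat.lt_or_ge p x.length with h1 | h1
    · rw [getD_snoc_lt h1]; exact hle p h1
    · have : p = x.length := by omega
      subst this; rw [getD_snoc_last]; exact hv2

lemma G.struct {x M} (h : G x M) : ∃ b, Struct x b M := by
  induction h with
  | @start x m h =>
    obtain ⟨-, hmono, -, hle⟩ := h.struct
    exact ⟨x.length, struct_snoc ⟨le_rfl, hmono, by omega, hle⟩ (by omega) (by omega)⟩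
  | low h ih =>
    obtain ⟨b, hs⟩ := ih
    exact ⟨b, struct_snoc hs (by omega) (by omega)⟩
  | high h ih =>
    obtain ⟨b, hs⟩ := ih
    exact ⟨b, struct_snoc hs (by omega) (by omega)⟩

lemma contains_elim {p x : List ℕ} (hp : p.length = 4) (h : Contains p x) :
    ∃ k : Fin 4 → ℕ, (∀ i j : Fin 4, i < j → k i < k j) ∧ (∀ i, k i < x.length) ∧
      ∀ i j : Fin 4, (x.getD (k i) 0 < x.getD (k j) 0 ↔ p.getD i.val 0 < p.getD j.val 0) := by
  obtain ⟨y, hsub, hlen, hrel⟩ := h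
  rw [List.sublist_iff_exists_fin_orderEmbedding_get_eq] at hsub
  obtain ⟨f, hf⟩ := hsub
  have hy4 : y.length = 4 := hlen.trans hp
  have key : ∀ i : Fin 4, x.getD ((f (Fin.cast hy4.symm i)).val) 0 = y.getD i.val 0 := by
    intro i
    rw [List.getD_eq_getElem _ _ (f (Fin.cast hy4.symm i)).isLt,
      List.getD_eq_getElem _ _ (by omega : (i : ℕ) < y.length)]
    have := hf (Fin.cast hy4.symm i)
    simp only [List.get_eq_getElem] at this
    rw [← this]
    rfl
  refine ⟨fun i => (f (Fin.cast hy4.symm i)).val, ?_, fun i => (f _).isLt, ?_⟩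
  · intro i j hij
    have : (Fin.cast hy4.symm i) < (Fin.cast hy4.symm j) := hij
    exact f.strictMono this
  · intro i j
    rw [key i, key j]
    exact hrel i.val j.val (by omega) (by omega)

lemma struct_avoid1 {x b M} (h : Struct x b M) : Avoids [0, 1, 0, 2] x := by
  obtain ⟨hb, hmono, hmid, hle⟩ := h
  intro hc
  obtain ⟨k, hkmono, hklt, hrel⟩ := contains_elim (p := [0, 1, 0, 2]) (by rfl) hc
  have h01 := hrel 0 1
  have h02a := hrel 0 2
  have h02b := hrel 2 0
  have h13 := hrel 1 3
  simp only [show ((0 : Fin 4) : ℕ) = 0 from rfl, show ((1 : Fin 4) : ℕ) = 1 from rfl,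
    show ((2 : Fin 4) : ℕ) = 2 from rfl, show ((3 : Fin 4) : ℕ) = 3 from rfl,
    show ([0,1,0,2] : List ℕ).getD 0 0 = 0 from rfl,
    show ([0,1,0,2] : List ℕ).getD 1 0 = 1 from rfl,
    show ([0,1,0,2] : List ℕ).getD 2 0 = 0 from rfl,
    show ([0,1,0,2] : List ℕ).getD 3 0 = 2 from rfl] at h01 h02a h02b h13
  have r01 := h01.2 (by omega)
  have r02a := h02a
  have r02b := h02b
  have r13 := h13.2 (by omega)
  have e02 : x.getD (k 0) 0 = x.getD (k 2) 0 := by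
    rcases Nat.lt_trichotomy (x.getD (k 0) 0) (x.getD (k 2) 0) with h1 | h1 | h1
    · exact absurd (r02a.1 h1) (by omega)
    · exact h1
    · exact absurd (r02b.1 h1) (by omega)
  rcases Nat.lt_or_ge (k 2) b with hcase | hcase
  · have m01 := hmono (k 0) (k 1) (le_of_lt (hkmono 0 1 (by decide))) (lt_trans (hkmono 1 2 (by decide)) hcase)
    have m12 := hmono (k 1) (k 2) (le_of_lt (hkmono 1 2 (by decide))) hcase
    omega
  · have h2 := hmid (k 2) hcase (hklt 2)
    have h3 := hle (k 3) (hklt 3)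
    omega

lemma struct_avoid2 {x b M} (h : Struct x b M) : Avoids [0, 1, 2, 0] x := by
  obtain ⟨hb, hmono, hmid, hle⟩ := h
  intro hc
  obtain ⟨k, hkmono, hklt, hrel⟩ := contains_elim (p := [0, 1, 2, 0]) (by rfl) hc
  have h01 := hrel 0 1
  have h12 := hrel 1 2
  have h03a := hrel 0 3
  have h03b := hrel 3 0
  simp only [show ((0 : Fin 4) : ℕ) = 0 from rfl, show ((1 : Fin 4) : ℕ) = 1 from rfl,
    show ((2 : Fin 4) : ℕ) = 2 from rfl, show ((3 : Fin 4) : ℕ) = 3 from rfl,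
    show ([0,1,2,0] : List ℕ).getD 0 0 = 0 from rfl,
    show ([0,1,2,0] : List ℕ).getD 1 0 = 1 from rfl,
    show ([0,1,2,0] : List ℕ).getD 2 0 = 2 from rfl,
    show ([0,1,2,0] : List ℕ).getD 3 0 = 0 from rfl] at h01 h12 h03a h03b
  have r01 := h01.2 (by omega)
  have r12 := h12.2 (by omega)
  have r03a := h03a
  have r03b := h03b
  have e03 : x.getD (k 0) 0 = x.getD (k 3) 0 := by
    rcases Nat.lt_trichotomy (x.getD (k 0) 0) (x.getD (k 3) 0) with h1 | h1 | h1
    · exact absurd (r03a.1 h1) (by omega)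
    · exact h1
    · exact absurd (r03b.1 h1) (by omega)
  rcases Nat.lt_or_ge (k 3) b with hcase | hcase
  · have m23 := hmono (k 2) (k 3) (le_of_lt (hkmono 2 3 (by decide))) hcase
    omega
  · have h2 := hmid (k 3) hcase (hklt 3)
    have h3 := hle (k 2) (hklt 2)
    omega
lemma W.sorted_sublist {x m} (h : W x m) :
    ∀ l : List ℕ, l.Pairwise (· < ·) → (∀ a ∈ l, a ≤ m) → List.Sublist l x := by
  induction h with
  | nil =>
    intro l hp hle
    cases l with
    | nil => simp
    | cons a t =>
      have ha : a = 0 := by have := hle a (by simp); omega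
      cases t with
      | nil => subst ha; exact List.Sublist.refl [0]
      | cons b t2 =>
        exfalso
        have hab : a < b := (List.pairwise_cons.1 hp).1 b (by simp)
        have := hle b (by simp)
        omega
  | @same x m h ih =>
    intro l hp hle
    exact (ih l hp hle).trans (List.sublist_append_left _ _)
  | @up x m h ih =>
    intro l hp hle
    rcases l.eq_nil_or_concat with rfl | ⟨l', c, rfl⟩
    · simp
    · rw [List.concat_eq_append] at hp hle ⊢
      have hpair := (List.pairwise_append.1 hp)
      have hlc : ∀ a ∈ l', a < c := fun a ha => hpair.2.2 a ha c (by simp)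
      by_cases hc : c ≤ m
      · refine (ih _ hp ?_).trans (List.sublist_append_left _ _)
        intro a ha
        rcases List.mem_append.1 ha with h' | h'
        · exact le_trans (le_of_lt (hlc a h')) hc
        · simp at h'; omega
      · have hc' : c = m + 1 := by have := hle c (by simp); omega
        subst hc'
        exact List.Sublist.append (ih l' hpair.1 (fun a ha => by have := hlc a ha; omega))
          (List.Sublist.refl [m + 1])

lemma G.exists_W {x M} (h : G x M) : ∃ w, W w M ∧ List.Sublist w x := by
  induction h with
  | @start x m h => exact ⟨x, h, List.sublist_append_left _ _⟩
  | low h ih =>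
    obtain ⟨w, h1, h2⟩ := ih
    exact ⟨w, h1, h2.trans (List.sublist_append_left _ _)⟩
  | high h ih =>
    obtain ⟨w, h1, h2⟩ := ih
    exact ⟨w, h1, h2.trans (List.sublist_append_left _ _)⟩

lemma G.peak {x M} (h : G x M) : List.Sublist [M - 1, M, M - 1] x := by
  induction h with
  | @start x m h =>
    have hs : List.Sublist [m, m + 1] x := h.sorted_sublist [m, m + 1]
      (by simp) (by intro a ha; simp at ha; omega)
    have := List.Sublist.append hs (List.Sublist.refl [m])
    simpa using this
  | low h ih =>
    exact ih.trans (List.sublist_append_left _ _)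
  | high h ih =>
    exact ih.trans (List.sublist_append_left _ _)

lemma contains_mono {p x y : List ℕ} (h : Contains p x) (hxy : List.Sublist x y) : Contains p y := by
  obtain ⟨z, h1, h2, h3⟩ := h
  exact ⟨z, h1.trans hxy, h2, h3⟩

lemma contains_0102 {x : List ℕ} {a b c : ℕ} (h1 : a < b) (h2 : b < c)
    (hs : List.Sublist [a, b, a, c] x) : Contains [0, 1, 0, 2] x := by
  refine ⟨[a, b, a, c], hs, rfl, ?_⟩
  intro i j hi hj
  simp only [List.length_cons, List.length_nil] at hi hj
  interval_cases i <;> interval_cases j <;>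
    simp only [List.getD_cons_zero, List.getD_cons_succ] <;> omega

lemma contains_0120 {x : List ℕ} {a b c : ℕ} (h1 : a < b) (h2 : b < c)
    (hs : List.Sublist [a, b, c, a] x) : Contains [0, 1, 2, 0] x := by
  refine ⟨[a, b, c, a], hs, rfl, ?_⟩
  intro i j hi hj
  simp only [List.length_cons, List.length_nil] at hi hj
  interval_cases i <;> interval_cases j <;>
    simp only [List.getD_cons_zero, List.getD_cons_succ] <;> omega

lemma snoc4 (a b c v : ℕ) : [a, b, c, v] = [a, b, c] ++ [v] := rfl

lemma complete (x : List ℕ) (hA : IsAscSeq x) (h1 : Avoids [0, 1, 0, 2] x)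
    (h2 : Avoids [0, 1, 2, 0] x) : (∃ m, W x m) ∨ (∃ M, G x M) := by
  induction x using List.reverseRecOn with
  | nil => exact absurd rfl hA.1
  | append_singleton x v ih =>
    rcases eq_or_ne x [] with rfl | hx
    · left
      refine ⟨0, ?_⟩
      have hv : v = 0 := by have := hA.2.1; simpa using this
      subst hv
      exact W.nil
    · have hA' := (isAscSeq_snoc hx v).1 hA
      have hsub : List.Sublist x (x ++ [v]) := List.sublist_append_left _ _
      have h1' : Avoids [0, 1, 0, 2] x := fun hc => h1 (contains_mono hc hsub)
      have h2' : Avoids [0, 1, 2, 0] x := fun hc => h2 (contains_mono hc hsub)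
      rcases ih hA'.1 h1' h2' with ⟨m, hw⟩ | ⟨M, hg⟩
      · have hv : v ≤ m + 1 := by
          have := hA'.2
          rw [hw.asc_eq] at this
          omega
        rcases Nat.lt_or_ge v m with hlt | hge
        · rcases Nat.lt_or_ge (v + 1) m with hlt2 | hge2
          · exfalso
            apply h2
            have hs3 : List.Sublist [v, m - 1, m] x := hw.sorted_sublist [v, m - 1, m]
              (by simp; omega) (by intro a ha; simp at ha; rcases ha with rfl | rfl | rfl <;> omega)
            exact contains_0120 (a := v) (b := m - 1) (c := m) (by omega) (by omega)
              (by rw [snoc4]; exact List.Sublist.append hs3 (List.Sublist.refl [v]))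
          · right
            have hm : m = v + 1 := by omega
            subst hm
            exact ⟨v + 1, G.start hw⟩
        · rcases Nat.lt_or_ge v (m + 1) with hlt2 | hge2
          · have hm : v = m := by omega
            subst hm
            exact Or.inl ⟨v, hw.same⟩
          · have hm : v = m + 1 := by omega
            subst hm
            exact Or.inl ⟨m + 1, hw.up⟩
      · have hM := hg.one_le
        rcases Nat.lt_or_ge v (M - 1) with hlt | hge
        · exfalso
          apply h2
          obtain ⟨w, hw, hws⟩ := hg.exists_W
          have hs3 : List.Sublist [v, M - 1, M] x := (hw.sorted_sublist [v, M - 1, M]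
            (by simp; omega) (by intro a ha; simp at ha; rcases ha with rfl | rfl | rfl <;> omega)).trans hws
          exact contains_0120 (a := v) (b := M - 1) (c := M) (by omega) (by omega)
            (by rw [snoc4]; exact List.Sublist.append hs3 (List.Sublist.refl [v]))
        · rcases Nat.lt_or_ge M v with hlt2 | hge2
          · exfalso
            apply h1
            have hs4 : List.Sublist [M - 1, M, M - 1, v] (x ++ [v]) := by
              rw [snoc4]; exact List.Sublist.append hg.peak (List.Sublist.refl [v])
            exact contains_0102 (a := M - 1) (b := M) (c := v) (by omega) (by omega) hs4
          · obtain ⟨m, rfl⟩ : ∃ m, M = m + 1 := ⟨M - 1, by omega⟩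
            rcases Nat.lt_or_ge v (m + 1) with h3 | h3
            · have : v = m := by omega
              subst this
              exact Or.inr ⟨v + 1, hg.low⟩
            · have : v = m + 1 := by omega
              subst this
              exact Or.inr ⟨m + 1, hg.high⟩
def cnt (s : List Bool) : ℕ := s.count true

def wd (s : List Bool) : List ℕ := (List.range (s.length + 1)).map (fun i => cnt (s.take i))

def gtail (M : ℕ) (t : List Bool) : List ℕ := t.map (fun b => if b then M else M - 1)

def decode : List Bool × Option (List Bool) → List ℕ
  | (s, none) => wd s
  | (s, some t) => wd s ++ (cnt s - 1) :: gtail (cnt s) t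

lemma cnt_snoc (s : List Bool) (b : Bool) : cnt (s ++ [b]) = cnt s + if b then 1 else 0 := by
  unfold cnt
  rw [List.count_append]
  cases b <;> simp

lemma wd_nil : wd [] = [0] := rfl

lemma wd_length (s : List Bool) : (wd s).length = s.length + 1 := by simp [wd]

lemma wd_snoc (s : List Bool) (b : Bool) : wd (s ++ [b]) = wd s ++ [cnt (s ++ [b])] := by
  unfold wd
  rw [List.length_append, List.length_singleton, List.range_succ, List.map_append]
  congr 1
  · apply List.map_congr_left
    intro i hi
    rw [List.mem_range] at hi
    rw [List.take_append_of_le_length (by omega)]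
  · have h : (s ++ [b]).take (s.length + 1) = s ++ [b] := List.take_of_length_le (by simp)
    simp [h]

lemma W_wd (s : List Bool) : W (wd s) (cnt s) := by
  induction s using List.reverseRecOn with
  | nil => exact W.nil
  | append_singleton s b ih =>
    rw [wd_snoc]
    cases b
    · rw [cnt_snoc]; simpa using ih.same
    · rw [cnt_snoc]; simpa using ih.up

lemma decode_some_eq (s : List Bool) (t : List Bool) (b : Bool) :
    decode (s, some (t ++ [b])) = decode (s, some t) ++ [if b then cnt s else cnt s - 1] := by
  simp [decode, gtail]

lemma G_decode (s t : List Bool) (hs : 1 ≤ cnt s) : G (decode (s, some t)) (cnt s) := by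
  obtain ⟨m, hm⟩ : ∃ m, cnt s = m + 1 := ⟨cnt s - 1, by omega⟩
  induction t using List.reverseRecOn with
  | nil =>
    show G (wd s ++ (cnt s - 1) :: gtail (cnt s) []) (cnt s)
    have : gtail (cnt s) [] = [] := rfl
    rw [this, hm]
    have := (W_wd s)
    rw [hm] at this
    simpa using G.start (m := m) this
  | append_singleton t b ih =>
    rw [decode_some_eq]
    cases b
    · simp only [show (if (false : Bool) then cnt s else cnt s - 1) = cnt s - 1 from rfl]
      rw [hm]
      have h2 : m + 1 - 1 = m := by omega
      rw [h2]
      exact G.low (by rw [← hm]; exact ih)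
    · simp only [show (if (true : Bool) then cnt s else cnt s - 1) = cnt s from rfl]
      rw [hm]
      exact G.high (by rw [← hm]; exact ih)

lemma W_surj {x m} (h : W x m) : ∃ s : List Bool, cnt s = m ∧ x = wd s := by
  induction h with
  | nil => exact ⟨[], rfl, rfl⟩
  | @same x m h ih =>
    obtain ⟨s, h1, h2⟩ := ih
    refine ⟨s ++ [false], by rw [cnt_snoc]; simp [h1], ?_⟩
    rw [wd_snoc, cnt_snoc, ← h2, h1]
    simp
  | @up x m h ih =>
    obtain ⟨s, h1, h2⟩ := ih
    refine ⟨s ++ [true], by rw [cnt_snoc]; simp [h1], ?_⟩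
    rw [wd_snoc, cnt_snoc, ← h2, h1]
    simp

lemma G_surj {x M} (h : G x M) : ∃ s t : List Bool, cnt s = M ∧ x = decode (s, some t) := by
  induction h with
  | @start x m h =>
    obtain ⟨s, h1, h2⟩ := W_surj h
    refine ⟨s, [], h1, ?_⟩
    show x ++ [m] = wd s ++ (cnt s - 1) :: gtail (cnt s) []
    have : gtail (cnt s) [] = [] := rfl
    rw [this, ← h2, h1]
    simp
  | @low x m h ih =>
    obtain ⟨s, t, h1, h2⟩ := ih
    refine ⟨s, t ++ [false], h1, ?_⟩
    rw [decode_some_eq, ← h2, h1]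
    simp
  | @high x m h ih =>
    obtain ⟨s, t, h1, h2⟩ := ih
    refine ⟨s, t ++ [true], h1, ?_⟩
    rw [decode_some_eq, ← h2, h1]
    simp

lemma decode_some_length (s t : List Bool) :
    (decode (s, some t)).length = s.length + t.length + 2 := by
  simp [decode, wd_length, gtail]
  omega
lemma wd_getD {s : List Bool} {i : ℕ} (h : i ≤ s.length) : (wd s).getD i 0 = cnt (s.take i) := by
  have hl : i < ((List.range (s.length + 1)).map (fun i => cnt (s.take i))).length := by
    simp; omega
  rw [wd, List.getD_eq_getElem _ _ hl]
  simp

lemma cnt_take_mono (s : List Bool) {i j : ℕ} (h : i ≤ j) : cnt (s.take i) ≤ cnt (s.take j) := by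
  have h2 : s.take i = (s.take j).take i := by rw [List.take_take, min_eq_left h]
  rw [h2]
  exact List.Sublist.count_le _ (List.take_sublist _ _)

lemma cnt_take_succ {s : List Bool} {i : ℕ} (h : i < s.length) :
    cnt (s.take (i + 1)) = cnt (s.take i) + if s.getD i false then 1 else 0 := by
  rw [List.take_succ, List.getElem?_eq_getElem h]
  show cnt (s.take i ++ [s[i]]) = _
  rw [cnt_snoc]
  congr 2
  rw [List.getD_eq_getElem _ _ h]

lemma wd_inj {s s' : List Bool} (h : wd s = wd s') : s = s' := by
  have hlen : s.length = s'.length := by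
    have h2 := congrArg List.length h
    rw [wd_length, wd_length] at h2
    omega
  apply List.ext_getElem hlen
  intro i h1 h2
  have e1 : cnt (s.take i) = cnt (s'.take i) := by
    have h3 := congrArg (fun l => l.getD i 0) h
    rwa [wd_getD (le_of_lt h1), wd_getD (le_of_lt h2)] at h3
  have e2 : cnt (s.take (i + 1)) = cnt (s'.take (i + 1)) := by
    have h3 := congrArg (fun l => l.getD (i + 1) 0) h
    rwa [wd_getD (by omega), wd_getD (by omega)] at h3
  have q1 := cnt_take_succ h1
  have q2 := cnt_take_succ h2
  rw [List.getD_eq_getElem _ _ h1] at q1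
  rw [List.getD_eq_getElem _ _ h2] at q2
  cases hb : s[i] <;> cases hb' : s'[i] <;> rw [hb] at q1 <;> rw [hb'] at q2 <;>
    simp only [if_true, if_false] at q1 q2 <;> simp_all <;> omega

lemma wd_no_desc (s : List Bool) {j : ℕ} (h : j + 1 < (wd s).length) :
    (wd s).getD j 0 ≤ (wd s).getD (j + 1) 0 := by
  rw [wd_length] at h
  rw [wd_getD (by omega), wd_getD (by omega)]
  exact cnt_take_mono s (by omega)

lemma decode_some_getD_wd (s t : List Bool) {j : ℕ} (h : j < s.length + 1) :
    (decode (s, some t)).getD j 0 = (wd s).getD j 0 := by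
  show (wd s ++ _).getD j 0 = _
  rw [List.getD_append _ _ _ _ (by rw [wd_length]; omega)]

lemma decode_some_getD_mid (s t : List Bool) :
    (decode (s, some t)).getD (s.length + 1) 0 = cnt s - 1 := by
  show (wd s ++ (cnt s - 1) :: gtail (cnt s) t).getD (s.length + 1) 0 = _
  rw [List.getD_append_right _ _ _ _ (by rw [wd_length])]
  rw [wd_length]
  simp

lemma decode_some_desc (s t : List Bool) (hs : 1 ≤ cnt s) :
    (decode (s, some t)).getD (s.length + 1) 0 < (decode (s, some t)).getD s.length 0 := by
  rw [decode_some_getD_mid, decode_some_getD_wd _ _ (by omega), wd_getD le_rfl, List.take_length]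
  omega

lemma decode_some_no_desc (s t : List Bool) {j : ℕ} (h : j < s.length) :
    (decode (s, some t)).getD j 0 ≤ (decode (s, some t)).getD (j + 1) 0 := by
  rw [decode_some_getD_wd _ _ (by omega), decode_some_getD_wd _ _ (by omega)]
  exact wd_no_desc s (by rw [wd_length]; omega)

lemma tail_inj {M : ℕ} (hM : 1 ≤ M) {t t' : List Bool} (h : gtail M t = gtail M t') : t = t' := by
  unfold gtail at h
  refine List.map_injective_iff.2 ?_ h
  intro a b hab
  cases a <;> cases b
  · rfl
  · exact absurd hab (by simp; omega)
  · exact absurd hab (by simp; omega)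
  · rfl

lemma wd_ne_decode_some (s s' t' : List Bool) (hs' : 1 ≤ cnt s') :
    wd s ≠ decode (s', some t') := by
  intro h
  have hlen : (wd s).length = s'.length + t'.length + 2 := by
    rw [h, decode_some_length]
  have hnd := wd_no_desc s (j := s'.length) (by omega)
  rw [h] at hnd
  have hd := decode_some_desc s' t' hs'
  omega

lemma decode_some_inj {s s' t t' : List Bool} (hs : 1 ≤ cnt s) (hs' : 1 ≤ cnt s')
    (h : decode (s, some t) = decode (s', some t')) : s = s' ∧ t = t' := by
  have hlen : s.length = s'.length := by
    by_contra hne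
    rcases Nat.lt_or_ge s.length s'.length with hlt | hge
    · have h1 := decode_some_desc s t hs
      have h2 := decode_some_no_desc s' t' (j := s.length) hlt
      rw [h] at h1
      omega
    · have hlt : s'.length < s.length := by omega
      have h1 := decode_some_desc s' t' hs'
      have h2 := decode_some_no_desc s t (j := s'.length) hlt
      rw [← h] at h1
      omega
  have hwd : wd s = wd s' := by
    have h2 := congrArg (List.take (s.length + 1)) h
    have e1 : (decode (s, some t)).take (s.length + 1) = wd s := by
      show (wd s ++ _).take (s.length + 1) = wd s
      rw [← wd_length s, List.take_left]
    have e2 : (decode (s', some t')).take (s.length + 1) = wd s' := by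
      show (wd s' ++ _).take (s.length + 1) = wd s'
      rw [hlen, ← wd_length s', List.take_left]
    rwa [e1, e2] at h2
  have hss : s = s' := wd_inj hwd
  subst hss
  refine ⟨rfl, ?_⟩
  have h2 : (cnt s - 1) :: gtail (cnt s) t = (cnt s - 1) :: gtail (cnt s) t' :=
    List.append_cancel_left (h : wd s ++ _ = wd s ++ _)
  exact tail_inj hs (List.tail_eq_of_cons_eq h2)
def bl (k : ℕ) : Finset (List Bool) := (Finset.univ : Finset (Fin k → Bool)).image List.ofFn

lemma mem_bl {k : ℕ} {s : List Bool} : s ∈ bl k ↔ s.length = k := by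
  constructor
  · intro hx
    rw [bl, Finset.mem_image] at hx
    obtain ⟨f, -, rfl⟩ := hx
    simp
  · intro h
    subst h
    rw [bl, Finset.mem_image]
    exact ⟨s.get, Finset.mem_univ _, List.ofFn_get s⟩

lemma card_bl (k : ℕ) : (bl k).card = 2 ^ k := by
  rw [bl, Finset.card_image_of_injective _ List.ofFn_injective, Finset.card_univ]
  simp

lemma card_bl_filter (j : ℕ) : ((bl j).filter (fun s => 1 ≤ cnt s)).card = 2 ^ j - 1 := by
  classical
  have h := Finset.card_filter_add_card_filter_not
    (s := bl j) (p := fun s => 1 ≤ cnt s)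
  have hneg : (bl j).filter (fun s => ¬ 1 ≤ cnt s) = {List.replicate j false} := by
    ext s
    rw [Finset.mem_filter, Finset.mem_singleton, mem_bl]
    constructor
    · rintro ⟨hlen, hcnt⟩
      refine List.eq_replicate_iff.2 ⟨hlen, ?_⟩
      intro b hb
      cases hbb : b
      · rfl
      · exfalso
        apply hcnt
        have : true ∈ s := by rw [← hbb]; exact hb
        have := List.count_pos_iff.2 this
        unfold cnt
        omega
    · rintro rfl
      refine ⟨by simp, ?_⟩
      have : cnt (List.replicate j false) = 0 := by
        unfold cnt
        rw [List.count_eq_zero]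
        simp
      omega
  rw [hneg] at h
  have hb := card_bl j
  have hpos : 1 ≤ 2 ^ j := Nat.one_le_two_pow
  simp only [Finset.card_singleton] at h
  omega

def Dom (n : ℕ) : Finset (List Bool × Option (List Bool)) :=
  ((bl (n - 1)).image (fun s => (s, (none : Option (List Bool))))) ∪
    (Finset.range (n - 1)).biUnion (fun j =>
      (((bl j).filter (fun s => 1 ≤ cnt s)) ×ˢ bl (n - 2 - j)).image
        (fun p => (p.1, some p.2)))

lemma mem_Dom {n : ℕ} {e : List Bool × Option (List Bool)} :
    e ∈ Dom n ↔ ((e.2 = none ∧ e.1.length = n - 1) ∨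
      (∃ t, e.2 = some t ∧ 1 ≤ cnt e.1 ∧ e.1.length + t.length + 2 = n)) := by
  obtain ⟨s, o⟩ := e
  simp only [Dom, Finset.mem_union, Finset.mem_image, Finset.mem_biUnion, Finset.mem_product,
    Finset.mem_filter, Finset.mem_range, mem_bl, Prod.exists, Prod.mk.injEq]
  constructor
  · rintro (⟨a, ha, rfl, rfl⟩ | ⟨j, hj, a, b, ⟨⟨hb1, hb2⟩, hb3⟩, rfl, rfl⟩)
    · exact Or.inl ⟨rfl, ha⟩
    · exact Or.inr ⟨b, rfl, hb2, by omega⟩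
  · rintro (⟨rfl, hlen⟩ | ⟨t, rfl, hcnt, hsum⟩)
    · exact Or.inl ⟨s, hlen, rfl, rfl⟩
    · exact Or.inr ⟨s.length, by omega, s, t, ⟨⟨rfl, hcnt⟩, by omega⟩, rfl, rfl⟩

lemma sumf (k : ℕ) :
    2 ^ k + ∑ j ∈ Finset.range k, (2 ^ j - 1) * 2 ^ (k - 1 - j) = k * 2 ^ (k - 1) + 1 := by
  induction k with
  | zero => simp
  | succ k ih =>
    have hstep : ∑ j ∈ Finset.range (k + 1), (2 ^ j - 1) * 2 ^ (k + 1 - 1 - j)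
        = 2 * (∑ j ∈ Finset.range k, (2 ^ j - 1) * 2 ^ (k - 1 - j)) + (2 ^ k - 1) := by
      rw [Finset.sum_range_succ]
      congr 1
      · rw [Finset.mul_sum]
        apply Finset.sum_congr rfl
        intro j hj
        rw [Finset.mem_range] at hj
        have : k + 1 - 1 - j = (k - 1 - j) + 1 := by omega
        rw [this, pow_succ]
        ring
      · simp
    rw [hstep]
    have h1 : 1 ≤ 2 ^ k := Nat.one_le_two_pow
    cases k with
    | zero => simp
    | succ k' =>
      simp only [Nat.add_sub_cancel] at ih ⊢
      have hA : 1 ≤ (2 : ℕ) ^ k' := Nat.one_le_two_pow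
      have e1 : (2 : ℕ) ^ (k' + 1) = 2 * 2 ^ k' := by rw [pow_succ]; ring
      have e2 : (2 : ℕ) ^ (k' + 1 + 1) = 2 * (2 * 2 ^ k') := by rw [pow_succ, pow_succ]; ring
      have e3 : (k' + 1 + 1) * 2 ^ (k' + 1) = 2 * ((k' + 1) * 2 ^ k') + 2 * 2 ^ k' := by
        rw [e1]; ring
      omega
lemma mem_piece_len {n j : ℕ} {e : List Bool × Option (List Bool)}
    (he : e ∈ (((bl j).filter (fun s => 1 ≤ cnt s)) ×ˢ bl (n - 2 - j)).image
      (fun p => (p.1, some p.2))) : e.1.length = j := by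
  rw [Finset.mem_image] at he
  obtain ⟨⟨a, b⟩, hab, rfl⟩ := he
  rw [Finset.mem_product, Finset.mem_filter, mem_bl] at hab
  exact hab.1.1

lemma card_Dom {n : ℕ} (hn : 1 ≤ n) : (Dom n).card = (n - 1) * 2 ^ (n - 2) + 1 := by
  classical
  have hinj1 : Function.Injective (fun s : List Bool => (s, (none : Option (List Bool)))) := by
    intro a b h
    simpa using h
  have hinj2 : Function.Injective
      (fun p : List Bool × List Bool => (p.1, some p.2)) := by
    rintro ⟨a, b⟩ ⟨c, d⟩ h
    simpa using h
  have hdisj2 : ∀ x ∈ Finset.range (n - 1), ∀ y ∈ Finset.range (n - 1), x ≠ y →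
      Disjoint
        (Finset.image (fun p => (p.1, some p.2))
          (Finset.filter (fun s => 1 ≤ cnt s) (bl x) ×ˢ bl (n - 2 - x)))
        (Finset.image (fun p => (p.1, some p.2))
          (Finset.filter (fun s => 1 ≤ cnt s) (bl y) ×ˢ bl (n - 2 - y))) := by
    intro j hj k hk hjk
    rw [Finset.disjoint_left]
    intro e hej hek
    exact hjk (by rw [← mem_piece_len hej, ← mem_piece_len hek])
  have hdisj1 : Disjoint (Finset.image (fun s => (s, (none : Option (List Bool)))) (bl (n - 1)))
      ((Finset.range (n - 1)).biUnion fun j =>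
        Finset.image (fun p => (p.1, some p.2))
          (Finset.filter (fun s => 1 ≤ cnt s) (bl j) ×ˢ bl (n - 2 - j))) := by
    rw [Finset.disjoint_left]
    intro e he1 he2
    rw [Finset.mem_image] at he1
    obtain ⟨a, -, rfl⟩ := he1
    rw [Finset.mem_biUnion] at he2
    obtain ⟨j, -, he2⟩ := he2
    rw [Finset.mem_image] at he2
    obtain ⟨⟨c, d⟩, -, h⟩ := he2
    simp at h
  rw [Dom, Finset.card_union_of_disjoint hdisj1, Finset.card_image_of_injective _ hinj1, card_bl,
    Finset.card_biUnion hdisj2]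
  have hc : ∀ j ∈ Finset.range (n - 1),
      ((((bl j).filter (fun s => 1 ≤ cnt s)) ×ˢ bl (n - 2 - j)).image
        (fun p => (p.1, some p.2))).card = (2 ^ j - 1) * 2 ^ (n - 2 - j) := by
    intro j hj
    rw [Finset.card_image_of_injective _ hinj2, Finset.card_product, card_bl_filter, card_bl]
  rw [Finset.sum_congr rfl hc]
  have hs := sumf (n - 1)
  have he : n - 1 - 1 = n - 2 := by omega
  rw [he] at hs
  exact hs

lemma decode_injOn {n : ℕ} : Set.InjOn decode (Dom n : Set (List Bool × Option (List Bool))) := by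
  intro e1 he1 e2 he2 h
  rw [Finset.mem_coe, mem_Dom] at he1 he2
  obtain ⟨s1, o1⟩ := e1
  obtain ⟨s2, o2⟩ := e2
  rcases he1 with ⟨ho1, -⟩ | ⟨t1, ho1, hc1, -⟩ <;> rcases he2 with ⟨ho2, -⟩ | ⟨t2, ho2, hc2, -⟩ <;>
      simp only at ho1 ho2 <;> subst ho1 <;> subst ho2
  · exact congrArg (fun s => (s, none)) (wd_inj h)
  · exact absurd h (wd_ne_decode_some s1 s2 t2 hc2)
  · exact absurd h.symm (wd_ne_decode_some s2 s1 t1 hc1)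
  · obtain ⟨rfl, rfl⟩ := decode_some_inj hc1 hc2 h
    rfl

lemma decode_length {n : ℕ} (hn : 1 ≤ n) {e : List Bool × Option (List Bool)}
    (he : e ∈ Dom n) : (decode e).length = n := by
  obtain ⟨s, o⟩ := e
  rw [mem_Dom] at he
  rcases he with ⟨ho, hlen⟩ | ⟨t, ho, -, hsum⟩
  · simp only at ho hlen
    subst ho
    show (wd s).length = n
    rw [wd_length]
    omega
  · simp only at ho hsum
    subst ho
    rw [decode_some_length]
    omega

end AV

open AV in
theorem stmt_5 (n : ℕ) (hn : 1 ≤ n) :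
    Nat.card {x : List ℕ // x.length = n ∧ IsAscSeq x ∧ Avoids [0, 1, 0, 2] x ∧ Avoids [0, 1, 2, 0] x} = (n - 1) * 2 ^ (n - 2) + 1 := by
  classical
  have key : ∀ x : List ℕ,
      (x.length = n ∧ IsAscSeq x ∧ Avoids [0, 1, 0, 2] x ∧ Avoids [0, 1, 2, 0] x) ↔
        x ∈ (Dom n).image decode := by
    intro x
    constructor
    · rintro ⟨hlen, hA, h1, h2⟩
      rcases complete x hA h1 h2 with ⟨m, hw⟩ | ⟨M, hg⟩
      · obtain ⟨s, hcnt, rfl⟩ := W_surj hw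
        refine Finset.mem_image.2 ⟨(s, none), ?_, rfl⟩
        rw [mem_Dom]
        refine Or.inl ⟨rfl, ?_⟩
        show s.length = n - 1
        rw [wd_length] at hlen
        omega
      · have hM := hg.one_le
        obtain ⟨s, t, hcnt, rfl⟩ := G_surj hg
        refine Finset.mem_image.2 ⟨(s, some t), ?_, rfl⟩
        rw [mem_Dom]
        refine Or.inr ⟨t, rfl, ?_, ?_⟩
        · show 1 ≤ cnt s
          omega
        · show s.length + t.length + 2 = n
          rw [decode_some_length] at hlen
          omega
    · intro hx
      obtain ⟨e, he, rfl⟩ := Finset.mem_image.1 hx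
      refine ⟨decode_length hn he, ?_⟩
      rw [mem_Dom] at he
      obtain ⟨s, o⟩ := e
      rcases he with ⟨ho, -⟩ | ⟨t, ho, hcnt, -⟩ <;> simp only at ho <;> subst ho
      · have hw := W_wd s
        exact ⟨hw.isAscSeq, struct_avoid1 hw.struct, struct_avoid2 hw.struct⟩
      · have hg := G_decode s t hcnt
        obtain ⟨b, hs⟩ := hg.struct
        exact ⟨hg.isAscSeq, struct_avoid1 hs, struct_avoid2 hs⟩
  have e1 : Nat.card {x : List ℕ // x.length = n ∧ IsAscSeq x ∧ Avoids [0, 1, 0, 2] x ∧ Avoids [0, 1, 2, 0] x}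
      = Nat.card {x : List ℕ // x ∈ (Dom n).image decode} :=
    Nat.card_congr (Equiv.subtypeEquivRight key)
  rw [e1, Nat.card_eq_finsetCard, Finset.card_image_of_injOn decode_injOn, card_Dom hn]
end

section
/- For n >= 1, the number of ascent sequences of length n avoiding both patterns 0102 and 0121 equals (3*2^n - n^2 - n - 2)/2. -/
def B (f : ℕ → ℕ) (k : ℕ) : ℕ := ((List.range k).filter (fun j => f j < f (j+1))).length

lemma B_succ (f : ℕ → ℕ) (k : ℕ) :
    B f (k+1) = B f k + if f k < f (k+1) then 1 else 0 := by
  unfold B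
  rw [List.range_succ, List.filter_append]
  simp only [List.length_append]
  congr 1
  by_cases h : f k < f (k+1) <;> simp [h]

lemma getD_map_range (f : ℕ → ℕ) {j i : ℕ} (h : j < i) :
    (((List.range i).map f).getD j 0) = f j := by
  rw [List.getD_eq_getElem _ _ (by simp [h])]
  simp

lemma take_map_range (f : ℕ → ℕ) {i n : ℕ} (h : i ≤ n) :
    ((List.range n).map f).take i = (List.range i).map f := by
  rw [← List.map_take]
  congr 1
  rw [List.take_range]
  congr 1
  omega

lemma asc_map_range (f : ℕ → ℕ) (i : ℕ) :
    asc ((List.range i).map f) = B f (i-1) := by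
  unfold asc B
  simp only [List.length_map, List.length_range]
  apply congrArg
  apply List.filter_congr
  intro j hj
  simp only [List.mem_range] at hj
  have h1 : j < i := by omega
  have h2 : j + 1 < i := by omega
  rw [getD_map_range f h1, getD_map_range f h2]

lemma B_le (f : ℕ → ℕ) (h0 : f 0 = 0) :
    ∀ k, (∀ j, j < k → f j ≤ f (j+1)) → B f k ≤ f k := by
  intro k
  induction k with
  | zero => intro _; simp [B, h0]
  | succ k ih =>
    intro h
    rw [B_succ]
    have hk : B f k ≤ f k := ih (fun j hj => h j (by omega))
    have := h k (by omega)
    split <;> omega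

lemma le_B (f : ℕ → ℕ) (h0 : f 0 = 0) :
    ∀ k, (∀ j, j < k → f (j+1) ≤ f j + 1) → f k ≤ B f k := by
  intro k
  induction k with
  | zero => intro _; simp [B, h0]
  | succ k ih =>
    intro h
    rw [B_succ]
    have hk : f k ≤ B f k := ih (fun j hj => h j (by omega))
    have := h k (by omega)
    split <;> omega

lemma exists_val (f : ℕ → ℕ) (h0 : f 0 = 0) :
    ∀ i, (∀ j, j < i → f (j+1) ≤ f j + 1) → ∀ v, v ≤ f i → ∃ j, j ≤ i ∧ f j = v := by
  intro i
  induction i with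
  | zero => intro _ v hv; exact ⟨0, le_refl 0, by omega⟩
  | succ i ih =>
    intro h v hv
    by_cases hc : v ≤ f i
    · obtain ⟨j, hj, hfj⟩ := ih (fun j hj => h j (by omega)) v hc
      exact ⟨j, by omega, hfj⟩
    · have := h i (by omega)
      exact ⟨i+1, le_refl _, by omega⟩

lemma getD_eq_get (x : List ℕ) (a : Fin x.length) : x.getD a.val 0 = x.get a := by
  rw [List.getD_eq_getElem _ _ a.isLt]; simp [List.get_eq_getElem]

lemma contains_of_indices (p x : List ℕ) (hp : p.length = 4)
    (i j k l : ℕ) (hij : i < j) (hjk : j < k) (hkl : k < l) (hl : l < x.length)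
    (hvals : ∀ a b, a < 4 → b < 4 →
      ([x.getD i 0, x.getD j 0, x.getD k 0, x.getD l 0].getD a 0 <
       [x.getD i 0, x.getD j 0, x.getD k 0, x.getD l 0].getD b 0 ↔ p.getD a 0 < p.getD b 0)) :
    Contains p x := by
  have hi : i < x.length := by omega
  have hj : j < x.length := by omega
  have hk : k < x.length := by omega
  refine ⟨[x.getD i 0, x.getD j 0, x.getD k 0, x.getD l 0], ?_, by simp [hp], ?_⟩
  · have hpw : ([⟨i, hi⟩, ⟨j, hj⟩, ⟨k, hk⟩, ⟨l, hl⟩] : List (Fin x.length)).Pairwise (· < ·) := by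
      refine List.Pairwise.cons ?_ (List.Pairwise.cons ?_ (List.Pairwise.cons ?_
        (List.pairwise_singleton _ _)))
      · rintro a' ha'
        simp only [List.mem_cons, List.mem_singleton, List.not_mem_nil, or_false] at ha'
        rcases ha' with rfl | rfl | rfl <;> exact Fin.mk_lt_mk.mpr (by omega)
      · rintro a' ha'
        simp only [List.mem_cons, List.mem_singleton, List.not_mem_nil, or_false] at ha'
        rcases ha' with rfl | rfl <;> exact Fin.mk_lt_mk.mpr (by omega)
      · rintro a' ha'
        simp only [List.mem_singleton, List.not_mem_nil, or_false] at ha'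
        rcases ha' with rfl; exact Fin.mk_lt_mk.mpr (by omega)
    have hsub := List.map_getElem_sublist hpw
    simp only [List.map_cons, List.map_nil, Fin.getElem_fin] at hsub
    have e1 := getD_eq_get x ⟨i, hi⟩
    have e2 := getD_eq_get x ⟨j, hj⟩
    have e3 := getD_eq_get x ⟨k, hk⟩
    have e4 := getD_eq_get x ⟨l, hl⟩
    simp only [e1, e2, e3, e4, List.get_eq_getElem]
    exact hsub
  · rw [hp]; exact hvals

lemma indices_of_contains (p x : List ℕ) (hp : p.length = 4) (h : Contains p x) :
    ∃ i j k l : ℕ, i < j ∧ j < k ∧ k < l ∧ l < x.length ∧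
      ∀ a b, a < 4 → b < 4 →
      ([x.getD i 0, x.getD j 0, x.getD k 0, x.getD l 0].getD a 0 <
       [x.getD i 0, x.getD j 0, x.getD k 0, x.getD l 0].getD b 0 ↔ p.getD a 0 < p.getD b 0) := by
  obtain ⟨y, hsub, hlen, hcond⟩ := h
  obtain ⟨is, hy, hpw⟩ := List.sublist_eq_map_getElem hsub
  rw [hp] at hlen hcond
  have hislen : is.length = 4 := by rw [hy] at hlen; simpa using hlen
  match is, hislen, hy, hpw with
  | [a, b, c, d], _, hy, hpw =>
    simp only [List.pairwise_cons, List.mem_cons, List.mem_singleton, List.not_mem_nil] at hpw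
    have hab : a < b := hpw.1 b (Or.inl rfl)
    have hbc : b < c := hpw.2.1 c (Or.inl rfl)
    have hcd : c < d := hpw.2.2.1 d (Or.inl rfl)
    refine ⟨a.val, b.val, c.val, d.val, hab, hbc, hcd, d.isLt, ?_⟩
    intro a' b' ha hb
    rw [hy] at hcond
    simp only [List.map_cons, List.map_nil, Fin.getElem_fin] at hcond
    simp only [getD_eq_get, List.get_eq_getElem]
    exact hcond a' b' ha hb

lemma contains_0102 (x : List ℕ) (i j k l : ℕ)
    (hij : i < j) (hjk : j < k) (hkl : k < l) (hl : l < x.length)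
    (v1 : x.getD i 0 < x.getD j 0) (v2 : x.getD k 0 = x.getD i 0)
    (v3 : x.getD j 0 < x.getD l 0) : Contains [0,1,0,2] x := by
  apply contains_of_indices _ x (by simp) i j k l hij hjk hkl hl
  set e0 := x.getD i 0 with he0
  set e1 := x.getD j 0 with he1
  set e2 := x.getD k 0 with he2
  set e3 := x.getD l 0 with he3
  intro a b ha hb
  interval_cases a <;> interval_cases b <;> simp [List.getD] <;> omega

lemma contains_0121 (x : List ℕ) (i j k l : ℕ)
    (hij : i < j) (hjk : j < k) (hkl : k < l) (hl : l < x.length)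
    (v1 : x.getD i 0 < x.getD j 0) (v2 : x.getD j 0 < x.getD k 0)
    (v3 : x.getD l 0 = x.getD j 0) : Contains [0,1,2,1] x := by
  apply contains_of_indices _ x (by simp) i j k l hij hjk hkl hl
  set e0 := x.getD i 0 with he0
  set e1 := x.getD j 0 with he1
  set e2 := x.getD k 0 with he2
  set e3 := x.getD l 0 with he3
  intro a b ha hb
  interval_cases a <;> interval_cases b <;> simp [List.getD] <;> omega

lemma spec_0102 (x : List ℕ) (h : Contains [0,1,0,2] x) :
    ∃ i j k l : ℕ, i < j ∧ j < k ∧ k < l ∧ l < x.length ∧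
      x.getD i 0 < x.getD j 0 ∧ x.getD k 0 = x.getD i 0 ∧ x.getD j 0 < x.getD l 0 := by
  obtain ⟨i, j, k, l, hij, hjk, hkl, hl, hv⟩ := indices_of_contains _ x (by simp) h
  refine ⟨i, j, k, l, hij, hjk, hkl, hl, ?_, ?_, ?_⟩
  all_goals
    set e0 := x.getD i 0 with he0
    set e1 := x.getD j 0 with he1
    set e2 := x.getD k 0 with he2
    set e3 := x.getD l 0 with he3
  · have := hv 0 1 (by omega) (by omega); simp [List.getD] at this; omega
  · have h1 := hv 2 0 (by omega) (by omega); have h2 := hv 0 2 (by omega) (by omega)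
    simp [List.getD] at h1 h2; omega
  · have := hv 1 3 (by omega) (by omega); simp [List.getD] at this; omega

lemma spec_0121 (x : List ℕ) (h : Contains [0,1,2,1] x) :
    ∃ i j k l : ℕ, i < j ∧ j < k ∧ k < l ∧ l < x.length ∧
      x.getD i 0 < x.getD j 0 ∧ x.getD j 0 < x.getD k 0 ∧ x.getD l 0 = x.getD j 0 := by
  obtain ⟨i, j, k, l, hij, hjk, hkl, hl, hv⟩ := indices_of_contains _ x (by simp) h
  refine ⟨i, j, k, l, hij, hjk, hkl, hl, ?_, ?_, ?_⟩
  all_goals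
    set e0 := x.getD i 0 with he0
    set e1 := x.getD j 0 with he1
    set e2 := x.getD k 0 with he2
    set e3 := x.getD l 0 with he3
  · have := hv 0 1 (by omega) (by omega); simp [List.getD] at this; omega
  · have := hv 1 2 (by omega) (by omega); simp [List.getD] at this; omega
  · have h1 := hv 1 3 (by omega) (by omega); have h2 := hv 3 1 (by omega) (by omega)
    simp [List.getD] at h1 h2; omega

def cnt (S : Finset ℕ) (i : ℕ) : ℕ := (S.filter (· ≤ i)).card

def stairF (S : Finset ℕ) (i : ℕ) : ℕ := if i < S.sup id then cnt S i else 0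

def binF (S : Finset ℕ) (i : ℕ) : ℕ := if i ∈ S then 1 else 0

def binW (n : ℕ) (S : Finset ℕ) : List ℕ := (List.range n).map (binF S)

def stairW (n : ℕ) (S : Finset ℕ) : List ℕ := (List.range n).map (stairF S)

lemma cnt_mono (S : Finset ℕ) {i j : ℕ} (h : i ≤ j) : cnt S i ≤ cnt S j := by
  apply Finset.card_le_card
  intro s hs
  simp only [Finset.mem_filter] at hs ⊢
  exact ⟨hs.1, le_trans hs.2 h⟩

lemma cnt_succ (S : Finset ℕ) (i : ℕ) :
    cnt S (i+1) = cnt S i + if (i+1) ∈ S then 1 else 0 := by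
  unfold cnt
  have : S.filter (· ≤ i+1) = (S.filter (· ≤ i)) ∪ (S.filter (· = i+1)) := by
    ext s
    simp only [Finset.mem_filter, Finset.mem_union]
    constructor
    · rintro ⟨hs, hle⟩
      rcases Nat.lt_or_ge s (i+1) with h'|h'
      · exact Or.inl ⟨hs, by omega⟩
      · exact Or.inr ⟨hs, by omega⟩
    · rintro (⟨hs, hle⟩|⟨hs, he⟩) <;> exact ⟨hs, by omega⟩
  rw [this, Finset.card_union_of_disjoint]
  · congr 1
    by_cases h : (i+1) ∈ S
    · rw [if_pos h]
      have : S.filter (· = i+1) = {i+1} := by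
        ext s; simp only [Finset.mem_filter, Finset.mem_singleton]
        exact ⟨fun ⟨_, h2⟩ => h2, fun h2 => ⟨h2 ▸ h, h2⟩⟩
      rw [this, Finset.card_singleton]
    · rw [if_neg h]
      have : S.filter (· = i+1) = ∅ := by
        ext s; simp only [Finset.mem_filter, Finset.notMem_empty, iff_false]
        rintro ⟨hs, rfl⟩; exact h hs
      rw [this, Finset.card_empty]
  · rw [Finset.disjoint_left]
    intro s hs hs'
    simp only [Finset.mem_filter] at hs hs'
    omega

lemma sup_mem_of_nonempty {S : Finset ℕ} (h : S.Nonempty) : S.sup id ∈ S := by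
  have := Finset.max'_mem S h
  have heq : S.max' h = S.sup id := by
    rw [Finset.max'_eq_sup', Finset.sup'_eq_sup]
  rwa [heq] at this

lemma cnt_zero {n : ℕ} {S : Finset ℕ} (hS : S ⊆ Finset.Icc 1 n) : cnt S 0 = 0 := by
  unfold cnt
  rw [Finset.card_eq_zero]
  ext s
  simp only [Finset.mem_filter, Finset.notMem_empty, iff_false]
  rintro ⟨hs, hle⟩
  have := hS hs
  simp only [Finset.mem_Icc] at this
  omega

lemma stairF_zero {n : ℕ} {S : Finset ℕ} (hS : S ⊆ Finset.Icc 1 n) : stairF S 0 = 0 := by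
  unfold stairF
  split
  · exact cnt_zero hS
  · rfl

lemma stairF_step {S : Finset ℕ} {j : ℕ} (h : j + 1 < S.sup id) :
    stairF S (j+1) ≤ stairF S j + 1 := by
  unfold stairF
  rw [if_pos h, if_pos (by omega)]
  rw [cnt_succ]
  split <;> omega

lemma getD_stairW {n : ℕ} (S : Finset ℕ) {i : ℕ} (h : i < n) :
    (stairW n S).getD i 0 = stairF S i := getD_map_range _ h

lemma getD_binW {n : ℕ} (S : Finset ℕ) {i : ℕ} (h : i < n) :
    (binW n S).getD i 0 = binF S i := getD_map_range _ h

lemma stairW_good {n : ℕ} (hn : 1 ≤ n) {S : Finset ℕ} (hS : S ⊆ Finset.Icc 1 n)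
    (hcard : 3 ≤ S.card) :
    (stairW n S).length = n ∧ IsAscSeq (stairW n S) ∧
      Avoids [0,1,0,2] (stairW n S) ∧ Avoids [0,1,2,1] (stairW n S) := by
  have hlen : (stairW n S).length = n := by simp [stairW]
  have hnonzero : ∀ i, stairF S i ≠ 0 → i < S.sup id ∧ stairF S i = cnt S i := by
    intro i h
    unfold stairF at h ⊢
    by_cases hc : i < S.sup id
    · exact ⟨hc, if_pos hc⟩
    · rw [if_neg hc] at h; omega
  refine ⟨hlen, ⟨?_, ?_, ?_⟩, ?_, ?_⟩
  · intro h; rw [h] at hlen; simp at hlen; omega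
  · rw [getD_stairW S (by omega)]
    exact stairF_zero hS
  · -- ascent condition
    intro i h1 hi
    rw [hlen] at hi
    rw [getD_stairW S hi]
    unfold stairW
    rw [take_map_range _ (by omega), asc_map_range]
    by_cases hc : i < S.sup id
    · have hstep : ∀ j, j < i - 1 → stairF S (j+1) ≤ stairF S j + 1 := by
        intro j hj
        exact stairF_step (by omega)
      have h0 : stairF S 0 = 0 := stairF_zero hS
      have hB : stairF S (i-1) ≤ B (stairF S) (i-1) := le_B _ h0 _ hstep
      have hlt : stairF S i ≤ stairF S (i-1) + 1 := by
        unfold stairF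
        rw [if_pos hc, if_pos (by omega)]
        have : i - 1 + 1 = i := by omega
        calc cnt S i = cnt S (i-1+1) := by rw [this]
          _ ≤ cnt S (i-1) + 1 := by rw [cnt_succ]; split <;> omega
      omega
    · unfold stairF
      rw [if_neg hc]
      omega
  · -- avoids 0102
    intro hcont
    obtain ⟨i, j, k, l, hij, hjk, hkl, hl, v1, v2, v3⟩ := spec_0102 _ hcont
    rw [hlen] at hl
    rw [getD_stairW S (by omega), getD_stairW S (by omega)] at v1
    rw [getD_stairW S (by omega), getD_stairW S (by omega)] at v2
    rw [getD_stairW S (by omega), getD_stairW S hl] at v3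
    have hlpos : stairF S l ≠ 0 := by omega
    obtain ⟨hlsup, _⟩ := hnonzero l hlpos
    have hjsup : j < S.sup id := by omega
    have hksup : k < S.sup id := by omega
    have hj : stairF S j = cnt S j := by unfold stairF; rw [if_pos hjsup]
    have hk : stairF S k = cnt S k := by unfold stairF; rw [if_pos hksup]
    have := cnt_mono S (le_of_lt hjk)
    omega
  · -- avoids 0121
    intro hcont
    obtain ⟨i, j, k, l, hij, hjk, hkl, hl, v1, v2, v3⟩ := spec_0121 _ hcont
    rw [hlen] at hl
    rw [getD_stairW S (by omega), getD_stairW S (by omega)] at v1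
    rw [getD_stairW S (by omega), getD_stairW S (by omega)] at v2
    rw [getD_stairW S hl, getD_stairW S (by omega)] at v3
    have hlpos : stairF S l ≠ 0 := by omega
    obtain ⟨hlsup, hl2⟩ := hnonzero l hlpos
    have hksup : k < S.sup id := by omega
    have hk : stairF S k = cnt S k := by unfold stairF; rw [if_pos hksup]
    have := cnt_mono S (le_of_lt hkl)
    omega

lemma binW_good {n : ℕ} (hn : 1 ≤ n) {S : Finset ℕ} (hS : S ⊆ Finset.Icc 1 (n-1)) :
    (binW n S).length = n ∧ IsAscSeq (binW n S) ∧
      Avoids [0,1,0,2] (binW n S) ∧ Avoids [0,1,2,1] (binW n S) := by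
  have hlen : (binW n S).length = n := by simp [binW]
  have hb : ∀ i, binF S i ≤ 1 := by intro i; unfold binF; split <;> omega
  refine ⟨hlen, ⟨?_, ?_, ?_⟩, ?_, ?_⟩
  · intro h; rw [h] at hlen; simp at hlen; omega
  · rw [getD_binW S (by omega)]
    unfold binF
    rw [if_neg]
    intro h
    have := hS h
    simp at this
  · intro i h1 hi
    rw [hlen] at hi
    rw [getD_binW S hi]
    have := hb i
    omega
  · intro hcont
    obtain ⟨i, j, k, l, hij, hjk, hkl, hl, v1, v2, v3⟩ := spec_0102 _ hcont
    rw [hlen] at hl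
    rw [getD_binW S (by omega), getD_binW S (by omega)] at v1
    rw [getD_binW S (by omega), getD_binW S hl] at v3
    have := hb j
    have := hb l
    have := hb i
    omega
  · intro hcont
    obtain ⟨i, j, k, l, hij, hjk, hkl, hl, v1, v2, v3⟩ := spec_0121 _ hcont
    rw [hlen] at hl
    rw [getD_binW S (by omega), getD_binW S (by omega)] at v1
    rw [getD_binW S (by omega), getD_binW S (by omega)] at v2
    have := hb i
    have := hb j
    have := hb k
    omega

lemma mono_of (f : ℕ → ℕ) (m : ℕ) (h : ∀ j, j + 1 < m → f j ≤ f (j+1)) :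
    ∀ i j, i ≤ j → j < m → f i ≤ f j := by
  intro i j hij hj
  induction j with
  | zero => have : i = 0 := by omega
            rw [this]
  | succ j ih =>
    rcases Nat.lt_or_ge i (j+1) with h'|h'
    · exact le_trans (ih (by omega) (by omega)) (h j hj)
    · have : i = j + 1 := by omega
      rw [this]

lemma eq_map_getD (x : List ℕ) : x = (List.range x.length).map (fun i => x.getD i 0) := by
  apply List.ext_get
  · simp
  · intro i h1 h2
    simp only [List.get_eq_getElem, List.getElem_map, List.getElem_range]
    rw [List.getD_eq_getElem x 0 h1]

lemma assemble (f : ℕ → ℕ) (n m : ℕ) (hm1 : 1 ≤ m) (hmn : m ≤ n)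
    (ha : f 0 = 0)
    (hb : ∀ j, j + 1 < m → f j ≤ f (j+1))
    (hc : ∀ j, j + 1 < m → f (j+1) ≤ f j + 1)
    (hd : ∀ j, m ≤ j → j < n → f j = 0)
    (he : 2 ≤ f (m-1)) :
    ∃ S : Finset ℕ, S ⊆ Finset.Icc 1 n ∧ 3 ≤ S.card ∧
      (List.range n).map f = stairW n S := by
  set S : Finset ℕ := (Finset.Icc 1 n).filter (fun s => s = m ∨ (s < m ∧ f (s-1) < f s)) with hSdef
  have hsub : S ⊆ Finset.Icc 1 n := Finset.filter_subset _ _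
  have hmS : m ∈ S := by
    simp only [hSdef, Finset.mem_filter, Finset.mem_Icc]
    exact ⟨⟨hm1, hmn⟩, Or.inl trivial⟩
  have hSle : ∀ s ∈ S, s ≤ m := by
    intro s hs
    simp only [hSdef, Finset.mem_filter] at hs
    rcases hs.2 with rfl|⟨h', _⟩ <;> omega
  have hSge : ∀ s ∈ S, 1 ≤ s := by
    intro s hs
    simp only [hSdef, Finset.mem_filter, Finset.mem_Icc] at hs
    exact hs.1.1
  have hsup : S.sup id = m := by
    apply le_antisymm
    · exact Finset.sup_le (fun s hs => hSle s hs)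
    · exact Finset.le_sup (f := id) hmS
  have hmemS : ∀ s, s < m → (s ∈ S ↔ (1 ≤ s ∧ f (s-1) < f s)) := by
    intro s hs
    simp only [hSdef, Finset.mem_filter, Finset.mem_Icc]
    constructor
    · rintro ⟨⟨h1, h2⟩, (rfl|⟨_, h3⟩)⟩
      · omega
      · exact ⟨h1, h3⟩
    · rintro ⟨h1, h3⟩
      exact ⟨⟨h1, by omega⟩, Or.inr ⟨hs, h3⟩⟩
  have hcnt : ∀ i, i < m → cnt S i = f i := by
    intro i
    induction i with
    | zero => intro _; rw [cnt_zero hsub, ha]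
    | succ i ih =>
      intro hi
      rw [cnt_succ, ih (by omega)]
      have hstep := hc i (by omega)
      have hmono := hb i (by omega)
      by_cases hs : (i+1) ∈ S
      · rw [if_pos hs]
        have := (hmemS (i+1) hi).mp hs
        simp only [Nat.add_sub_cancel] at this
        omega
      · rw [if_neg hs]
        have := (hmemS (i+1) hi)
        have h2 : ¬(1 ≤ i + 1 ∧ f i < f (i+1)) := fun hcon => hs (this.mpr hcon)
        omega
  have hcard : S.card = f (m-1) + 1 := by
    have hins : S = insert m (S.filter (· ≤ m - 1)) := by
      ext s
      simp only [Finset.mem_insert, Finset.mem_filter]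
      constructor
      · intro hs
        rcases Nat.eq_or_lt_of_le (hSle s hs) with h'|h'
        · exact Or.inl h'
        · exact Or.inr ⟨hs, by omega⟩
      · rintro (rfl|⟨hs, _⟩)
        · exact hmS
        · exact hs
    rw [hins, Finset.card_insert_of_notMem]
    · have : (S.filter (· ≤ m - 1)).card = cnt S (m-1) := rfl
      rw [this, hcnt (m-1) (by omega)]
    · intro hcon
      simp only [Finset.mem_filter] at hcon
      omega
  refine ⟨S, hsub, by omega, ?_⟩
  unfold stairW
  apply List.map_congr_left
  intro i hi
  simp only [List.mem_range] at hi
  unfold stairF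
  rw [hsup]
  by_cases hc' : i < m
  · rw [if_pos hc', hcnt i hc']
  · rw [if_neg hc', hd i (by omega) hi]

lemma structure_thm (n : ℕ) (hn : 1 ≤ n) (x : List ℕ) (hx : x.length = n)
    (hseq : IsAscSeq x) (h1 : Avoids [0,1,0,2] x) (h2 : Avoids [0,1,2,1] x) :
    (∃ S : Finset ℕ, S ⊆ Finset.Icc 1 (n-1) ∧ x = binW n S) ∨
    (∃ S : Finset ℕ, S ⊆ Finset.Icc 1 n ∧ 3 ≤ S.card ∧ x = stairW n S) := by
  set f : ℕ → ℕ := fun i => x.getD i 0 with hf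
  obtain ⟨hne, h0, hascseq⟩ := hseq
  have hxmap : x = (List.range n).map f := by
    conv_lhs => rw [eq_map_getD x]
    rw [hx]
  -- ascent inequality in terms of B
  have hascB : ∀ i, 1 ≤ i → i < n → f i ≤ 1 + B f (i-1) := by
    intro i hi1 hi2
    have h' := hascseq i hi1 (by omega)
    have heq : x.take i = (List.range i).map f := by
      rw [hxmap, take_map_range f (by omega)]
    rw [heq, asc_map_range] at h'
    exact h' 
  have hf0 : f 0 = 0 := h0
  by_cases hbig : ∃ p, p < n ∧ 2 ≤ f p
  · -- staircase case
    right
    obtain ⟨p, hp, hp2⟩ := hbig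
    by_cases hdesc : ∃ i, i + 1 < n ∧ f (i+1) < f i
    · -- descent exists
      have hdec : DecidablePred (fun i => i + 1 < n ∧ f (i+1) < f i) := by
        intro i; exact instDecidableAnd
      set d := Nat.find hdesc with hd
      have hdn : d + 1 < n := (Nat.find_spec hdesc).1
      have hdlt : f (d + 1) < f d := (Nat.find_spec hdesc).2
      have hmin : ∀ i, i < d → ¬(i + 1 < n ∧ f (i+1) < f i) := fun i hi => Nat.find_min hdesc hi
      have hmono : ∀ j, j + 1 < d + 1 → f j ≤ f (j+1) := by
        intro j hj
        have := hmin j (by omega)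
        push_neg at this
        rcases Nat.lt_or_ge (j+1) n with h'|h'
        · exact this h'
        · omega
      have hmonot := mono_of f (d+1) hmono
      have hstep : ∀ j, j + 1 < d + 1 → f (j+1) ≤ f j + 1 := by
        intro j hj
        have hB := hascB (j+1) (by omega) (by omega)
        simp only [Nat.add_sub_cancel] at hB
        have hBle : B f j ≤ f j := B_le f hf0 j (fun i hi => hmono i (by omega))
        omega
      -- value existence in prefix
      have hex : ∀ v, v ≤ f d → ∃ j, j ≤ d ∧ f j = v :=
        exists_val f hf0 d (fun j hj => hstep j (by omega))
      -- f d ≥ 1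
      have hfd1 : 1 ≤ f d := by omega
      -- f d ≥ 2
      have hfd2 : 2 ≤ f d := by
        by_contra hcon
        have hfd : f d = 1 := by omega
        have hfd1' : f (d+1) = 0 := by omega
        obtain ⟨i1, hi1d, hi1⟩ := hex 1 (by omega)
        have hi1pos : 1 ≤ i1 := by
          rcases Nat.eq_zero_or_pos i1 with rfl|h'
          · rw [hf0] at hi1; omega
          · omega
        -- where is p?
        have hpd : d + 1 < p := by
          rcases Nat.lt_or_ge p (d+1) with h'|h'
          · have := hmonot p d (by omega) (by omega); omega
          · rcases Nat.eq_or_lt_of_le h' with h''|h''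
            · rw [h''] at hfd1'; omega
            · omega
        exact h1 (contains_0102 x 0 i1 (d+1) p (by omega) (by omega) (by omega) (by omega)
          (by show f 0 < f i1; omega) (by show f (d+1) = f 0; omega) (by show f i1 < f p; omega))
      obtain ⟨i1, hi1d, hi1⟩ := hex 1 (by omega)
      have hi1pos : 1 ≤ i1 := by
        rcases Nat.eq_zero_or_pos i1 with rfl|h'
        · rw [hf0] at hi1; omega
        · omega
      have hi1d' : i1 < d := by
        rcases Nat.eq_or_lt_of_le hi1d with h'|h'
        · rw [h'] at hi1; omega
        · exact h'
      -- f (d+1) = 0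
      have hfd10 : f (d+1) = 0 := by
        by_contra hcon
        have hv : 1 ≤ f (d+1) := by omega
        have hvlt : f (d+1) < f d := hdlt
        obtain ⟨jv, hjvd, hjv⟩ := hex (f (d+1)) (by omega)
        have hjvpos : 1 ≤ jv := by
          rcases Nat.eq_zero_or_pos jv with rfl|h'
          · rw [hf0] at hjv; omega
          · omega
        have hjvlt : jv < d := by
          rcases Nat.eq_or_lt_of_le hjvd with h'|h'
          · rw [h'] at hjv; omega
          · exact h'
        exact h2 (contains_0121 x 0 jv d (d+1) (by omega) (by omega) (by omega) (by omega)
          (by show f 0 < f jv; omega) (by show f jv < f d; omega) (by show f (d+1) = f jv; omega))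
      -- tail zeros
      have htail : ∀ k, d + 1 ≤ k → k < n → f k = 0 := by
        intro k hk1 hk2
        by_contra hcon
        have hk1' : 1 ≤ f k := by omega
        rcases Nat.eq_or_lt_of_le hk1' with h'|h'
        · -- f k = 1 : use 0121 with 0 i1 d k
          have hkd : d < k := by
            rcases Nat.eq_or_lt_of_le hk1 with h''|h''
            · rw [← h''] at hcon; omega
            · omega
          exact h2 (contains_0121 x 0 i1 d k (by omega) (by omega) (by omega) (by omega)
            (by show f 0 < f i1; omega) (by show f i1 < f d; omega) (by show f k = f i1; omega))
        · -- f k ≥ 2 : use 0102 with 0 i1 (d+1) k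
          have hkd : d + 1 < k := by
            rcases Nat.eq_or_lt_of_le hk1 with h''|h''
            · rw [← h''] at hcon; omega
            · omega
          exact h1 (contains_0102 x 0 i1 (d+1) k (by omega) (by omega) (by omega) (by omega)
            (by show f 0 < f i1; omega) (by show f (d+1) = f 0; omega) (by show f i1 < f k; omega))
      obtain ⟨S, hS1, hS2, hS3⟩ := assemble f n (d+1) (by omega) (by omega) hf0 hmono hstep
        (fun j hj1 hj2 => htail j hj1 hj2) (by simpa using hfd2)
      exact ⟨S, hS1, hS2, by rw [hxmap]; exact hS3⟩
    · -- no descent: nondecreasing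
      push_neg at hdesc
      have hmono : ∀ j, j + 1 < n → f j ≤ f (j+1) := fun j hj => hdesc j hj
      have hstep : ∀ j, j + 1 < n → f (j+1) ≤ f j + 1 := by
        intro j hj
        have hB := hascB (j+1) (by omega) (by omega)
        simp only [Nat.add_sub_cancel] at hB
        have hBle : B f j ≤ f j := B_le f hf0 j (fun i hi => hmono i (by omega))
        omega
      have hfn2 : 2 ≤ f (n-1) := by
        have := mono_of f n hmono p (n-1) (by omega) (by omega)
        omega
      obtain ⟨S, hS1, hS2, hS3⟩ := assemble f n n hn (le_refl n) hf0 hmono hstep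
        (fun j hj1 hj2 => by omega) hfn2
      exact ⟨S, hS1, hS2, by rw [hxmap]; exact hS3⟩
  · -- binary case
    left
    push_neg at hbig
    have hble : ∀ p, p < n → f p ≤ 1 := fun p hp => by have := hbig p hp; omega
    refine ⟨(Finset.Icc 1 (n-1)).filter (fun i => f i = 1), Finset.filter_subset _ _, ?_⟩
    rw [hxmap]
    unfold binW
    apply List.map_congr_left
    intro i hi
    simp only [List.mem_range] at hi
    unfold binF
    by_cases hc : i ∈ (Finset.Icc 1 (n-1)).filter (fun i => f i = 1)
    · rw [if_pos hc]
      simp only [Finset.mem_filter] at hc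
      omega
    · rw [if_neg hc]
      simp only [Finset.mem_filter, Finset.mem_Icc] at hc
      push_neg at hc
      rcases Nat.eq_zero_or_pos i with rfl|h'
      · omega
      · have := hble i hi
        have := hc ⟨h', by omega⟩
        omega

lemma sup_eq_max' {S : Finset ℕ} (h : S.Nonempty) : S.sup id = S.max' h := by
  rw [Finset.max'_eq_sup', Finset.sup'_eq_sup]

lemma stair_facts {n : ℕ} {S : Finset ℕ} (hS : S ⊆ Finset.Icc 1 n) (hc : 3 ≤ S.card) :
    ∃ m0 M : ℕ, m0 ∈ S ∧ M ∈ S ∧ m0 < M ∧ 1 ≤ m0 ∧ M ≤ n ∧ S.sup id = M ∧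
      (∀ i, stairF S i ≠ 0 ↔ (m0 ≤ i ∧ i < M)) := by
  have hne : S.Nonempty := Finset.card_pos.mp (by omega)
  refine ⟨S.min' hne, S.max' hne, S.min'_mem hne, S.max'_mem hne,
    S.min'_lt_max'_of_card (by omega), ?_, ?_, (sup_eq_max' hne), ?_⟩
  · have := hS (S.min'_mem hne); simp only [Finset.mem_Icc] at this; omega
  · have := hS (S.max'_mem hne); simp only [Finset.mem_Icc] at this; omega
  · intro i
    unfold stairF
    rw [sup_eq_max' hne]
    by_cases hi : i < S.max' hne
    · rw [if_pos hi]
      constructor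
      · intro hcnt
        refine ⟨?_, hi⟩
        have : (S.filter (· ≤ i)).Nonempty := by
          rw [← Finset.card_pos]
          unfold cnt at hcnt
          omega
        obtain ⟨s, hs⟩ := this
        simp only [Finset.mem_filter] at hs
        exact le_trans (S.min'_le s hs.1) hs.2
      · rintro ⟨hm0, _⟩
        have : S.min' hne ∈ S.filter (· ≤ i) := by
          simp only [Finset.mem_filter]
          exact ⟨S.min'_mem hne, hm0⟩
        have := Finset.card_pos.mpr ⟨_, this⟩
        unfold cnt
        omega
    · rw [if_neg hi]
      simp only [ne_eq, not_true_eq_false, false_iff, not_and]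
      intro _
      omega

lemma stair_mem_imp {n : ℕ} {S S' : Finset ℕ} (hS : S ⊆ Finset.Icc 1 n) (hc : 3 ≤ S.card)
    (hS' : S' ⊆ Finset.Icc 1 n) (hc' : 3 ≤ S'.card)
    (hfun : ∀ i, i < n → stairF S i = stairF S' i)
    {M : ℕ} (hMS : M ∈ S') (hsup : S.sup id = M) (hsup' : S'.sup id = M) (hMn : M ≤ n) :
    ∀ s, s ∈ S → s ∈ S' := by
  intro s hs
  have hs1 : 1 ≤ s := by have := hS hs; simp only [Finset.mem_Icc] at this; omega
  have hsM : s ≤ M := by rw [← hsup]; exact Finset.le_sup (f := id) hs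
  rcases Nat.eq_or_lt_of_le hsM with rfl|hlt
  · exact hMS
  · -- s < M : detect via rise
    have hs1n : s < n := by omega
    have hs11 : s - 1 + 1 = s := by omega
    have hcnt : cnt S s = cnt S (s-1) + (if s ∈ S then 1 else 0) := by
      have hkey := cnt_succ S (s-1)
      rwa [hs11] at hkey
    rw [if_pos hs] at hcnt
    have hrise : stairF S (s-1) < stairF S s := by
      unfold stairF
      rw [hsup, if_pos (by omega), if_pos (by omega)]
      omega
    rw [hfun (s-1) (by omega), hfun s (by omega)] at hrise
    have hltM' : s < S'.sup id := by
      by_contra hcon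
      unfold stairF at hrise
      rw [if_neg hcon] at hrise
      omega
    unfold stairF at hrise
    rw [if_pos hltM', if_pos (by rw [hsup'] at hltM' ⊢; omega)] at hrise
    have hkey := cnt_succ S' (s-1)
    rw [hs11] at hkey
    by_contra hcon
    rw [if_neg hcon] at hkey
    omega

lemma stairW_inj {n : ℕ} (hn : 1 ≤ n) {S S' : Finset ℕ}
    (hS : S ⊆ Finset.Icc 1 n) (hc : 3 ≤ S.card)
    (hS' : S' ⊆ Finset.Icc 1 n) (hc' : 3 ≤ S'.card)
    (h : stairW n S = stairW n S') : S = S' := by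
  have hfun : ∀ i, i < n → stairF S i = stairF S' i := by
    intro i hi
    have h' : (stairW n S).getD i 0 = (stairW n S').getD i 0 := by rw [h]
    rwa [getD_stairW S hi, getD_stairW S' hi] at h' 
  obtain ⟨m0, M, hm0S, hMS, hm0M, hm01, hMn, hsup, hiff⟩ := stair_facts hS hc
  obtain ⟨m0', M', hm0S', hMS', hm0M', hm01', hMn', hsup', hiff'⟩ := stair_facts hS' hc'
  have hiffn : ∀ i, i < n → ((m0 ≤ i ∧ i < M) ↔ (m0' ≤ i ∧ i < M')) := by
    intro i hi
    rw [← hiff, ← hiff', hfun i hi]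
  have hm0eq : m0 = m0' := by
    have h1 := (hiffn m0 (by omega)).mp ⟨le_refl _, hm0M⟩
    have h2 := (hiffn m0' (by omega)).mpr ⟨le_refl _, hm0M'⟩
    omega
  have hMeq : M = M' := by
    rcases lt_trichotomy M M' with h'|h'|h'
    · have := (hiffn M (by omega)).mpr ⟨by omega, h'⟩
      omega
    · exact h'
    · have := (hiffn M' (by omega)).mp ⟨by omega, h'⟩
      omega
  apply Finset.Subset.antisymm
  · intro s hs
    exact stair_mem_imp hS hc hS' hc' hfun (hMeq ▸ hMS') hsup (hMeq ▸ hsup') hMn s hs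
  · intro s hs
    exact stair_mem_imp hS' hc' hS hc (fun i hi => (hfun i hi).symm)
      (hMeq ▸ hMS) hsup' (hMeq ▸ hsup) hMn' s hs

lemma binW_inj {n : ℕ} (hn : 1 ≤ n) {S S' : Finset ℕ}
    (hS : S ⊆ Finset.Icc 1 (n-1)) (hS' : S' ⊆ Finset.Icc 1 (n-1))
    (h : binW n S = binW n S') : S = S' := by
  have hfun : ∀ i, i < n → binF S i = binF S' i := by
    intro i hi
    have h' : (binW n S).getD i 0 = (binW n S').getD i 0 := by rw [h]
    rwa [getD_binW S hi, getD_binW S' hi] at h' 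
  ext s
  constructor <;> intro hs
  · have hrange : s < n := by
      have := hS hs; simp only [Finset.mem_Icc] at this; omega
    have := hfun s hrange
    unfold binF at this
    rw [if_pos hs] at this
    by_contra hcon
    rw [if_neg hcon] at this
    omega
  · have hrange : s < n := by
      have := hS' hs; simp only [Finset.mem_Icc] at this; omega
    have := hfun s hrange
    unfold binF at this
    rw [if_pos hs] at this
    by_contra hcon
    rw [if_neg hcon] at this
    omega

lemma bin_ne_stair {n : ℕ} (hn : 1 ≤ n) {S S' : Finset ℕ}
    (hS : S ⊆ Finset.Icc 1 (n-1)) (hS' : S' ⊆ Finset.Icc 1 n) (hc' : 3 ≤ S'.card) :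
    binW n S ≠ stairW n S' := by
  intro h
  obtain ⟨m0, M, hm0S, hMS, hm0M, hm01, hMn, hsup, hiff⟩ := stair_facts hS' hc'
  have hMn' : M - 1 < n := by omega
  have this : binF S (M-1) = stairF S' (M-1) := by
    have h' : (binW n S).getD (M-1) 0 = (stairW n S').getD (M-1) 0 := by rw [h]
    rwa [getD_binW S hMn', getD_stairW S' hMn'] at h' 
  -- stairF S' (M-1) = cnt S' (M-1) = S'.card - 1 ≥ 2
  have hcnt : cnt S' (M - 1) = S'.card - 1 := by
    unfold cnt
    have : S'.filter (· ≤ M - 1) = S'.erase M := by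
      ext s
      simp only [Finset.mem_filter, Finset.mem_erase]
      constructor
      · rintro ⟨hs, hle⟩
        exact ⟨by omega, hs⟩
      · rintro ⟨hne, hs⟩
        have : s ≤ M := by rw [← hsup]; exact Finset.le_sup (f := id) hs
        exact ⟨hs, by omega⟩
    rw [this, Finset.card_erase_of_mem hMS]
  have hstair : stairF S' (M-1) = cnt S' (M-1) := by
    unfold stairF
    rw [hsup, if_pos (by omega)]
  have hbin : binF S (M-1) ≤ 1 := by unfold binF; split <;> omega
  rw [hstair, hcnt] at this
  omega

lemma card_subtype_finset (F : Finset (Finset ℕ)) (P : Finset ℕ → Prop)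
    (h : ∀ S, P S ↔ S ∈ F) : Nat.card {S : Finset ℕ // P S} = F.card := by
  have e : {S : Finset ℕ // P S} ≃ {S // S ∈ F} := Equiv.subtypeEquivRight (fun S => h S)
  rw [Nat.card_congr e, Nat.card_eq_fintype_card, Fintype.card_coe]

lemma finite_subtype_finset (F : Finset (Finset ℕ)) (P : Finset ℕ → Prop)
    (h : ∀ S, P S ↔ S ∈ F) : Finite {S : Finset ℕ // P S} := by
  have e : {S : Finset ℕ // P S} ≃ {S // S ∈ F} := Equiv.subtypeEquivRight (fun S => h S)
  exact Finite.of_equiv _ e.symm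

theorem stmt_6 (n : ℕ) (hn : 1 ≤ n) :
    Nat.card {x : List ℕ // x.length = n ∧ IsAscSeq x ∧ Avoids [0, 1, 0, 2] x ∧ Avoids [0, 1, 2, 1] x} = (3 * 2 ^ n - n ^ 2 - n - 2) / 2 := by
  classical
  set P₁ : Type := {S : Finset ℕ // S ⊆ Finset.Icc 1 (n-1)} with hP1
  set P₂ : Type := {S : Finset ℕ // S ⊆ Finset.Icc 1 n ∧ 3 ≤ S.card} with hP2
  set G : Type := {x : List ℕ // x.length = n ∧ IsAscSeq x ∧ Avoids [0, 1, 0, 2] x ∧ Avoids [0, 1, 2, 1] x} with hG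
  have hfin1 : Finite P₁ := finite_subtype_finset ((Finset.Icc 1 (n-1)).powerset) _
    (fun S => (Finset.mem_powerset).symm)
  have hfin2 : Finite P₂ := finite_subtype_finset
    (((Finset.Icc 1 n).powerset).filter (fun t => 3 ≤ t.card)) _
    (fun S => by simp [Finset.mem_filter, Finset.mem_powerset])
  let F : P₁ ⊕ P₂ → G := fun z =>
    match z with
    | Sum.inl ⟨S, hS⟩ => ⟨binW n S, binW_good hn hS⟩
    | Sum.inr ⟨S, hS⟩ => ⟨stairW n S, stairW_good hn hS.1 hS.2⟩
  have hbij : Function.Bijective F := by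
    constructor
    · rintro (⟨S, hS⟩|⟨S, hS⟩) (⟨S', hS'⟩|⟨S', hS'⟩) hz
      · have : binW n S = binW n S' := congrArg Subtype.val hz
        exact congrArg Sum.inl (Subtype.ext (binW_inj hn hS hS' this))
      · exact absurd (congrArg Subtype.val hz) (bin_ne_stair hn hS hS'.1 hS'.2)
      · exact absurd (congrArg Subtype.val hz).symm (bin_ne_stair hn hS' hS.1 hS.2)
      · have : stairW n S = stairW n S' := congrArg Subtype.val hz
        exact congrArg Sum.inr (Subtype.ext (stairW_inj hn hS.1 hS.2 hS'.1 hS'.2 this))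
    · rintro ⟨x, hx, hseq, h1, h2⟩
      rcases structure_thm n hn x hx hseq h1 h2 with ⟨S, hS, heq⟩|⟨S, hS1, hS2, heq⟩
      · exact ⟨Sum.inl ⟨S, hS⟩, Subtype.ext heq.symm⟩
      · exact ⟨Sum.inr ⟨S, ⟨hS1, hS2⟩⟩, Subtype.ext heq.symm⟩
  have hcardG : Nat.card G = Nat.card P₁ + Nat.card P₂ := by
    rw [← Nat.card_congr (Equiv.ofBijective F hbij), Nat.card_sum]
  have hc1 : Nat.card P₁ = 2^(n-1) := by
    rw [hP1, card_subtype_finset ((Finset.Icc 1 (n-1)).powerset) _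
      (fun S => (Finset.mem_powerset).symm), Finset.card_powerset, Nat.card_Icc]
    congr 1
  have hIcc : (Finset.Icc 1 n).card = n := by rw [Nat.card_Icc]; omega
  set Pn := (Finset.Icc 1 n).powerset with hPn
  set A := (Pn.filter (fun t => 3 ≤ t.card)).card with hA
  have hc2 : Nat.card P₂ = A := by
    rw [hP2, card_subtype_finset (Pn.filter (fun t => 3 ≤ t.card)) _
      (fun S => by simp [hPn, Finset.mem_filter, Finset.mem_powerset])]
  have hsplit : A + (Pn.filter (fun t => ¬ 3 ≤ t.card)).card = 2^n := by
    rw [hA, Finset.card_filter_add_card_filter_not, Finset.card_powerset, hIcc]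
  have hneg : (Pn.filter (fun t => ¬ 3 ≤ t.card)).card = 1 + n + n.choose 2 := by
    have hun : Pn.filter (fun t => ¬ 3 ≤ t.card) =
        ((Finset.Icc 1 n).powersetCard 0 ∪ (Finset.Icc 1 n).powersetCard 1) ∪
          (Finset.Icc 1 n).powersetCard 2 := by
      ext t
      simp only [Finset.mem_filter, Finset.mem_union, Finset.mem_powersetCard,
        Finset.mem_powerset, hPn]
      constructor
      · rintro ⟨hsub, hcard⟩
        have : t.card = 0 ∨ t.card = 1 ∨ t.card = 2 := by omega
        rcases this with h'|h'|h'
        · exact Or.inl (Or.inl ⟨hsub, h'⟩)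
        · exact Or.inl (Or.inr ⟨hsub, h'⟩)
        · exact Or.inr ⟨hsub, h'⟩
      · rintro ((⟨hsub, h'⟩|⟨hsub, h'⟩)|⟨hsub, h'⟩) <;> exact ⟨hsub, by omega⟩
    rw [hun, Finset.card_union_of_disjoint, Finset.card_union_of_disjoint]
    · rw [Finset.card_powersetCard, Finset.card_powersetCard, Finset.card_powersetCard, hIcc]
      rw [Nat.choose_zero_right, Nat.choose_one_right]
    · rw [Finset.disjoint_left]
      intro t h1 h2
      simp only [Finset.mem_powersetCard] at h1 h2
      omega
    · rw [Finset.disjoint_left]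
      intro t h1 h2
      simp only [Finset.mem_union, Finset.mem_powersetCard] at h1 h2
      rcases h1 with h1|h1 <;> omega
  rw [hcardG, hc1, hc2]
  -- arithmetic
  have hev : 2 ∣ n * (n - 1) := by
    rcases Nat.even_or_odd n with h|h
    · exact Dvd.dvd.mul_right (even_iff_two_dvd.mp h) _
    · have h' : n % 2 = 1 := Nat.odd_iff.mp h
      have : 2 ∣ (n - 1) := by omega
      exact Dvd.dvd.mul_left this n
  have h2c : 2 * n.choose 2 = n * (n - 1) := by
    rw [Nat.choose_two_right, Nat.mul_div_cancel' hev]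
  have hnn : n * (n - 1) + n = n * n := by
    cases n with
    | zero => omega
    | succ k => simp only [Nat.succ_sub_one]; ring
  have hsq : n ^ 2 = n * n := by ring
  have hpow : 2 ^ n = 2 * 2 ^ (n - 1) := by
    have h' : n = (n - 1) + 1 := by omega
    conv_lhs => rw [h']
    rw [pow_succ]
    ring
  omega
end
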